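/- arXiv:1904.05122 — 12 statements merged into one kernel-verified Lean document; each statement's English description precedes it below -/
import Mathlib

section
/- Let H be a Hilbert space and T : H → H a bounded linear operator satisfying the concavity inequality ‖T²h‖² + ‖h‖² ≤ 2‖Th‖² for all h ∈ H. Then ‖Th‖ ≥ ‖h‖ for all h ∈ H, i.e., T is bounded below by 1 (expansive). -/
/-- Scalar case of Lemma 2.2(1): a concave operator is expansive. -/
theorem concave_is_expansive {H : Type*} [NormedAddCommGroup H] [InnerProductSpace ℂ H]
    [CompleteSpace H] (T : H →L[ℂ] H)
    (hconc : ∀ h : H, ‖T (T h)‖ ^ 2 + ‖h‖ ^ 2 ≤ 2 * ‖T h‖ ^ 2) :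
    ∀ h : H, ‖h‖ ≤ ‖T h‖ := by
  intro h
  by_contra hlt
  push_neg at hlt
  set f : ℕ → ℝ := fun n => ‖(T ^ n) h‖ ^ 2 with hf
  have hstep : ∀ n : ℕ, f (n + 2) + f n ≤ 2 * f (n + 1) := by
    intro n
    have := hconc ((T ^ n) h)
    simpa [hf, pow_succ', ContinuousLinearMap.mul_apply, Function.iterate_succ_apply', -Function.iterate_succ_apply] using this
  have hdiff : ∀ n : ℕ, f (n + 1) - f n ≤ f 1 - f 0 := by
    intro n
    induction n with
    | zero => simp
    | succ k ih =>
      have := hstep k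
      nlinarith
  have hbound : ∀ n : ℕ, f n ≤ f 0 + n * (f 1 - f 0) := by
    intro n
    induction n with
    | zero => simp
    | succ k ih =>
      have := hdiff k
      push_cast
      nlinarith
  have hd : f 1 - f 0 < 0 := by
    have h0 : f 0 = ‖h‖ ^ 2 := by simp [hf]
    have h1 : f 1 = ‖T h‖ ^ 2 := by simp [hf]
    rw [h0, h1]
    have : ‖T h‖ ^ 2 < ‖h‖ ^ 2 := by
      apply pow_lt_pow_left₀ hlt (norm_nonneg _)
      norm_num
    linarith
  obtain ⟨n, hn⟩ := Archimedean.arch (f 0) (neg_pos.mpr hd)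
  have hfn := hbound (n + 1)
  have hnn : 0 ≤ f (n + 1) := by positivity
  have : (n : ℝ) * (-(f 1 - f 0)) ≥ f 0 := by
    simpa [nsmul_eq_mul] using hn
  push_cast at hfn
  nlinarith
end

section
/- Let H be a Hilbert space and T ∈ B(H) satisfy ‖T²h‖² + ‖h‖² ≤ 2‖Th‖² for all h ∈ H. Then for every n ≥ 1 and every h ∈ H, ‖Tⁿh‖² ≤ ‖h‖² + n(‖Th‖² − ‖h‖²). -/
/-- Scalar case of Lemma 2.2(2): growth estimate for powers of a concave operator. -/
theorem concave_power_estimate {H : Type*} [NormedAddCommGroup H] [InnerProductSpace ℂ H]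
    [CompleteSpace H] (T : H →L[ℂ] H)
    (hconc : ∀ h : H, ‖T (T h)‖ ^ 2 + ‖h‖ ^ 2 ≤ 2 * ‖T h‖ ^ 2) :
    ∀ n : ℕ, 1 ≤ n → ∀ h : H,
      ‖(T ^ n) h‖ ^ 2 ≤ ‖h‖ ^ 2 + (n : ℝ) * (‖T h‖ ^ 2 - ‖h‖ ^ 2) := by
  intro n _ h
  have hpow : ∀ m : ℕ, (T ^ (m + 1)) h = T ((T ^ m) h) := by
    intro m
    rw [pow_succ']
    rfl
  have step : ∀ m : ℕ, ‖(T ^ (m + 1)) h‖ ^ 2 - ‖(T ^ m) h‖ ^ 2 ≤ ‖T h‖ ^ 2 - ‖h‖ ^ 2 := by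
    intro m
    induction m with
    | zero => simp [hpow 0]
    | succ k ih =>
      have hc := hconc ((T ^ k) h)
      rw [hpow (k + 1), hpow k]
      rw [hpow k] at ih
      nlinarith
  clear * - step hpow
  induction n with
  | zero => simp
  | succ k ih =>
    have hk := step k
    rw [Nat.cast_add, Nat.cast_one]
    nlinarith
end

section
/- Let T ∈ B(H) be left invertible with L = (T*T)⁻¹T* and P = I − TL the projection onto W := ker T*. Then for every n ≥ 1, ker Lⁿ = span{Tʲw : w ∈ W, 0 ≤ j ≤ n−1}, where Lⁿ denotes the n-th power of L. -/
open ContinuousLinearMap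
open scoped InnerProductSpace

private theorem aux_isUnit {H : Type*} [NormedAddCommGroup H] [InnerProductSpace ℂ H]
    [CompleteSpace H] (T : H →L[ℂ] H) (c : ℝ) (hc : 0 < c)
    (hcb : ∀ h : H, c * ‖h‖ ≤ ‖T h‖) : IsUnit (adjoint T * T) := by
  set A := adjoint T * T with hA
  have hAinner : ∀ h : H, ⟪A h, h⟫_ℂ = (‖T h‖ : ℂ) ^ 2 := by
    intro h
    rw [hA, mul_apply_eq_comp, adjoint_inner_left, inner_self_eq_norm_sq_to_K]
    norm_num
  have hTzero : ∀ h : H, T h = 0 → h = 0 := by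
    intro h hh
    have := hcb h
    rw [hh, norm_zero] at this
    have : ‖h‖ ≤ 0 := by nlinarith
    simpa using le_antisymm this (norm_nonneg h)
  have hAzero : ∀ h : H, A h = 0 → h = 0 := by
    intro h hh
    have h1 := hAinner h
    rw [hh, inner_zero_left] at h1
    have : (‖T h‖ : ℂ) ^ 2 = 0 := h1.symm
    have : ‖T h‖ = 0 := by
      have := pow_eq_zero_iff (n := 2) (by norm_num) |>.mp this
      exact_mod_cast this
    exact hTzero h (norm_eq_zero.mp this)
  have hAbb : ∀ h : H, c ^ 2 * ‖h‖ ≤ ‖A h‖ := by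
    intro h
    rcases eq_or_ne h 0 with rfl | hne
    · simp
    · have h1 : ‖T h‖ ^ 2 ≤ ‖A h‖ * ‖h‖ := by
        have := norm_inner_le_norm (𝕜 := ℂ) (A h) h
        calc ‖T h‖ ^ 2 = ‖⟪A h, h⟫_ℂ‖ := by rw [hAinner h]; simp
          _ ≤ ‖A h‖ * ‖h‖ := this
      have h2 : c ^ 2 * ‖h‖ ^ 2 ≤ ‖T h‖ ^ 2 :=
        calc c ^ 2 * ‖h‖ ^ 2 = (c * ‖h‖) ^ 2 := by ring
          _ ≤ ‖T h‖ ^ 2 := pow_le_pow_left₀ (by positivity) (hcb h) 2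
      have hpos : 0 < ‖h‖ := norm_pos_iff.mpr hne
      nlinarith
  have hanti : AntilipschitzWith ((c ^ 2)⁻¹).toNNReal A :=
    A.antilipschitz_of_bound (fun x => by
      rw [Real.coe_toNNReal _ (by positivity)]
      rw [inv_mul_eq_div, le_div_iff₀ (by positivity)]
      linarith [hAbb x])
  have hclosed : IsClosed (Set.range A) := hanti.isClosed_range A.uniformContinuous
  have hcls : IsClosed ((LinearMap.range (A : H →ₗ[ℂ] H) : Submodule ℂ H) : Set H) := by
    simpa [LinearMap.coe_range] using hclosed
  haveI := hcls.completeSpace_coe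
  have hsurj : LinearMap.range (A : H →ₗ[ℂ] H) = ⊤ := by
    rw [← Submodule.orthogonal_eq_bot_iff]
    rw [Submodule.eq_bot_iff]
    intro x hx
    have := (Submodule.mem_orthogonal _ x).mp hx (A x) (LinearMap.mem_range_self _ x)
    rw [hAinner x] at this
    have : ‖T x‖ = 0 := by
      have := pow_eq_zero_iff (n := 2) (by norm_num) |>.mp this
      exact_mod_cast this
    exact hTzero x (norm_eq_zero.mp this)
  exact isUnit_iff_bijective.mpr ⟨(LinearMap.ker_eq_bot (f := (A : H →ₗ[ℂ] H))).mp
    (LinearMap.ker_eq_bot'.mpr hAzero), LinearMap.range_eq_top.mp hsurj⟩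

/-- Kernel of powers of the left inverse `L = (T*T)⁻¹T*` (scalar case of Lemma 3.3):
`ker Lⁿ = span {Tʲ w : w ∈ ker T*, 0 ≤ j ≤ n-1}`. -/
theorem ker_left_inverse_pow {H : Type*} [NormedAddCommGroup H]
    [InnerProductSpace ℂ H] [CompleteSpace H] (T : H →L[ℂ] H)
    (hbb : ∃ c : ℝ, 0 < c ∧ ∀ h : H, c * ‖h‖ ≤ ‖T h‖) :
    ∀ n : ℕ, 1 ≤ n →
      LinearMap.ker (((Ring.inverse (adjoint T * T) * adjoint T) ^ n : H →L[ℂ] H) : H →ₗ[ℂ] H) =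
        ⨆ j : Fin n, Submodule.map ((T ^ (j : ℕ) : H →L[ℂ] H) : H →ₗ[ℂ] H) (LinearMap.ker (adjoint T : H →ₗ[ℂ] H)) := by
  obtain ⟨c, hc, hcb⟩ := hbb
  have hAunit : IsUnit (adjoint T * T) := aux_isUnit T c hc hcb
  set A := adjoint T * T with hA
  set L := Ring.inverse A * adjoint T with hL
  -- L is a left inverse of T
  have hLT : ∀ h : H, L (T h) = h := by
    intro h
    have : L * T = 1 := by
      rw [hL, mul_assoc, ← hA, Ring.inverse_mul_cancel _ hAunit]
    calc L (T h) = (L * T) h := rfl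
      _ = h := by rw [this]; rfl
  -- L kills ker T*
  have hLker : ∀ h : H, adjoint T h = 0 → L h = 0 := by
    intro h hh
    show Ring.inverse A (adjoint T h) = 0
    rw [hh, map_zero]
  -- P h := h - T (L h) lands in ker T*
  have hPker : ∀ h : H, adjoint T (h - T (L h)) = 0 := by
    intro h
    have : adjoint T (T (L h)) = adjoint T h := by
      calc adjoint T (T (L h)) = (A * Ring.inverse A) (adjoint T h) := rfl
        _ = adjoint T h := by rw [Ring.mul_inverse_cancel _ hAunit]; rfl
    rw [map_sub, this, sub_self]
  -- key vanishing: Lᵏ (Tʲ w) = 0 for w ∈ ker T*, j < k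
  have key : ∀ j k : ℕ, j < k → ∀ w : H, adjoint T w = 0 → (L ^ k) ((T ^ j) w) = 0 := by
    intro j
    induction j with
    | zero =>
      intro k hk w hw
      obtain ⟨k', rfl⟩ : ∃ k', k = k' + 1 := ⟨k - 1, by omega⟩
      rw [pow_zero, one_apply_eq_self, pow_succ, mul_apply_eq_comp, hLker w hw, map_zero]
    | succ j ih =>
      intro k hk w hw
      obtain ⟨k', rfl⟩ : ∃ k', k = k' + 1 := ⟨k - 1, by omega⟩
      have h1 : (T ^ (j + 1)) w = T ((T ^ j) w) := by rw [pow_succ' T j]; rfl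
      rw [h1, pow_succ, mul_apply_eq_comp, hLT, ih k' (by omega) w hw]
  -- telescoping identity
  have tele : ∀ (m : ℕ) (h : H),
      h - (T ^ m) ((L ^ m) h) =
        ∑ j ∈ Finset.range m, (T ^ j) ((L ^ j) h - T (L ((L ^ j) h))) := by
    intro m
    induction m with
    | zero => intro h; simp
    | succ m ih =>
      intro h
      rw [Finset.sum_range_succ, ← ih h]
      have h1 : (T ^ (m + 1)) ((L ^ (m + 1)) h) = (T ^ m) (T (L ((L ^ m) h))) := by
        rw [pow_succ L, mul_apply_eq_comp, pow_succ T, mul_apply_eq_comp]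
        congr 2
        rw [← mul_apply_eq_comp, ← pow_succ, pow_succ', mul_apply_eq_comp]
      rw [h1, map_sub]
      abel
  intro n hn
  apply le_antisymm
  · -- ker Lⁿ ⊆ ⨆
    intro h hh
    rw [LinearMap.mem_ker, ContinuousLinearMap.coe_coe] at hh
    have hsum : h = ∑ j ∈ Finset.range n, (T ^ j) ((L ^ j) h - T (L ((L ^ j) h))) := by
      have := tele n h
      rwa [hh, map_zero, sub_zero] at this
    rw [hsum]
    apply Submodule.sum_mem
    intro j hj
    rw [Finset.mem_range] at hj
    have hmem : (T ^ j) ((L ^ j) h - T (L ((L ^ j) h))) ∈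
        Submodule.map ((T ^ j : H →L[ℂ] H) : H →ₗ[ℂ] H) (LinearMap.ker (adjoint T : H →ₗ[ℂ] H)) :=
      Submodule.mem_map_of_mem (by rw [LinearMap.mem_ker]; exact hPker ((L ^ j) h))
    exact le_iSup (fun j : Fin n => Submodule.map ((T ^ (j : ℕ) : H →L[ℂ] H) : H →ₗ[ℂ] H) (LinearMap.ker (adjoint T : H →ₗ[ℂ] H)))
      ⟨j, hj⟩ hmem
  · -- ⨆ ⊆ ker Lⁿ
    apply iSup_le
    intro j
    rintro x ⟨w, hw, rfl⟩
    exact LinearMap.mem_ker.mpr (key j n j.isLt w hw)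
end

section
/- Let T ∈ B(H) satisfy the concavity condition ‖T²h‖² + ‖h‖² ≤ 2‖Th‖², and let L = (T*T)⁻¹T*, P = I − TL. Then for every h ∈ H and n ≥ 1 one has the norm identity ‖h‖² = Σ_{j=0}^{n−1} ‖P Lʲ h‖² + ‖Lⁿ h‖² + Σ_{j=1}^{n} ‖D Lʲ h‖², where D := (T*T − I)^{1/2}. -/
open ContinuousLinearMap

section AuxConcave

variable {H : Type*} [NormedAddCommGroup H] [InnerProductSpace ℂ H] [CompleteSpace H]

/-- Auxiliary: single-step norm identity `‖h‖² = ‖P h‖² + ‖L h‖² + ‖D (L h)‖²`. -/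
theorem concave_base_identity (T D : H →L[ℂ] H) (hD : D.IsPositive)
    (hD2 : D * D = adjoint T * T - 1)
    (hunit : IsUnit (adjoint T * T)) (h : H) :
    ‖h‖ ^ 2 = ‖(1 - T * (Ring.inverse (adjoint T * T) * adjoint T)) h‖ ^ 2 +
      ‖(Ring.inverse (adjoint T * T) * adjoint T) h‖ ^ 2 +
      ‖D ((Ring.inverse (adjoint T * T) * adjoint T) h)‖ ^ 2 := by
  set L : H →L[ℂ] H := Ring.inverse (adjoint T * T) * adjoint T with hL
  set P : H →L[ℂ] H := 1 - T * L with hP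
  have hmul : (adjoint T * T) * Ring.inverse (adjoint T * T) = 1 :=
    Ring.mul_inverse_cancel _ hunit
  have hTP : adjoint T * P = 0 := by
    simp only [hP, hL, mul_sub, mul_one, ← mul_assoc, hmul, one_mul, sub_self]
  have hPh : adjoint T (P h) = 0 := by
    have := congrArg (fun S : H →L[ℂ] H => S h) hTP
    simpa using this
  have horth : (inner ℂ (P h) (T (L h)) : ℂ) = 0 := by
    rw [← adjoint_inner_left, hPh, inner_zero_left]
  have hTx : ∀ x : H, ‖T x‖ ^ 2 = ‖x‖ ^ 2 + ‖D x‖ ^ 2 := by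
    intro x
    have key : (inner ℂ (T x) (T x) : ℂ) = inner ℂ x x + inner ℂ (D x) (D x) := by
      rw [← adjoint_inner_left, ← adjoint_inner_left D, hD.isSelfAdjoint.adjoint_eq]
      have hx : adjoint T (T x) = x + D (D x) := by
        have := congrArg (fun S : H →L[ℂ] H => S x) hD2
        simp only [ContinuousLinearMap.mul_apply, ContinuousLinearMap.sub_apply, ContinuousLinearMap.one_apply] at this
        rw [this]; abel
      rw [hx, inner_add_left]
    have := congrArg Complex.re key
    simpa [norm_sq_eq_re_inner (𝕜 := ℂ), RCLike.re_to_complex] using this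
  have hdecomp : h = P h + T (L h) := by
    simp [hP, sub_apply, mul_apply]
  calc ‖h‖ ^ 2 = ‖P h + T (L h)‖ ^ 2 := by rw [← hdecomp]
    _ = ‖P h‖ ^ 2 + ‖T (L h)‖ ^ 2 := by
        rw [norm_add_sq (𝕜 := ℂ), horth]; simp
    _ = ‖P h‖ ^ 2 + (‖L h‖ ^ 2 + ‖D (L h)‖ ^ 2) := by rw [hTx]
    _ = _ := by ring

end AuxConcave

/-- Equation (2.6) of the paper, scalar case: the norm identity for a concave operator,
where `L = (T*T)⁻¹T*`, `P = I - TL` and `D = (T*T - I)^{1/2}`. -/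
theorem concave_norm_identity {H : Type*} [NormedAddCommGroup H]
    [InnerProductSpace ℂ H] [CompleteSpace H] (T : H →L[ℂ] H)
    (hconc : ∀ h : H, ‖T (T h)‖ ^ 2 + ‖h‖ ^ 2 ≤ 2 * ‖T h‖ ^ 2)
    (D : H →L[ℂ] H) (hD : D.IsPositive) (hD2 : D * D = adjoint T * T - 1) :
    ∀ n : ℕ, 1 ≤ n → ∀ h : H,
      (let L : H →L[ℂ] H := Ring.inverse (adjoint T * T) * adjoint T
       let P : H →L[ℂ] H := 1 - T * L
       ‖h‖ ^ 2 = (∑ j ∈ Finset.range n, ‖P ((L ^ j) h)‖ ^ 2) + ‖(L ^ n) h‖ ^ 2 +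
         ∑ j ∈ Finset.range n, ‖D ((L ^ (j + 1)) h)‖ ^ 2) := by
  have hunit : IsUnit (adjoint T * T) := by
    refine CStarAlgebra.isUnit_of_le 1 ?_ isStrictlyPositive_one
    rw [← sub_nonneg, ← hD2]
    calc (0 : H →L[ℂ] H) ≤ star D * D := star_mul_self_nonneg D
      _ = D * D := by rw [hD.isSelfAdjoint.star_eq]
  intro n hn
  induction n, hn using Nat.le_induction with
  | base =>
    intro h L P
    have := concave_base_identity T D hD hD2 hunit h
    simpa [L, P, Finset.sum_range_one] using this
  | succ n hn ih =>
    intro h L P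
    have IH := ih h
    simp only [] at IH
    have hbase := concave_base_identity T D hD hD2 hunit
      (((Ring.inverse (adjoint T * T) * adjoint T) ^ n) h)
    have hLL : ∀ m : ℕ, ((Ring.inverse (adjoint T * T) * adjoint T) ^ (m + 1)) h =
        (Ring.inverse (adjoint T * T) * adjoint T)
          (((Ring.inverse (adjoint T * T) * adjoint T) ^ m) h) := by
      intro m
      rw [pow_succ']
      rfl
    simp only [L, P]
    rw [Finset.sum_range_succ, Finset.sum_range_succ, IH, hLL n, hbase]
    ring
end

section
/- Let T ∈ B(H) satisfy ‖T²h‖² + ‖h‖² ≤ 2‖Th‖² and L = (T*T)⁻¹T*. Then for each h ∈ H the sequence (‖Lⁿh‖) is non-increasing, and lim inf_{n→∞} ‖TⁿLⁿh‖² = lim_{n→∞} ‖Lⁿh‖². -/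
open ContinuousLinearMap Filter Topology

section Aux

variable {H : Type*} [NormedAddCommGroup H] [InnerProductSpace ℂ H] [CompleteSpace H]

local notation "⟪" x ", " y "⟫" => @inner ℂ _ _ x y

private lemma aux_pow_succ_apply (T : H →L[ℂ] H) (n : ℕ) (h : H) :
    (T ^ (n + 1)) h = T ((T ^ n) h) := by
  rw [pow_succ']; rfl

private lemma aux_expansive (T : H →L[ℂ] H)
    (hconc : ∀ h : H, ‖T (T h)‖ ^ 2 + ‖h‖ ^ 2 ≤ 2 * ‖T h‖ ^ 2) (h : H) :
    ‖h‖ ≤ ‖T h‖ := by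
  by_contra hlt
  push_neg at hlt
  set d : ℝ := ‖T h‖ ^ 2 - ‖h‖ ^ 2 with hd
  have hd0 : d < 0 := by nlinarith [norm_nonneg h, norm_nonneg (T h)]
  have step : ∀ n : ℕ, ‖(T ^ (n + 1)) h‖ ^ 2 ≤ ‖(T ^ n) h‖ ^ 2 + d := by
    intro n
    induction n with
    | zero => simp [aux_pow_succ_apply, hd]
    | succ k ih =>
      have hc := hconc ((T ^ k) h)
      simp only [aux_pow_succ_apply] at ih ⊢
      linarith
  have hsum : ∀ n : ℕ, ‖(T ^ n) h‖ ^ 2 ≤ ‖h‖ ^ 2 + n * d := by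
    intro n
    induction n with
    | zero => simp
    | succ k ih =>
      have := step k
      rw [Nat.cast_succ]
      linarith
  obtain ⟨n, hn⟩ := exists_nat_gt (‖h‖ ^ 2 / (-d))
  have h1 : ‖h‖ ^ 2 < (n : ℝ) * (-d) := by
    rwa [div_lt_iff₀ (by linarith)] at hn
  have h2 := hsum n
  nlinarith [sq_nonneg ‖(T ^ n) h‖]

private lemma aux_isUnit_s5 (T : H →L[ℂ] H) (hexp : ∀ h : H, ‖h‖ ≤ ‖T h‖) :
    IsUnit (adjoint T * T) := by
  set S : H →L[ℂ] H := adjoint T * T with hS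
  have hre : ∀ x : H, (RCLike.re (⟪S x, x⟫) : ℝ) = ‖T x‖ ^ 2 := by
    intro x
    rw [hS, ContinuousLinearMap.mul_apply, adjoint_inner_left, inner_self_eq_norm_sq]
  have hlow : ∀ x : H, ‖x‖ ≤ ‖S x‖ := by
    intro x
    rcases eq_or_ne x 0 with rfl | hx
    · simp
    have h1 : ‖x‖ ^ 2 ≤ ‖T x‖ ^ 2 := by
      have := hexp x
      nlinarith [norm_nonneg x]
    have h2 : (RCLike.re (⟪S x, x⟫) : ℝ) ≤ ‖S x‖ * ‖x‖ := by
      calc (RCLike.re (⟪S x, x⟫) : ℝ) ≤ ‖(⟪S x, x⟫ : ℂ)‖ := RCLike.re_le_norm _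
        _ ≤ ‖S x‖ * ‖x‖ := norm_inner_le_norm _ _
    have hxpos : (0 : ℝ) < ‖x‖ := norm_pos_iff.mpr hx
    have : ‖x‖ * ‖x‖ ≤ ‖S x‖ * ‖x‖ := by
      calc ‖x‖ * ‖x‖ = ‖x‖ ^ 2 := by ring
        _ ≤ ‖T x‖ ^ 2 := h1
        _ = RCLike.re (⟪S x, x⟫) := (hre x).symm
        _ ≤ ‖S x‖ * ‖x‖ := h2
    exact le_of_mul_le_mul_right this hxpos
  have hanti : AntilipschitzWith 1 S :=
    ContinuousLinearMap.antilipschitz_of_bound S (fun x => by simpa using hlow x)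
  have hker : LinearMap.ker (S : H →ₗ[ℂ] H) = ⊥ := (LinearMap.ker_eq_bot (f := (S : H →ₗ[ℂ] H))).mpr hanti.injective
  have hclosed : IsClosed (LinearMap.range (S : H →ₗ[ℂ] H) : Set H) := by
    rw [LinearMap.coe_range]
    exact hanti.isClosed_range S.uniformContinuous
  haveI : CompleteSpace (LinearMap.range (S : H →ₗ[ℂ] H)) := hclosed.completeSpace_coe
  have horth : (LinearMap.range (S : H →ₗ[ℂ] H))ᗮ = ⊥ := by
    rw [Submodule.eq_bot_iff]
    intro x hx
    have h0 : (⟪S x, x⟫ : ℂ) = 0 := hx (S x) ⟨x, rfl⟩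
    have : ‖T x‖ ^ 2 = 0 := by rw [← hre x, h0]; simp
    have hTx : ‖T x‖ = 0 := by nlinarith [norm_nonneg (T x)]
    have := hexp x
    have : ‖x‖ = 0 := le_antisymm (by linarith) (norm_nonneg x)
    exact norm_eq_zero.mp this
  have htop : LinearMap.range (S : H →ₗ[ℂ] H) = ⊤ := Submodule.orthogonal_eq_bot_iff.mp horth
  let e := ContinuousLinearEquiv.ofBijective S hker htop
  refine ⟨⟨S, (e.symm : H →L[ℂ] H), ?_, ?_⟩, rfl⟩
  · ext x
    simp only [ContinuousLinearMap.mul_apply, ContinuousLinearMap.one_apply]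
    exact e.apply_symm_apply x
  · ext x
    simp only [ContinuousLinearMap.mul_apply, ContinuousLinearMap.one_apply]
    exact e.symm_apply_apply x

private lemma aux_contract (T : H →L[ℂ] H) (hU : IsUnit (adjoint T * T)) (g : H) :
    ‖T ((Ring.inverse (adjoint T * T) * adjoint T) g)‖ ≤ ‖g‖ := by
  set S : H →L[ℂ] H := adjoint T * T with hS
  set L : H →L[ℂ] H := Ring.inverse S * adjoint T with hL
  set P : H →L[ℂ] H := T * L with hP
  have hLT : L * T = 1 := by
    rw [hL, mul_assoc, ← hS, Ring.inverse_mul_cancel _ hU]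
  have hP2 : P * P = P := by
    rw [hP, mul_assoc, ← mul_assoc L T L, hLT, one_mul]
  have hSsa : star S = S := by
    rw [hS, star_mul, star_eq_adjoint, star_eq_adjoint, adjoint_adjoint]
  have hPsa : adjoint P = P := by
    rw [← star_eq_adjoint, hP, hL, star_mul, star_mul, star_eq_adjoint T,
      star_eq_adjoint (adjoint T), adjoint_adjoint, ← Ring.inverse_star, hSsa, mul_assoc]
  have key : (⟪P g, P g⟫ : ℂ) = ⟪g, P g⟫ := by
    calc (⟪P g, P g⟫ : ℂ) = ⟪adjoint P g, P g⟫ := by rw [hPsa]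
      _ = ⟪g, P (P g)⟫ := adjoint_inner_left P (P g) g
      _ = ⟪g, (P * P) g⟫ := rfl
      _ = ⟪g, P g⟫ := by rw [hP2]
  have h1 : ‖P g‖ ^ 2 ≤ ‖g‖ * ‖P g‖ := by
    calc ‖P g‖ ^ 2 = RCLike.re (⟪P g, P g⟫ : ℂ) := (inner_self_eq_norm_sq _).symm
      _ = RCLike.re (⟪g, P g⟫ : ℂ) := by rw [key]
      _ ≤ ‖(⟪g, P g⟫ : ℂ)‖ := RCLike.re_le_norm _
      _ ≤ ‖g‖ * ‖P g‖ := norm_inner_le_norm _ _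
  have hTL : T (L g) = P g := rfl
  rw [hTL]
  by_contra hcon
  push_neg at hcon
  nlinarith [norm_nonneg (P g), norm_nonneg g]

private lemma aux_pow_expansive (T : H →L[ℂ] H) (hexp : ∀ h : H, ‖h‖ ≤ ‖T h‖) (n : ℕ) (g : H) :
    ‖g‖ ≤ ‖(T ^ n) g‖ := by
  induction n with
  | zero => simp
  | succ k ih =>
    rw [aux_pow_succ_apply]
    exact ih.trans (hexp _)

private lemma aux_pow_growth (T : H →L[ℂ] H)
    (hconc : ∀ h : H, ‖T (T h)‖ ^ 2 + ‖h‖ ^ 2 ≤ 2 * ‖T h‖ ^ 2) (n : ℕ) (g : H) :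
    ‖(T ^ n) g‖ ^ 2 ≤ ‖g‖ ^ 2 + n * (‖T g‖ ^ 2 - ‖g‖ ^ 2) := by
  have hdiff : ∀ k : ℕ, ‖(T ^ (k + 1)) g‖ ^ 2 - ‖(T ^ k) g‖ ^ 2 ≤ ‖T g‖ ^ 2 - ‖g‖ ^ 2 := by
    intro k
    induction k with
    | zero => simp [aux_pow_succ_apply]
    | succ m ih =>
      have hc := hconc ((T ^ m) g)
      simp only [aux_pow_succ_apply] at ih ⊢
      linarith
  induction n with
  | zero => simp
  | succ k ih =>
    have := hdiff k
    rw [Nat.cast_succ]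
    linarith

set_option maxHeartbeats 1000000 in
private theorem aux_main (T : H →L[ℂ] H)
    (hconc : ∀ h : H, ‖T (T h)‖ ^ 2 + ‖h‖ ^ 2 ≤ 2 * ‖T h‖ ^ 2) (h : H) :
    Antitone (fun n : ℕ =>
        ‖((Ring.inverse (adjoint T * T) * adjoint T) ^ n) h‖) ∧
      liminf (fun n : ℕ =>
          ‖(T ^ n) (((Ring.inverse (adjoint T * T) * adjoint T) ^ n) h)‖ ^ 2) atTop =
        ⨅ n : ℕ, ‖((Ring.inverse (adjoint T * T) * adjoint T) ^ n) h‖ ^ 2 := by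
  set L : H →L[ℂ] H := Ring.inverse (adjoint T * T) * adjoint T with hL
  have hexp := aux_expansive T hconc
  have hU : IsUnit (adjoint T * T) := aux_isUnit_s5 T hexp
  have hcontr : ∀ g : H, ‖T (L g)‖ ≤ ‖g‖ := fun g => aux_contract T hU g
  have hone : ∀ g : H, ‖L g‖ ≤ ‖T (L g)‖ := fun g => hexp (L g)
  have hstep : ∀ g : H, ‖L g‖ ≤ ‖g‖ := fun g => (hone g).trans (hcontr g)
  have hLpow : ∀ n : ℕ, (L ^ (n + 1)) h = L ((L ^ n) h) := fun n => aux_pow_succ_apply L n h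
  have hanti : Antitone fun n : ℕ => ‖(L ^ n) h‖ := by
    apply antitone_nat_of_succ_le
    intro n
    rw [hLpow n]
    exact hstep _
  refine ⟨hanti, ?_⟩
  set q : ℕ → ℝ := fun n => ‖(L ^ n) h‖ ^ 2 with hq
  set s : ℕ → ℝ := fun n => ‖(T ^ n) ((L ^ n) h)‖ ^ 2 with hs
  set e : ℕ → ℝ := fun n => ‖T ((L ^ n) h)‖ ^ 2 - ‖(L ^ n) h‖ ^ 2 with he
  clear_value q s e
  have he0 : ∀ n, 0 ≤ e n := by
    intro n
    simp only [he]
    nlinarith [hexp ((L ^ n) h), norm_nonneg ((L ^ n) h)]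
  have hq0 : ∀ n, 0 ≤ q n := fun n => by simp only [hq]; positivity
  have hqe : ∀ n, q (n + 1) + e (n + 1) ≤ q n := by
    intro n
    have h1 : ‖T ((L ^ (n + 1)) h)‖ ^ 2 ≤ ‖(L ^ n) h‖ ^ 2 := by
      rw [hLpow n]
      have := hcontr ((L ^ n) h)
      nlinarith [norm_nonneg (T (L ((L ^ n) h))), norm_nonneg ((L ^ n) h)]
    simp only [hq, he]
    linarith
  have hqanti : Antitone q := by
    apply antitone_nat_of_succ_le
    intro n
    have := hqe n
    have := he0 (n + 1)
    linarith
  have hbdd : BddBelow (Set.range q) := ⟨0, by rintro x ⟨n, rfl⟩; exact hq0 n⟩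
  set A : ℝ := ⨅ n, q n with hAdef
  have hqA : Tendsto q atTop (𝓝 A) := tendsto_atTop_ciInf hqanti hbdd
  have hAq : ∀ n, A ≤ q n := fun n => ciInf_le hbdd n
  have hsums : ∀ n, ∑ k ∈ Finset.range n, e (k + 1) ≤ q 0 - q n := by
    intro n
    induction n with
    | zero => simp
    | succ m ih =>
      rw [Finset.sum_range_succ]
      have := hqe m
      linarith
  have hbound : ∀ n, ∑ k ∈ Finset.range n, e (k + 1) ≤ q 0 := by
    intro n
    have := hsums n
    have := hq0 n
    linarith
  have hsummable : Summable e :=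
    (summable_nat_add_iff 1).mp (summable_of_sum_range_le (fun n => he0 (n + 1)) hbound)
  have hqs : ∀ n, q n ≤ s n := by
    intro n
    have := aux_pow_expansive T hexp n ((L ^ n) h)
    simp only [hq, hs]
    exact pow_le_pow_left₀ (norm_nonneg _) this 2
  have hsqe : ∀ n : ℕ, s n ≤ q n + n * e n := by
    intro n
    simp only [hq, hs, he]
    exact aux_pow_growth T hconc n ((L ^ n) h)
  have hfreq : ∀ ε : ℝ, 0 < ε → ∃ᶠ n : ℕ in atTop, (n : ℝ) * e n ≤ ε := by
    intro ε hε
    by_contra hcon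
    rw [not_frequently] at hcon
    obtain ⟨N, hN⟩ := eventually_atTop.mp hcon
    set M := max N 1 with hM
    have hcmp : ∀ m : ℕ, ε * (((m + M : ℕ) : ℝ))⁻¹ ≤ e (m + M) := by
      intro m
      have hge : N ≤ m + M := le_trans (le_max_left _ _) (Nat.le_add_left _ _)
      have h1 : ε < ((m + M : ℕ) : ℝ) * e (m + M) := not_le.mp (hN _ hge)
      have hpos : (0 : ℝ) < ((m + M : ℕ) : ℝ) := by
        have h2 : 1 ≤ m + M := le_trans (le_max_right N 1) (Nat.le_add_left _ _)
        exact_mod_cast Nat.lt_of_lt_of_le Nat.zero_lt_one h2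
      rw [mul_comm] at h1
      calc ε * (((m + M : ℕ) : ℝ))⁻¹ = ε / ((m + M : ℕ) : ℝ) := (div_eq_mul_inv _ _).symm
        _ ≤ e (m + M) := ((div_lt_iff₀ hpos).mpr h1).le
    have hg : Summable (fun m : ℕ => e (m + M)) := (summable_nat_add_iff M).mpr hsummable
    have hf : Summable (fun m : ℕ => ε * (((m + M : ℕ) : ℝ))⁻¹) :=
      Summable.of_nonneg_of_le (fun m => by positivity) hcmp hg
    have hf2 : Summable (fun m : ℕ => (((m + M : ℕ) : ℝ))⁻¹) :=
      (summable_mul_left_iff hε.ne').mp hf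
    have hf3 : Summable (fun n : ℕ => ((n : ℕ) : ℝ)⁻¹) := (summable_nat_add_iff M).mp hf2
    exact Real.not_summable_natCast_inv hf3
  have hup : ∀ ε : ℝ, 0 < ε → liminf s atTop ≤ A + ε := by
    intro ε hε
    have hev : ∀ᶠ n in atTop, q n < A + ε / 2 :=
      hqA.eventually_lt_const (by linarith)
    have hfr := (hfreq (ε / 2) (by linarith)).and_eventually hev
    apply liminf_le_of_frequently_le
    · refine hfr.mono fun n ⟨h1, h2⟩ => ?_
      have h3 := hsqe n
      nlinarith [h1, h2, h3]
    · exact isBoundedUnder_of ⟨0, fun n => by simp only [hs]; positivity⟩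
  have hcob : IsCoboundedUnder (· ≥ ·) atTop s := by
    apply IsCoboundedUnder.of_frequently_le (a := q 0 + 1)
    refine (hfreq 1 one_pos).mono fun n hn => ?_
    have h1 := hsqe n
    have h2 := hqanti (Nat.zero_le n)
    linarith
  have hlow : A ≤ liminf s atTop :=
    le_liminf_of_le hcob (Eventually.of_forall fun n => (hAq n).trans (hqs n))
  have hupA : liminf s atTop ≤ A := by
    by_contra hcon
    push_neg at hcon
    have := hup ((liminf s atTop - A) / 2) (by linarith)
    linarith
  exact le_antisymm hupA hlow

end Aux

/-- Equation (2.8) of the paper, scalar case: for a concave operator `T` with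
`L = (T*T)⁻¹T*`, the sequence `‖Lⁿh‖` is non-increasing (hence converges to its
infimum) and `liminf ‖TⁿLⁿh‖² = lim ‖Lⁿh‖²`. -/
theorem concave_liminf_identity {H : Type*} [NormedAddCommGroup H]
    [InnerProductSpace ℂ H] [CompleteSpace H] (T : H →L[ℂ] H)
    (hconc : ∀ h : H, ‖T (T h)‖ ^ 2 + ‖h‖ ^ 2 ≤ 2 * ‖T h‖ ^ 2) :
    ∀ h : H,
      (let L : H →L[ℂ] H := Ring.inverse (adjoint T * T) * adjoint T
       Antitone (fun n : ℕ => ‖(L ^ n) h‖) ∧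
       liminf (fun n : ℕ => ‖(T ^ n) ((L ^ n) h)‖ ^ 2) atTop =
         ⨅ n : ℕ, ‖(L ^ n) h‖ ^ 2) :=
  fun h => aux_main T hconc h
end

section
/- Let T ∈ B(H) be concave and analytic, with L = (T*T)⁻¹T*, P = I − TL, D = (T*T − I)^{1/2}. Then for every h ∈ H, ‖Lⁿh‖ → 0 as n → ∞, and consequently ‖h‖² = Σ_{j=0}^{∞} ‖PLʲh‖² + Σ_{j=1}^{∞} ‖DLʲh‖². -/
open ContinuousLinearMap Filter

noncomputable section ConcaveAux
set_option linter.unusedSectionVars false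
set_option maxHeartbeats 1000000

variable {H : Type*} [NormedAddCommGroup H] [InnerProductSpace ℂ H] [CompleteSpace H]

local notation "⟪" x ", " y "⟫" => @inner ℂ _ _ x y

variable {T D : H →L[ℂ] H}

lemma expansive (hconc : ∀ h : H, ‖T (T h)‖ ^ 2 + ‖h‖ ^ 2 ≤ 2 * ‖T h‖ ^ 2)
    (h : H) : ‖h‖ ≤ ‖T h‖ := by
  by_contra hlt
  push_neg at hlt
  set a : ℕ → ℝ := fun n => ‖(T ^ n) h‖ ^ 2 with ha
  have hpow : ∀ n : ℕ, (T ^ (n + 1)) h = T ((T ^ n) h) := by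
    intro n; rw [pow_succ', mul_apply_eq_comp]
  have hrec : ∀ n : ℕ, a (n + 2) + a n ≤ 2 * a (n + 1) := by
    intro n
    have := hconc ((T ^ n) h)
    show ‖(T ^ (n+1+1)) h‖ ^ 2 + ‖(T ^ n) h‖ ^ 2 ≤ 2 * ‖(T ^ (n+1)) h‖ ^ 2
    rw [hpow (n+1), hpow n]; exact this
  have hstep : ∀ n, a (n + 1) - a n ≤ a 1 - a 0 := by
    intro n
    induction n with
    | zero => exact le_refl _
    | succ n ih =>
      have := hrec n
      nlinarith
  have hlin : ∀ n : ℕ, a n ≤ a 0 + n * (a 1 - a 0) := by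
    intro n
    induction n with
    | zero => simp
    | succ n ih =>
      have := hstep n
      push_cast
      nlinarith
  have ha10 : a 1 - a 0 < 0 := by
    have h1 : a 1 = ‖T h‖ ^ 2 := by simp [ha]
    have h0 : a 0 = ‖h‖ ^ 2 := by simp [ha]
    have : ‖T h‖ ^ 2 < ‖h‖ ^ 2 :=
      pow_lt_pow_left₀ hlt (norm_nonneg _) (by norm_num)
    rw [h1, h0]; linarith
  obtain ⟨n, hn⟩ := exists_nat_gt (a 0 / (a 0 - a 1))
  have hnonneg : 0 ≤ a n := by positivity
  have := hlin n
  have hdiv : a 0 / (a 0 - a 1) * (a 0 - a 1) = a 0 :=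
    div_mul_cancel₀ _ (by linarith)
  nlinarith [hn, this, hdiv, mul_lt_mul_of_pos_right hn (by linarith : (0:ℝ) < a 0 - a 1)]


lemma re_inner_S (x : H) : RCLike.re ⟪x, (adjoint T * T) x⟫ = ‖T x‖ ^ 2 := by
  rw [mul_apply_eq_comp, adjoint_inner_right, inner_self_eq_norm_sq]

lemma norm_S_apply_sq_le (x : H) :
    ‖(adjoint T * T) x‖ ^ 2 ≤ ‖adjoint T * T‖ * ‖T x‖ ^ 2 := by
  set S := adjoint T * T with hS
  rcases eq_or_ne (S x) 0 with h0 | h0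
  · rw [h0]; simp; positivity
  have h1 : ‖S x‖ ^ 2 ≤ ‖T x‖ * ‖T (S x)‖ := by
    have : (⟪S x, S x⟫ : ℂ) = ⟪T x, T (S x)⟫ := by
      rw [hS, mul_apply_eq_comp, adjoint_inner_left]
    calc ‖S x‖ ^ 2 = RCLike.re ⟪S x, S x⟫ := (inner_self_eq_norm_sq _).symm
      _ ≤ ‖(⟪S x, S x⟫ : ℂ)‖ := RCLike.re_le_norm _
      _ = ‖(⟪T x, T (S x)⟫ : ℂ)‖ := by rw [this]
      _ ≤ ‖T x‖ * ‖T (S x)‖ := norm_inner_le_norm _ _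
  have h2 : ‖T (S x)‖ ^ 2 ≤ ‖S‖ * ‖S x‖ ^ 2 := by
    have e : RCLike.re ⟪S x, S (S x)⟫ = ‖T (S x)‖ ^ 2 := re_inner_S (S x)
    calc ‖T (S x)‖ ^ 2 = RCLike.re ⟪S x, S (S x)⟫ := e.symm
      _ ≤ ‖(⟪S x, S (S x)⟫ : ℂ)‖ := RCLike.re_le_norm _
      _ ≤ ‖S x‖ * ‖S (S x)‖ := norm_inner_le_norm _ _
      _ ≤ ‖S x‖ * (‖S‖ * ‖S x‖) := by
          gcongr; exact le_opNorm S (S x)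
      _ = ‖S‖ * ‖S x‖ ^ 2 := by ring
  -- ‖S x‖^4 ≤ ‖T x‖^2 * ‖T (S x)‖^2 ≤ ‖T x‖^2 * ‖S‖ * ‖S x‖^2
  have h3 : (‖S x‖ ^ 2) ^ 2 ≤ ‖T x‖ ^ 2 * (‖S‖ * ‖S x‖ ^ 2) := by
    have h1' : (‖S x‖ ^ 2) ^ 2 ≤ (‖T x‖ * ‖T (S x)‖) ^ 2 := by
      apply pow_le_pow_left₀ (by positivity) h1

    calc (‖S x‖ ^ 2) ^ 2 ≤ (‖T x‖ * ‖T (S x)‖) ^ 2 := h1'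
      _ = ‖T x‖ ^ 2 * ‖T (S x)‖ ^ 2 := by ring
      _ ≤ ‖T x‖ ^ 2 * (‖S‖ * ‖S x‖ ^ 2) := by gcongr
  have hpos : 0 < ‖S x‖ ^ 2 := by
    have := norm_pos_iff.mpr h0
    positivity
  have := (mul_le_mul_iff_left₀ hpos).mp (by nlinarith : ‖S x‖ ^ 2 * ‖S x‖ ^ 2 ≤ (‖S‖ * ‖T x‖ ^ 2) * ‖S x‖ ^ 2)
  linarith

lemma isUnit_S (hconc : ∀ h : H, ‖T (T h)‖ ^ 2 + ‖h‖ ^ 2 ≤ 2 * ‖T h‖ ^ 2) :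
    IsUnit (adjoint T * T) := by
  set S := adjoint T * T with hS
  set c : ℝ := ‖S‖ + 1 with hc
  have hc1 : (1:ℝ) ≤ c := by rw [hc]; linarith [norm_nonneg S]
  have hc0 : (0:ℝ) < c := by linarith
  have hcinv : 0 < c⁻¹ := by positivity
  have hcinv1 : c⁻¹ ≤ 1 := by
    rw [inv_le_one_iff₀]; right; exact hc1
  have hexp : ∀ x : H, ‖x‖ ^ 2 ≤ RCLike.re ⟪x, S x⟫ := by
    intro x
    rw [hS, re_inner_S]
    exact pow_le_pow_left₀ (norm_nonneg _) (expansive hconc x) 2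
  -- pointwise bound for 1 - c⁻¹ • S
  have key : ∀ x : H, ‖(1 - (c:ℂ)⁻¹ • S) x‖ ^ 2 ≤ (1 - c⁻¹) * ‖x‖ ^ 2 := by
    intro x
    have happ : (1 - (c:ℂ)⁻¹ • S) x = x - (c:ℂ)⁻¹ • (S x) := by
      simp [sub_apply, smul_apply]
    rw [happ, norm_sub_sq (𝕜 := ℂ)]
    have hre : RCLike.re ⟪x, (c:ℂ)⁻¹ • S x⟫ = c⁻¹ * RCLike.re ⟪x, S x⟫ := by
      rw [inner_smul_right]
      have : ((c:ℂ))⁻¹ = ((c⁻¹ : ℝ) : ℂ) := by push_cast; ring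
      rw [this]
      simp
    have hnrm : ‖(c:ℂ)⁻¹ • S x‖ ^ 2 = c⁻¹ * c⁻¹ * ‖S x‖ ^ 2 := by
      rw [norm_smul]
      have : ‖((c:ℂ))⁻¹‖ = c⁻¹ := by
        rw [norm_inv, Complex.norm_real, Real.norm_of_nonneg hc0.le]
      rw [this]; ring
    rw [hre, hnrm]
    have hSb : ‖S x‖ ^ 2 ≤ c * ‖T x‖ ^ 2 := by
      calc ‖S x‖ ^ 2 ≤ ‖S‖ * ‖T x‖ ^ 2 := norm_S_apply_sq_le x
        _ ≤ c * ‖T x‖ ^ 2 := by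
            have : ‖S‖ ≤ c := by rw [hc]; linarith
            gcongr
    have hTx : RCLike.re ⟪x, S x⟫ = ‖T x‖ ^ 2 := re_inner_S x
    have hxx := hexp x
    rw [hTx] at hxx ⊢
    have e1 : c⁻¹ * c⁻¹ * ‖S x‖ ^ 2 ≤ c⁻¹ * ‖T x‖ ^ 2 := by
      calc c⁻¹ * c⁻¹ * ‖S x‖ ^ 2 ≤ c⁻¹ * c⁻¹ * (c * ‖T x‖ ^ 2) := by gcongr
        _ = c⁻¹ * ‖T x‖ ^ 2 * (c⁻¹ * c) := by ring
        _ = c⁻¹ * ‖T x‖ ^ 2 := by rw [inv_mul_cancel₀ hc0.ne']; ring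
    nlinarith
  have hulet : ‖(1 : H →L[ℂ] H) - (c:ℂ)⁻¹ • S‖ < 1 := by
    have hb : ‖(1 : H →L[ℂ] H) - (c:ℂ)⁻¹ • S‖ ≤ Real.sqrt (1 - c⁻¹) := by
      apply opNorm_le_bound _ (Real.sqrt_nonneg _)
      intro x
      have h2 := key x
      have : ‖(1 - (c:ℂ)⁻¹ • S) x‖ = Real.sqrt (‖(1 - (c:ℂ)⁻¹ • S) x‖ ^ 2) := by
        rw [Real.sqrt_sq (norm_nonneg _)]
      rw [this]
      calc Real.sqrt (‖(1 - (c:ℂ)⁻¹ • S) x‖ ^ 2) ≤ Real.sqrt ((1 - c⁻¹) * ‖x‖ ^ 2) :=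
            Real.sqrt_le_sqrt h2
        _ = Real.sqrt (1 - c⁻¹) * ‖x‖ := by
            rw [Real.sqrt_mul (by linarith), Real.sqrt_sq (norm_nonneg _)]
    calc ‖(1 : H →L[ℂ] H) - (c:ℂ)⁻¹ • S‖ ≤ Real.sqrt (1 - c⁻¹) := hb
      _ < 1 := by
          have h1 : Real.sqrt (1 - c⁻¹) < Real.sqrt 1 :=
            Real.sqrt_lt_sqrt (by linarith) (by linarith)
          simpa using h1
  -- S = (c • 1) * (c⁻¹ • S), both sides units
  have hu : IsUnit ((1 : H →L[ℂ] H) - ((1 : H →L[ℂ] H) - (c:ℂ)⁻¹ • S)) :=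
    (Units.oneSub _ hulet).isUnit
  have : (1 : H →L[ℂ] H) - ((1 : H →L[ℂ] H) - (c:ℂ)⁻¹ • S) = (c:ℂ)⁻¹ • S :=
    sub_sub_cancel _ _
  rw [this] at hu
  have hc0' : (c:ℂ) ≠ 0 := by exact_mod_cast hc0.ne'
  have hS' : S = ((c:ℂ) • (1 : H →L[ℂ] H)) * ((c:ℂ)⁻¹ • S) := by
    rw [smul_mul_assoc, one_mul, smul_smul, mul_inv_cancel₀ hc0', one_smul]
  rw [hS]  -- goal: IsUnit (adjoint T * T)
  rw [← hS, hS']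
  have h1 : IsUnit ((c:ℂ) • (1 : H →L[ℂ] H)) := by
    rw [← Algebra.algebraMap_eq_smul_one]
    exact (isUnit_iff_ne_zero.mpr hc0').map (algebraMap ℂ (H →L[ℂ] H))
  exact h1.mul hu

section Alg

variable (hconc : ∀ h : H, ‖T (T h)‖ ^ 2 + ‖h‖ ^ 2 ≤ 2 * ‖T h‖ ^ 2)

local notation "S" => adjoint T * T
local notation "L" => Ring.inverse (adjoint T * T) * adjoint T
local notation "P" => 1 - T * (Ring.inverse (adjoint T * T) * adjoint T)

include hconc

lemma L_mul_T : L * T = 1 := by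
  rw [mul_assoc]
  exact Ring.inverse_mul_cancel _ (isUnit_S hconc)

lemma star_S : star (adjoint T * T) = adjoint T * T := by
  rw [star_mul, star_eq_adjoint T, star_eq_adjoint (adjoint T), adjoint_adjoint]

lemma star_N : star (Ring.inverse (adjoint T * T)) = Ring.inverse (adjoint T * T) := by
  have hU := isUnit_S (T := T) hconc
  have h1 : Ring.inverse S * S = 1 := Ring.inverse_mul_cancel _ hU
  have h2 : S * Ring.inverse S = 1 := Ring.mul_inverse_cancel _ hU
  have h3 : star (Ring.inverse S) * S = 1 := by
    have := congrArg star h2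
    rw [star_mul, star_one, star_S hconc] at this
    exact this
  calc star (Ring.inverse S)
      = star (Ring.inverse S) * (S * Ring.inverse S) := by rw [h2, mul_one]
    _ = (star (Ring.inverse S) * S) * Ring.inverse S := by noncomm_ring
    _ = Ring.inverse S := by rw [h3, one_mul]

lemma star_TL : star (T * (Ring.inverse (adjoint T * T) * adjoint T))
    = T * (Ring.inverse (adjoint T * T) * adjoint T) := by
  rw [star_mul, star_mul]
  rw [show star (adjoint T) = T by rw [star_eq_adjoint (adjoint T), adjoint_adjoint]]
  rw [star_N hconc]
  rw [star_eq_adjoint T]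
  rw [mul_assoc]

lemma TL_idem : (T * (Ring.inverse (adjoint T * T) * adjoint T))
    * (T * (Ring.inverse (adjoint T * T) * adjoint T))
    = T * (Ring.inverse (adjoint T * T) * adjoint T) := by
  have h := L_mul_T hconc
  calc (T * (Ring.inverse S * adjoint T)) * (T * (Ring.inverse S * adjoint T))
      = T * (((Ring.inverse S * adjoint T) * T) * (Ring.inverse S * adjoint T)) := by
        noncomm_ring
    _ = T * (Ring.inverse S * adjoint T) := by rw [h, one_mul]

lemma L_mul_P : (Ring.inverse (adjoint T * T) * adjoint T)
    * (1 - T * (Ring.inverse (adjoint T * T) * adjoint T)) = 0 := by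
  have h := L_mul_T hconc
  calc (Ring.inverse S * adjoint T) * (1 - T * (Ring.inverse S * adjoint T))
      = Ring.inverse S * adjoint T
        - ((Ring.inverse S * adjoint T) * T) * (Ring.inverse S * adjoint T) := by noncomm_ring
    _ = 0 := by rw [h, one_mul, sub_self]

lemma P_mul_T : (1 - T * (Ring.inverse (adjoint T * T) * adjoint T)) * T = 0 := by
  have h := L_mul_T hconc
  calc (1 - T * (Ring.inverse S * adjoint T)) * T
      = T - T * ((Ring.inverse S * adjoint T) * T) := by noncomm_ring
    _ = 0 := by rw [h, mul_one, sub_self]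

end Alg


section Norms

variable (hconc : ∀ h : H, ‖T (T h)‖ ^ 2 + ‖h‖ ^ 2 ≤ 2 * ‖T h‖ ^ 2)
variable (hD : D.IsPositive) (hD2 : D * D = adjoint T * T - 1)

local notation "L" => Ring.inverse (adjoint T * T) * adjoint T
local notation "P" => 1 - T * (Ring.inverse (adjoint T * T) * adjoint T)

include hD hD2

/-- `‖T u‖² = ‖u‖² + ‖D u‖²` -/
lemma normT_sq (u : H) : ‖T u‖ ^ 2 = ‖u‖ ^ 2 + ‖D u‖ ^ 2 := by
  have hDsa : adjoint D = D := by
    rw [← star_eq_adjoint]; exact hD.isSelfAdjoint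
  have h1 : (⟪T u, T u⟫ : ℂ) = ⟪u, (adjoint T * T) u⟫ := by
    rw [mul_apply_eq_comp, adjoint_inner_right]
  have h2 : (⟪u, (adjoint T * T) u⟫ : ℂ) = ⟪u, u⟫ + ⟪D u, D u⟫ := by
    have : (adjoint T * T) u = u + D (D u) := by
      have : adjoint T * T = 1 + D * D := by rw [hD2]; noncomm_ring
      rw [this]; simp [mul_apply_eq_comp]
    rw [this, inner_add_right]
    congr 1
    rw [show (⟪u, D (D u)⟫ : ℂ) = ⟪adjoint D u, D u⟫ by rw [adjoint_inner_left], hDsa]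
  have h3 := congrArg RCLike.re (h1.trans h2)
  rw [map_add, inner_self_eq_norm_sq, inner_self_eq_norm_sq, inner_self_eq_norm_sq] at h3
  exact h3

include hconc

/-- key pointwise identity -/
lemma key_ident (x : H) :
    ‖x‖ ^ 2 = ‖P x‖ ^ 2 + ‖D ((L) x)‖ ^ 2 + ‖(L) x‖ ^ 2 := by
  have hsplit : x = (P) x + (T * (L)) x := by
    have : (P) + T * (L) = 1 := sub_add_cancel 1 _
    have := congrArg (fun (A : H →L[ℂ] H) => A x) this
    simpa [add_apply] using this.symm
  have horth : (⟪(P) x, (T * (L)) x⟫ : ℂ) = 0 := by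
    have hPsa : adjoint (P) = (P) := by
      rw [← star_eq_adjoint, star_sub, star_one, star_TL hconc]
    calc (⟪(P) x, (T * L) x⟫ : ℂ) = ⟪adjoint (P) x, (T * L) x⟫ := by rw [hPsa]
      _ = ⟪x, ((P) ((T * L) x))⟫ := adjoint_inner_left _ _ _
      _ = ⟪x, ((P) * (T * L)) x⟫ := by rw [mul_apply_eq_comp (1 - T * (Ring.inverse (adjoint T * T) * adjoint T)) (T * (Ring.inverse (adjoint T * T) * adjoint T)) x]
      _ = 0 := by
          have h0 : (P) * (T * L) = 0 := by
            rw [← mul_assoc, P_mul_T hconc, zero_mul]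
          rw [h0, zero_apply, inner_zero_right]
  have hpyth : ‖x‖ ^ 2 = ‖(P) x‖ ^ 2 + ‖(T * L) x‖ ^ 2 := by
    conv_lhs => rw [hsplit]
    rw [norm_add_sq (𝕜 := ℂ), horth]
    simp
  have hT : ‖(T * L) x‖ ^ 2 = ‖(L) x‖ ^ 2 + ‖D ((L) x)‖ ^ 2 := by
    rw [mul_apply_eq_comp, normT_sq hD hD2]
  rw [hpyth, hT]; ring

lemma L_contraction (x : H) : ‖(L) x‖ ≤ ‖x‖ := by
  have h := key_ident hconc hD hD2 x
  have h1 : ‖(L) x‖ ^ 2 ≤ ‖x‖ ^ 2 := by nlinarith [sq_nonneg ‖(P) x‖, sq_nonneg ‖D ((L) x)‖]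
  exact (pow_le_pow_iff_left₀ (norm_nonneg _) (norm_nonneg _) (by norm_num)).mp h1

omit hconc hD hD2 in
lemma Lpow_apply_succ (n : ℕ) (x : H) : ((L) ^ (n+1)) x = ((L) ^ n) ((L) x) := by
  rw [pow_succ, mul_apply_eq_comp]

omit hconc hD hD2 in
lemma Lpow_apply_succ' (n : ℕ) (x : H) : ((L) ^ (n+1)) x = (L) (((L) ^ n) x) := by
  rw [pow_succ', mul_apply_eq_comp]

lemma Lpow_contraction (n : ℕ) (x : H) : ‖((L) ^ n) x‖ ≤ ‖x‖ := by
  induction n generalizing x with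
  | zero => simp
  | succ n ih =>
    rw [Lpow_apply_succ]
    exact le_trans (ih _) (L_contraction hconc hD hD2 x)

/-- concavity: `‖D(Tu)‖ ≤ ‖Du‖` -/
lemma normD_T_le (u : H) : ‖D (T u)‖ ^ 2 ≤ ‖D u‖ ^ 2 := by
  have h1 : ‖T (T u)‖ ^ 2 = ‖T u‖ ^ 2 + ‖D (T u)‖ ^ 2 := normT_sq hD hD2 (T u)
  have h2 : ‖T u‖ ^ 2 = ‖u‖ ^ 2 + ‖D u‖ ^ 2 := normT_sq hD hD2 u
  have h3 := hconc u
  linarith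

lemma normD_Tpow_le (n : ℕ) (u : H) : ‖D ((T ^ n) u)‖ ^ 2 ≤ ‖D u‖ ^ 2 := by
  induction n generalizing u with
  | zero => simp
  | succ n ih =>
    have h : (T ^ (n+1)) u = (T ^ n) (T u) := by rw [pow_succ, mul_apply_eq_comp]
    rw [h]
    exact le_trans (ih (T u)) (normD_T_le hconc hD hD2 u)

lemma normTpow_sq_le (n : ℕ) (u : H) :
    ‖(T ^ n) u‖ ^ 2 ≤ ‖u‖ ^ 2 + n * ‖D u‖ ^ 2 := by
  induction n with
  | zero => simp
  | succ n ih =>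
    have h : (T ^ (n+1)) u = T ((T ^ n) u) := by rw [pow_succ', mul_apply_eq_comp]
    rw [h, normT_sq hD hD2]
    have := normD_Tpow_le hconc hD hD2 n u
    push_cast at ih this ⊢
    nlinarith

/-- partial sums identity -/
lemma sum_F (h : H) (n : ℕ) :
    (∑ j ∈ Finset.range n, (‖(P) (((L) ^ j) h)‖ ^ 2 + ‖D (((L) ^ (j+1)) h)‖ ^ 2))
      = ‖h‖ ^ 2 - ‖((L) ^ n) h‖ ^ 2 := by
  induction n with
  | zero => simp
  | succ n ih =>
    rw [Finset.sum_range_succ, ih]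
    have hk := key_ident hconc hD hD2 (((L) ^ n) h)
    rw [Lpow_apply_succ']
    linarith

end Norms


section Main

variable (hconc : ∀ h : H, ‖T (T h)‖ ^ 2 + ‖h‖ ^ 2 ≤ 2 * ‖T h‖ ^ 2)
variable (hD : D.IsPositive) (hD2 : D * D = adjoint T * T - 1)

local notation "L" => Ring.inverse (adjoint T * T) * adjoint T
local notation "P" => 1 - T * (Ring.inverse (adjoint T * T) * adjoint T)

/-- if `L^m x = 0` then `L^n x = 0` for `n ≥ m` -/
lemma Lpow_eventually_zero {x : H} {m : ℕ} (hx : ((L) ^ m) x = 0) {n : ℕ} (hn : m ≤ n) :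
    ((L) ^ n) x = 0 := by
  obtain ⟨k, rfl⟩ := Nat.exists_eq_add_of_le hn
  have e : ((L) ^ (m + k)) x = ((L) ^ k) (((L) ^ m) x) := by
    rw [add_comm, pow_add]; rfl
  rw [e, hx, map_zero]

/-- the space of vectors killed by a power of `L` -/
def Uker (T : H →L[ℂ] H) : Submodule ℂ H where
  carrier := {x | ∃ n : ℕ, (((Ring.inverse (adjoint T * T) * adjoint T)) ^ n) x = 0}
  zero_mem' := ⟨0, by simp⟩
  add_mem' := by
    rintro x y ⟨n, hn⟩ ⟨m, hm⟩
    exact ⟨n + m, by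
      rw [map_add, Lpow_eventually_zero hn (Nat.le_add_right _ _),
        Lpow_eventually_zero hm (Nat.le_add_left _ _), add_zero]⟩
  smul_mem' := by
    rintro c x ⟨n, hn⟩
    exact ⟨n, by rw [map_smul, hn, smul_zero]⟩

lemma mem_Uker_iff (x : H) : x ∈ Uker T ↔
    ∃ n : ℕ, (((Ring.inverse (adjoint T * T) * adjoint T)) ^ n) x = 0 := Iff.rfl

include hconc

lemma Lpow_Tpow (j : ℕ) (x : H) : ((L) ^ j) ((T ^ j) x) = x := by
  induction j generalizing x with
  | zero => simp
  | succ j ih =>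
    have h1 : ((L) ^ (j+1)) ((T ^ (j+1)) x) = ((L) ^ j) ((L) ((T ^ (j+1)) x)) := by
      rw [pow_succ, mul_apply_eq_comp]
    have h2 : (T ^ (j+1)) x = T ((T ^ j) x) := by rw [pow_succ', mul_apply_eq_comp]
    have h3 : (L) (T ((T ^ j) x)) = (T ^ j) x :=
      congrArg (fun (A : H →L[ℂ] H) => A ((T ^ j) x)) (L_mul_T hconc)
    rw [h1, h2, h3, ih]

/-- telescope: `h = Σ_{j<n} Tʲ P Lʲ h + Tⁿ Lⁿ h` -/
lemma telescope (h : H) (n : ℕ) :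
    (∑ j ∈ Finset.range n, (T ^ j) ((P) (((L) ^ j) h))) + (T ^ n) (((L) ^ n) h) = h := by
  induction n with
  | zero => simp
  | succ n ih =>
    rw [Finset.sum_range_succ]
    have hsplit : ((L) ^ n) h = (P) (((L) ^ n) h) + T ((L) (((L) ^ n) h)) := by
      have e : (P) + T * (L) = 1 := sub_add_cancel 1 _
      exact (congrArg (fun (A : H →L[ℂ] H) => A (((L) ^ n) h)) e).symm
    have e1 : (T ^ n) (((L) ^ n) h)
        = (T ^ n) ((P) (((L) ^ n) h)) + (T ^ (n+1)) (((L) ^ (n+1)) h) := by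
      conv_lhs => rw [hsplit]
      rw [map_add]
      congr 1
      have e2 : ((L) ^ (n+1)) h = (L) (((L) ^ n) h) := by rw [pow_succ']; rfl
      rw [e2, pow_succ]
      rfl
    calc (∑ j ∈ Finset.range n, (T ^ j) ((P) (((L) ^ j) h)))
          + (T ^ n) ((P) (((L) ^ n) h)) + (T ^ (n+1)) (((L) ^ (n+1)) h)
        = (∑ j ∈ Finset.range n, (T ^ j) ((P) (((L) ^ j) h))) + (T ^ n) (((L) ^ n) h) := by
          rw [e1]; abel
      _ = h := ih

/-- each telescope term is annihilated by a power of `L` -/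
lemma term_mem_U (j : ℕ) (z : H) : (T ^ j) ((P) z) ∈ Uker T := by
  refine ⟨j + 1, ?_⟩
  have h1 : ((L) ^ (j+1)) ((T ^ j) ((P) z)) = (L) (((L) ^ j) ((T ^ j) ((P) z))) := by
    rw [pow_succ']; rfl
  rw [h1, Lpow_Tpow hconc]
  exact congrArg (fun (A : H →L[ℂ] H) => A z) (L_mul_P hconc)

lemma diff_mem_U (h : H) (n : ℕ) : h - (T ^ n) (((L) ^ n) h) ∈ Uker T := by
  have := telescope hconc h n
  have e := (eq_sub_of_add_eq this).symm
  rw [e]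
  exact Submodule.sum_mem _ (fun j _ => term_mem_U hconc j _)

include hD hD2

/-- there are infinitely many good indices -/
lemma exists_good (r : H) (N : ℕ) :
    ∃ n, N ≤ n ∧ ((n:ℝ) + 1) * ‖D (((L) ^ (n+1)) r)‖ ^ 2 ≤ 1 := by
  by_contra hcon
  push_neg at hcon
  set q : ℕ → ℝ := fun j => ‖D (((L) ^ (j+1)) r)‖ ^ 2 with hq
  have hqsum : ∀ n, (∑ j ∈ Finset.range n, q j) ≤ ‖r‖ ^ 2 := by
    intro n
    have h1 := sum_F hconc hD hD2 r n
    have h2 : (∑ j ∈ Finset.range n, q j) ≤ ∑ j ∈ Finset.range n,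
        (‖(P) (((L) ^ j) r)‖ ^ 2 + ‖D (((L) ^ (j+1)) r)‖ ^ 2) := by
      apply Finset.sum_le_sum
      intro j _
      have : (0:ℝ) ≤ ‖(P) (((L) ^ j) r)‖ ^ 2 := by positivity
      simp only [hq]; linarith
    have h3 : (0:ℝ) ≤ ‖((L) ^ n) r‖ ^ 2 := by positivity
    linarith [h2.trans_eq h1]
  have hge : ∀ j, N ≤ j → 1 / ((j:ℝ) + 1) < q j := by
    intro j hj
    have h := hcon j hj
    have hpos : (0:ℝ) < (j:ℝ) + 1 := by positivity
    rw [div_lt_iff₀ hpos]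
    have he : q j = ‖D (((L) ^ (j+1)) r)‖ ^ 2 := rfl
    rw [he]; linarith
  -- partial sums of 1/(j+1) are unbounded
  have hH : Tendsto (fun n => ∑ i ∈ Finset.range n, (1:ℝ) / (i + 1)) atTop atTop :=
    Real.tendsto_sum_range_one_div_nat_succ_atTop
  have hbdd : ∀ n, N ≤ n → (∑ i ∈ Finset.range n, (1:ℝ) / (i + 1))
      ≤ (∑ i ∈ Finset.range N, (1:ℝ) / (i + 1)) + ‖r‖ ^ 2 := by
    intro n hn
    have hsplit : (∑ i ∈ Finset.range N, (1:ℝ) / (i + 1))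
        + (∑ i ∈ Finset.Ico N n, (1:ℝ) / (i + 1))
        = ∑ i ∈ Finset.range n, (1:ℝ) / (i + 1) := by
      simp only [Finset.range_eq_Ico]
      exact Finset.sum_Ico_consecutive _ (Nat.zero_le _) hn
    have hsplit2 : (∑ i ∈ Finset.range N, q i) + (∑ i ∈ Finset.Ico N n, q i)
        = ∑ i ∈ Finset.range n, q i := by
      simp only [Finset.range_eq_Ico]
      exact Finset.sum_Ico_consecutive _ (Nat.zero_le _) hn
    have h4 : (∑ i ∈ Finset.Ico N n, (1:ℝ) / (i + 1)) ≤ ∑ i ∈ Finset.Ico N n, q i := by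
      apply Finset.sum_le_sum
      intro i hi
      exact le_of_lt (hge i (Finset.mem_Ico.mp hi).1)
    have h5 : (0:ℝ) ≤ ∑ i ∈ Finset.range N, q i := by
      apply Finset.sum_nonneg; intro i _; positivity
    have h6 := hqsum n
    linarith
  obtain ⟨n, hn1, hn2⟩ : ∃ n, N ≤ n ∧
      (∑ i ∈ Finset.range N, (1:ℝ) / (i + 1)) + ‖r‖ ^ 2
        < ∑ i ∈ Finset.range n, (1:ℝ) / (i + 1) := by
    have := (tendsto_atTop.mp hH ((∑ i ∈ Finset.range N, (1:ℝ) / (i + 1)) + ‖r‖ ^ 2 + 1))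
    rcases (this.and (eventually_ge_atTop N)).exists with ⟨n, h1, h2⟩
    exact ⟨n, h2, by linarith⟩
  exact absurd (hbdd n hn1) (not_le.mpr hn2)

end Main


section Core

variable (hconc : ∀ h : H, ‖T (T h)‖ ^ 2 + ‖h‖ ^ 2 ≤ 2 * ‖T h‖ ^ 2)
variable (hD : D.IsPositive) (hD2 : D * D = adjoint T * T - 1)
variable (hana : (⋂ n : ℕ, Set.range ⇑(T ^ (n + 1))) = {0})

local notation "L" => Ring.inverse (adjoint T * T) * adjoint T

include hconc

lemma expansive_pow (n : ℕ) (x : H) : ‖x‖ ≤ ‖(T ^ n) x‖ := by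
  induction n with
  | zero => simp
  | succ n ih =>
    have h1 : (T ^ (n+1)) x = T ((T ^ n) x) := by rw [pow_succ']; rfl
    rw [h1]
    exact ih.trans (expansive hconc _)

lemma isClosed_range_pow (n : ℕ) : IsClosed (Set.range ⇑(T ^ (n + 1))) := by
  have halip : AntilipschitzWith 1 ⇑(T ^ (n+1)) := by
    apply ContinuousLinearMap.antilipschitz_of_bound
    intro x
    rw [NNReal.coe_one, one_mul]
    exact expansive_pow hconc (n+1) x
  exact halip.isClosed_range (T ^ (n+1)).uniformContinuous

include hD hD2 hana

lemma U_orth_zero : ∀ r ∈ (Uker T)ᗮ, r = 0 := by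
  intro r hr
  set MU := (Uker T).topologicalClosure with hMU
  set C : ℕ → Set H := fun n => Set.range ⇑(T ^ (n+1)) ∩ {x | x - r ∈ MU} with hC
  have hCclosed : ∀ n, IsClosed (C n) := by
    intro n
    apply (isClosed_range_pow hconc n).inter
    have : {x : H | x - r ∈ MU} = (fun x => x - r) ⁻¹' (MU : Set H) := rfl
    rw [this]
    exact IsClosed.preimage (continuous_id.sub continuous_const)
      (Submodule.isClosed_topologicalClosure _)
  have hCanti : Antitone C := by
    apply antitone_nat_of_succ_le
    rintro n x ⟨⟨z, rfl⟩, hx2⟩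
    refine ⟨⟨T z, ?_⟩, hx2⟩
    rw [show T ^ (n+1+1) = T ^ (n+1) * T from pow_succ T (n+1)]
    rfl
  -- witnesses
  set w : ℕ → H := fun n => (T ^ (n+1)) (((L) ^ (n+1)) r) with hw
  have hwC : ∀ n, w n ∈ C n := by
    intro n
    refine ⟨⟨_, rfl⟩, ?_⟩
    have h1 : r - w n ∈ Uker T := diff_mem_U hconc r (n+1)
    have h2 : w n - r = -(r - w n) := by abel
    rw [Set.mem_setOf_eq, h2]
    exact neg_mem (Submodule.le_topologicalClosure _ h1)
  -- infimum of norms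
  set dset : ℕ → Set ℝ := fun n => (fun x => ‖x‖) '' C n with hdset
  have hdne : ∀ n, (dset n).Nonempty := fun n => ⟨‖w n‖, ⟨w n, hwC n, rfl⟩⟩
  have hdbb : ∀ n, BddBelow (dset n) := by
    intro n
    refine ⟨0, ?_⟩
    rintro y ⟨x, _, rfl⟩
    exact norm_nonneg x
  set d : ℕ → ℝ := fun n => sInf (dset n) with hd
  have hd0 : ∀ n, 0 ≤ d n := by
    intro n
    apply le_csInf (hdne n)
    rintro y ⟨x, _, rfl⟩
    exact norm_nonneg x
  have hdmono : Monotone d := by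
    intro a b hab
    apply csInf_le_csInf (hdbb a) (hdne b)
    exact Set.image_mono (hCanti hab)
  set B : ℝ := Real.sqrt (‖r‖ ^ 2 + 1) with hB
  have hB0 : 0 ≤ B := Real.sqrt_nonneg _
  have hdB : ∀ n, d n ≤ B := by
    intro n
    obtain ⟨m, hm1, hm2⟩ := exists_good hconc hD hD2 r n
    have hwm : ‖w m‖ ≤ B := by
      have h1 : ‖w m‖ ^ 2 ≤ ‖((L) ^ (m+1)) r‖ ^ 2
          + ((m:ℝ)+1) * ‖D (((L) ^ (m+1)) r)‖ ^ 2 := by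
        have := normTpow_sq_le hconc hD hD2 (m+1) (((L) ^ (m+1)) r)
        rw [hw]
        push_cast at this ⊢
        exact this
      have h2 : ‖((L) ^ (m+1)) r‖ ^ 2 ≤ ‖r‖ ^ 2 := by
        have := Lpow_contraction hconc hD hD2 (m+1) r
        exact pow_le_pow_left₀ (norm_nonneg _) this 2
      have h3 : ‖w m‖ ^ 2 ≤ ‖r‖ ^ 2 + 1 := by linarith
      calc ‖w m‖ = Real.sqrt (‖w m‖ ^ 2) := (Real.sqrt_sq (norm_nonneg _)).symm
        _ ≤ B := Real.sqrt_le_sqrt h3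
    calc d n ≤ d m := hdmono hm1
      _ ≤ ‖w m‖ := csInf_le (hdbb m) ⟨w m, hwC m, rfl⟩
      _ ≤ B := hwm
  -- limit of d
  have hbdd : BddAbove (Set.range d) := ⟨B, by rintro y ⟨n, rfl⟩; exact hdB n⟩
  set dlim : ℝ := ⨆ n, d n with hdlim
  have hdtend : Tendsto d atTop (nhds dlim) := tendsto_atTop_ciSup hdmono hbdd
  have hdle : ∀ n, d n ≤ dlim := fun n => le_ciSup hbdd n
  have hdlimB : dlim ≤ B := ciSup_le hdB
  have hdlim0 : 0 ≤ dlim := le_trans (hd0 0) (hdle 0)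
  -- approximate minimizers
  have hsel : ∀ n : ℕ, ∃ x, x ∈ C n ∧ ‖x‖ < d n + 1/((n:ℝ)+1) := by
    intro n
    obtain ⟨y, ⟨x, hx, rfl⟩, hy⟩ :=
      Real.lt_sInf_add_pos (hdne n) (by positivity : (0:ℝ) < 1/((n:ℝ)+1))
    exact ⟨x, hx, hy⟩
  choose a haC hna using hsel
  set δ : ℕ → ℝ := fun N => (dlim - d N) + 1/((N:ℝ)+1) with hδ
  have hδ0 : ∀ N, 0 < δ N := by
    intro N
    have := hdle N
    have : (0:ℝ) < 1/((N:ℝ)+1) := by positivity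
    simp only [hδ]
    nlinarith [hdle N]
  -- the key parallelogram estimate
  have hkey : ∀ N n m, N ≤ n → N ≤ m →
      ‖a n - a m‖ ^ 2 ≤ 16 * B * δ N + 16 * (δ N) ^ 2 := by
    intro N n m hn hm
    have hanb : ‖a n‖ ≤ dlim + δ N := by
      have h1 := hna n
      have h2 : 1/((n:ℝ)+1) ≤ 1/((N:ℝ)+1) := by
        apply one_div_le_one_div_of_le (by positivity)
        have := (Nat.cast_le (α := ℝ)).mpr hn
        linarith
      have h3 := hdle n
      simp only [hδ]
      nlinarith [hdle N]
    have hamb : ‖a m‖ ≤ dlim + δ N := by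
      have h1 := hna m
      have h2 : 1/((m:ℝ)+1) ≤ 1/((N:ℝ)+1) := by
        apply one_div_le_one_div_of_le (by positivity)
        have := (Nat.cast_le (α := ℝ)).mpr hm
        linarith
      have h3 := hdle m
      simp only [hδ]
      nlinarith [hdle N]
    -- midpoint in C N
    have hmid : (2⁻¹ : ℂ) • (a n + a m) ∈ C N := by
      have hanC : a n ∈ C N := hCanti hn (haC n)
      have hamC : a m ∈ C N := hCanti hm (haC m)
      obtain ⟨⟨u, hu⟩, han2⟩ := hanC
      obtain ⟨⟨v, hv⟩, ham2⟩ := hamC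
      constructor
      · refine ⟨(2⁻¹ : ℂ) • (u + v), ?_⟩
        rw [map_smul, map_add, hu, hv]
      · rw [Set.mem_setOf_eq]
        have e : (2⁻¹ : ℂ) • (a n + a m) - r
            = (2⁻¹ : ℂ) • ((a n - r) + (a m - r)) := by
          module
        rw [e]
        exact Submodule.smul_mem _ _ (Submodule.add_mem _ han2 ham2)
    -- distance to the midpoint
    have hdN : d N ≤ 2⁻¹ * ‖a n + a m‖ := by
      have h1 : d N ≤ ‖(2⁻¹ : ℂ) • (a n + a m)‖ :=
        csInf_le (hdbb N) ⟨_, hmid, rfl⟩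
      have h2 : ‖(2⁻¹ : ℂ) • (a n + a m)‖ = 2⁻¹ * ‖a n + a m‖ := by
        rw [norm_smul]
        norm_num
      linarith [h1.trans_eq h2]
    have hpar := parallelogram_law_with_norm ℂ (a n) (a m)
    have hδpos := (hδ0 N).le
    have hdNlow : dlim - δ N ≤ d N := by
      have hp : (0:ℝ) < 1/((N:ℝ)+1) := by positivity
      simp only [hδ]; linarith
    have hprod : (dlim + δ N + d N) * (dlim + δ N - d N) ≤ (2*B + δ N) * (2 * δ N) := by
      apply mul_le_mul
      · linarith [hdle N, hdlimB, hdB N]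
      · linarith [hdNlow]
      · linarith [hdle N]
      · linarith
    have hsq : 4 * (d N) ^ 2 ≤ ‖a n + a m‖ ^ 2 := by
      nlinarith [hdN, hd0 N, norm_nonneg (a n + a m)]
    nlinarith [hpar, hanb, hamb, hsq, norm_nonneg (a n), norm_nonneg (a m),
      hd0 N, hdlim0, hprod]
  -- the approximate minimizers form a Cauchy sequence
  have hδtend : Tendsto δ atTop (nhds 0) := by
    have h1 : Tendsto (fun N => dlim - d N) atTop (nhds (dlim - dlim)) :=
      tendsto_const_nhds.sub hdtend
    have h2 : Tendsto (fun N : ℕ => 1/((N:ℝ)+1)) atTop (nhds 0) :=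
      tendsto_one_div_add_atTop_nhds_zero_nat
    have := h1.add h2
    simp only [sub_self, add_zero] at this
    exact this
  have hcauchy : CauchySeq a := by
    apply cauchySeq_of_le_tendsto_0 (fun N => Real.sqrt (16 * B * δ N + 16 * (δ N) ^ 2))
    · intro n m N hn hm
      rw [dist_eq_norm]
      have h1 := hkey N n m hn hm
      calc ‖a n - a m‖ = Real.sqrt (‖a n - a m‖ ^ 2) := (Real.sqrt_sq (norm_nonneg _)).symm
        _ ≤ Real.sqrt (16 * B * δ N + 16 * (δ N) ^ 2) := Real.sqrt_le_sqrt h1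
    · have h1 : Tendsto (fun N => 16 * B * δ N + 16 * (δ N) ^ 2) atTop
          (nhds (16 * B * 0 + 16 * (0:ℝ) ^ 2)) :=
        ((hδtend.const_mul (16 * B)).add ((hδtend.pow 2).const_mul 16))
      have h2 : (16 * B * 0 + 16 * (0:ℝ) ^ 2) = 0 := by norm_num
      rw [h2] at h1
      have := h1.sqrt
      rwa [Real.sqrt_zero] at this
  obtain ⟨av, hav⟩ := cauchySeq_tendsto_of_complete hcauchy
  have hmem : ∀ n, av ∈ C n := by
    intro n
    apply (hCclosed n).mem_of_tendsto hav
    filter_upwards [eventually_ge_atTop n] with k hk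
    exact hCanti hk (haC k)
  have hav0 : av = 0 := by
    have h1 : av ∈ ⋂ n : ℕ, Set.range ⇑(T ^ (n + 1)) :=
      Set.mem_iInter.mpr (fun n => (hmem n).1)
    rw [hana] at h1
    exact h1
  have hrMU : r ∈ MU := by
    have h2 := (hmem 0).2
    rw [Set.mem_setOf_eq, hav0, zero_sub] at h2
    have := neg_mem h2
    rwa [neg_neg] at this
  have hrbb : r ∈ (Uker T)ᗮᗮ := by
    rw [Submodule.orthogonal_orthogonal_eq_closure]
    exact hrMU
  have : (⟪r, r⟫ : ℂ) = 0 := (Submodule.mem_orthogonal _ _).mp hrbb r hr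
  exact inner_self_eq_zero.mp this

end Core


section Final

variable (hconc : ∀ h : H, ‖T (T h)‖ ^ 2 + ‖h‖ ^ 2 ≤ 2 * ‖T h‖ ^ 2)
variable (hD : D.IsPositive) (hD2 : D * D = adjoint T * T - 1)
variable (hana : (⋂ n : ℕ, Set.range ⇑(T ^ (n + 1))) = {0})

local notation "L" => Ring.inverse (adjoint T * T) * adjoint T
local notation "P" => 1 - T * (Ring.inverse (adjoint T * T) * adjoint T)

include hconc hD hD2 hana

lemma tendsto_Lpow (h : H) :
    Tendsto (fun n : ℕ => ‖((L) ^ n) h‖) atTop (nhds 0) := by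
  have horth : (Uker T)ᗮ = ⊥ := by
    rw [Submodule.eq_bot_iff]
    exact U_orth_zero hconc hD hD2 hana
  have hdense : Dense ((Uker T : Set H)) := by
    rw [Submodule.dense_iff_topologicalClosure_eq_top,
      ← Submodule.orthogonal_orthogonal_eq_closure, horth,
      Submodule.bot_orthogonal_eq_top]
  rw [Metric.tendsto_atTop]
  intro ε hε
  obtain ⟨x, hxU, hxd⟩ := hdense.exists_dist_lt h hε
  obtain ⟨m, hm⟩ := (mem_Uker_iff x).mp hxU
  refine ⟨m, fun n hn => ?_⟩
  have hLx : ((L) ^ n) x = 0 := Lpow_eventually_zero hm hn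
  have h1 : ((L) ^ n) h = ((L) ^ n) (h - x) + ((L) ^ n) x := by
    rw [← map_add]; congr 1; abel
  have h2 : ‖((L) ^ n) h‖ ≤ ‖h - x‖ := by
    rw [h1, hLx, add_zero]
    exact Lpow_contraction hconc hD hD2 n (h - x)
  have h3 : dist ‖((L) ^ n) h‖ 0 = ‖((L) ^ n) h‖ := by
    simp [Real.dist_eq, abs_of_nonneg (norm_nonneg _)]
  rw [h3]
  calc ‖((L) ^ n) h‖ ≤ ‖h - x‖ := h2
    _ = dist h x := (dist_eq_norm h x).symm
    _ < ε := hxd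

lemma series_ident (h : H) :
    ‖h‖ ^ 2 = (∑' j : ℕ, ‖(P) (((L) ^ j) h)‖ ^ 2)
      + ∑' j : ℕ, ‖D (((L) ^ (j + 1)) h)‖ ^ 2 := by
  set p : ℕ → ℝ := fun j => ‖(P) (((L) ^ j) h)‖ ^ 2 with hp
  set q : ℕ → ℝ := fun j => ‖D (((L) ^ (j+1)) h)‖ ^ 2 with hq
  have hp0 : ∀ j, 0 ≤ p j := fun j => by positivity
  have hq0 : ∀ j, 0 ≤ q j := fun j => by positivity
  have hpqsum : ∀ n, (∑ j ∈ Finset.range n, (p j + q j)) = ‖h‖ ^ 2 - ‖((L) ^ n) h‖ ^ 2 :=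
    fun n => sum_F hconc hD hD2 h n
  have hble : ∀ n, (∑ j ∈ Finset.range n, (p j + q j)) ≤ ‖h‖ ^ 2 := by
    intro n
    rw [hpqsum n]
    have : (0:ℝ) ≤ ‖((L) ^ n) h‖ ^ 2 := by positivity
    linarith
  have hsp : Summable p := by
    apply summable_of_sum_range_le hp0
    intro n
    have h1 : (∑ j ∈ Finset.range n, p j) ≤ ∑ j ∈ Finset.range n, (p j + q j) :=
      Finset.sum_le_sum (fun j _ => by linarith [hq0 j])
    exact h1.trans (hble n)
  have hsq : Summable q := by
    apply summable_of_sum_range_le hq0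
    intro n
    have h1 : (∑ j ∈ Finset.range n, q j) ≤ ∑ j ∈ Finset.range n, (p j + q j) :=
      Finset.sum_le_sum (fun j _ => by linarith [hp0 j])
    exact h1.trans (hble n)
  have htends : Tendsto (fun n => ∑ j ∈ Finset.range n, (p j + q j)) atTop (nhds (‖h‖ ^ 2)) := by
    have h1 : Tendsto (fun n : ℕ => ‖((L) ^ n) h‖ ^ 2) atTop (nhds 0) := by
      have := (tendsto_Lpow hconc hD hD2 hana h).pow 2
      simpa using this
    have h2 : Tendsto (fun n : ℕ => ‖h‖ ^ 2 - ‖((L) ^ n) h‖ ^ 2) atTop (nhds (‖h‖ ^ 2)) := by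
      have := tendsto_const_nhds (x := ‖h‖ ^ 2) (f := atTop (α := ℕ)) |>.sub h1
      simpa using this
    exact (funext hpqsum : (fun n => ∑ j ∈ Finset.range n, (p j + q j)) = _) ▸ h2
  have hhs : HasSum (fun j => p j + q j) (‖h‖ ^ 2) :=
    ((hsp.add hsq).hasSum_iff_tendsto_nat).mpr htends
  have hhs2 : HasSum (fun j => p j + q j) ((∑' j, p j) + ∑' j, q j) :=
    hsp.hasSum.add hsq.hasSum
  exact hhs.unique hhs2

end Final

end ConcaveAux

/-- Remark 2.5 and Equation (2.9) of the paper, scalar case: if `T` is concave and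
analytic then `‖Lⁿh‖ → 0` and the norm identity
`‖h‖² = Σ_{j≥0} ‖PLʲh‖² + Σ_{j≥1} ‖DLʲh‖²` holds, where `L = (T*T)⁻¹T*`,
`P = I - TL` and `D = (T*T - I)^{1/2}`. -/
theorem concave_analytic_norm_series {H : Type*} [NormedAddCommGroup H]
    [InnerProductSpace ℂ H] [CompleteSpace H] (T : H →L[ℂ] H)
    (hconc : ∀ h : H, ‖T (T h)‖ ^ 2 + ‖h‖ ^ 2 ≤ 2 * ‖T h‖ ^ 2)
    (hana : (⋂ n : ℕ, Set.range ⇑(T ^ (n + 1))) = {0})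
    (D : H →L[ℂ] H) (hD : D.IsPositive) (hD2 : D * D = adjoint T * T - 1) :
    ∀ h : H,
      (let L : H →L[ℂ] H := Ring.inverse (adjoint T * T) * adjoint T
       let P : H →L[ℂ] H := 1 - T * L
       Tendsto (fun n : ℕ => ‖(L ^ n) h‖) atTop (nhds 0) ∧
       ‖h‖ ^ 2 = (∑' j : ℕ, ‖P ((L ^ j) h)‖ ^ 2) +
         ∑' j : ℕ, ‖D ((L ^ (j + 1)) h)‖ ^ 2) := by
  intro h
  exact ⟨tendsto_Lpow hconc hD hD2 hana h,
    series_ident hconc hD hD2 hana h⟩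
end

section
/- Let T ∈ B(H) be left invertible with Cauchy dual T' = T(T*T)⁻¹ and wandering subspace W = ker T*. Then the orthogonal complement of ⋂_{n≥1} T'ⁿH equals ⋁_{n≥0} TⁿW, and the orthogonal complement of ⋂_{n≥1} TⁿH equals ⋁_{n≥0} T'ⁿW. -/
open ContinuousLinearMap

local notation "⟪" x ", " y "⟫" => @inner ℂ _ _ x y

section Aux

variable {H : Type*} [NormedAddCommGroup H] [InnerProductSpace ℂ H] [CompleteSpace H]

private lemma cdwd_pow_mul_pow {M : Type*} [Monoid M] {a b : M} (h : a * b = 1) :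
    ∀ n : ℕ, a ^ n * b ^ n = 1 := by
  intro n
  induction n with
  | zero => simp
  | succ k ih =>
    rw [pow_succ a k, pow_succ' b k, mul_assoc, ← mul_assoc a b, h, one_mul, ih]

private lemma cdwd_range_orth (A : H →L[ℂ] H) :
    (LinearMap.range (A : H →ₗ[ℂ] H))ᗮ = LinearMap.ker ((adjoint A : H →L[ℂ] H) : H →ₗ[ℂ] H) := by
  ext x
  simp only [Submodule.mem_orthogonal, LinearMap.mem_range, LinearMap.mem_ker, ContinuousLinearMap.coe_coe]
  constructor
  · intro hx
    have h0 : ⟪A (adjoint A x), x⟫ = 0 := hx _ ⟨_, rfl⟩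
    have h1 : ⟪adjoint A x, adjoint A x⟫ = ⟪A (adjoint A x), x⟫ :=
      adjoint_inner_right A (adjoint A x) x
    rw [h0] at h1
    exact inner_self_eq_zero.mp h1
  · rintro hx u ⟨y, rfl⟩
    have := adjoint_inner_right A y x
    rw [hx, inner_zero_right] at this
    exact this.symm

private lemma cdwd_ker_pow_le (S L : H →L[ℂ] H) (h : L * S = 1) (n : ℕ) :
    LinearMap.ker ((L ^ (n + 1) : H →L[ℂ] H) : H →ₗ[ℂ] H) ≤ ⨆ j : ℕ, Submodule.map ((S ^ j : H →L[ℂ] H) : H →ₗ[ℂ] H) (LinearMap.ker (L : H →ₗ[ℂ] H)) := by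
  have hLS : ∀ x, L (S x) = x := fun x => by
    have := ContinuousLinearMap.ext_iff.mp h x
    simpa [mul_apply_eq_comp] using this
  set K := ⨆ j : ℕ, Submodule.map ((S ^ j : H →L[ℂ] H) : H →ₗ[ℂ] H) (LinearMap.ker (L : H →ₗ[ℂ] H)) with hK
  have hmapS : ∀ z ∈ K, S z ∈ K := by
    intro z hz
    refine Submodule.iSup_induction (motive := fun z => S z ∈ K) _ hz ?_ ?_ ?_
    · rintro j w ⟨v, hv, rfl⟩
      refine Submodule.mem_iSup_of_mem (j + 1) ⟨v, hv, ?_⟩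
      rw [ContinuousLinearMap.coe_coe, ContinuousLinearMap.coe_coe, pow_succ' S j, mul_apply_eq_comp]
    · simp only [map_zero]; exact zero_mem K
    · intro a b ha hb
      rw [map_add]; exact add_mem ha hb
  have hkerK : ∀ z ∈ LinearMap.ker (L : H →ₗ[ℂ] H), z ∈ K := by
    intro z hz
    exact Submodule.mem_iSup_of_mem 0 ⟨z, hz, by simp⟩
  induction n with
  | zero =>
    intro x hx
    exact hkerK x (by simpa using hx)
  | succ k ih =>
    intro x hx
    have hx' : (L ^ (k + 1)) (L x) = 0 := by
      have : (L ^ (k + 2)) x = 0 := hx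
      rw [pow_succ L (k + 1), mul_apply_eq_comp] at this
      exact this
    have hy : L x ∈ K := ih hx'
    have hSLx : S (L x) ∈ K := hmapS _ hy
    have hker : x - S (L x) ∈ LinearMap.ker (L : H →ₗ[ℂ] H) := by
      rw [LinearMap.mem_ker, ContinuousLinearMap.coe_coe, map_sub, hLS, sub_self]
    have hxeq : x = (x - S (L x)) + S (L x) := by abel
    rw [hxeq]
    exact add_mem (hkerK _ hker) hSLx

private lemma cdwd_sup_ker_eq (S L : H →L[ℂ] H) (h : L * S = 1) :
    (⨆ n : ℕ, LinearMap.ker ((L ^ (n + 1) : H →L[ℂ] H) : H →ₗ[ℂ] H)) =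
      ⨆ n : ℕ, Submodule.map ((S ^ n : H →L[ℂ] H) : H →ₗ[ℂ] H) (LinearMap.ker (L : H →ₗ[ℂ] H)) := by
  refine le_antisymm (iSup_le fun n => cdwd_ker_pow_le S L h n) (iSup_le fun n => ?_)
  have hpow : ∀ x, (L ^ n) ((S ^ n) x) = x := fun x => by
    have := ContinuousLinearMap.ext_iff.mp (cdwd_pow_mul_pow h n) x
    simpa [mul_apply_eq_comp] using this
  refine le_trans ?_ (le_iSup (fun m => LinearMap.ker ((L ^ (m + 1) : H →L[ℂ] H) : H →ₗ[ℂ] H)) n)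
  rintro x ⟨w, hw, rfl⟩
  rw [LinearMap.mem_ker, ContinuousLinearMap.coe_coe, ContinuousLinearMap.coe_coe, pow_succ' L n, mul_apply_eq_comp, hpow]
  exact hw

private lemma cdwd_half (R S : H →L[ℂ] H) (h1 : star R * S = 1) (h2 : star S * R = 1) :
    (⨅ n : ℕ, LinearMap.range ((R ^ (n + 1) : H →L[ℂ] H) : H →ₗ[ℂ] H))ᗮ =
      (⨆ n : ℕ, Submodule.map ((S ^ n : H →L[ℂ] H) : H →ₗ[ℂ] H) (LinearMap.ker ((star R : H →L[ℂ] H) : H →ₗ[ℂ] H))).topologicalClosure := by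
  have hrange : ∀ n : ℕ,
      LinearMap.range ((R ^ (n + 1) : H →L[ℂ] H) : H →ₗ[ℂ] H) = (LinearMap.ker (((star R) ^ (n + 1) : H →L[ℂ] H) : H →ₗ[ℂ] H))ᗮ := by
    intro n
    have h3 : (star S) ^ (n + 1) * R ^ (n + 1) = 1 := cdwd_pow_mul_pow h2 (n + 1)
    have h3' : ∀ x, ((star S) ^ (n + 1)) ((R ^ (n + 1)) x) = x := fun x => by
      have := ContinuousLinearMap.ext_iff.mp h3 x
      simpa [mul_apply_eq_comp] using this
    have hanti : AntilipschitzWith ‖(star S) ^ (n + 1)‖₊ (R ^ (n + 1)) := by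
      refine (R ^ (n + 1)).antilipschitz_of_bound fun x => ?_
      calc ‖x‖ = ‖((star S) ^ (n + 1)) ((R ^ (n + 1)) x)‖ := by rw [h3']
        _ ≤ ‖(star S) ^ (n + 1)‖ * ‖(R ^ (n + 1)) x‖ := le_opNorm _ _
    have hcl : IsClosed ((LinearMap.range ((R ^ (n + 1) : H →L[ℂ] H) : H →ₗ[ℂ] H) : Submodule ℂ H) : Set H) := by
      have := hanti.isClosed_range (R ^ (n + 1)).uniformContinuous
      convert this using 1
      exact LinearMap.coe_range _
    haveI : CompleteSpace (LinearMap.range ((R ^ (n + 1) : H →L[ℂ] H) : H →ₗ[ℂ] H)) := hcl.completeSpace_coe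
    have horth : (LinearMap.range ((R ^ (n + 1) : H →L[ℂ] H) : H →ₗ[ℂ] H))ᗮ = LinearMap.ker (((star R) ^ (n + 1) : H →L[ℂ] H) : H →ₗ[ℂ] H) := by
      rw [cdwd_range_orth, ← star_pow, star_eq_adjoint]
    rw [← horth, Submodule.orthogonal_orthogonal]
  have : (⨅ n : ℕ, LinearMap.range ((R ^ (n + 1) : H →L[ℂ] H) : H →ₗ[ℂ] H)) =
      (⨆ n : ℕ, LinearMap.ker (((star R) ^ (n + 1) : H →L[ℂ] H) : H →ₗ[ℂ] H))ᗮ := by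
    rw [← Submodule.iInf_orthogonal]
    exact iInf_congr hrange
  rw [this, Submodule.orthogonal_orthogonal_eq_closure, cdwd_sup_ker_eq S (star R) h1]

end Aux

/-- Proposition 3.4 of the paper, scalar case: duality between the analytic part of an
operator and the wandering span of its Cauchy dual `T' = T(T*T)⁻¹`, with `W = ker T*`. -/
theorem cauchy_dual_wandering_duality {H : Type*} [NormedAddCommGroup H]
    [InnerProductSpace ℂ H] [CompleteSpace H] (T : H →L[ℂ] H)
    (hbb : ∃ c : ℝ, 0 < c ∧ ∀ h : H, c * ‖h‖ ≤ ‖T h‖) :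
    (let T' : H →L[ℂ] H := T * Ring.inverse (adjoint T * T)
     let W : Submodule ℂ H := LinearMap.ker ((adjoint T : H →L[ℂ] H) : H →ₗ[ℂ] H)
     (⨅ n : ℕ, LinearMap.range ((T' ^ (n + 1) : H →L[ℂ] H) : H →ₗ[ℂ] H))ᗮ =
       (⨆ n : ℕ, Submodule.map ((T ^ n : H →L[ℂ] H) : H →ₗ[ℂ] H) W).topologicalClosure ∧
     (⨅ n : ℕ, LinearMap.range ((T ^ (n + 1) : H →L[ℂ] H) : H →ₗ[ℂ] H))ᗮ =
       (⨆ n : ℕ, Submodule.map ((T' ^ n : H →L[ℂ] H) : H →ₗ[ℂ] H) W).topologicalClosure) := by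
  obtain ⟨c, hc, hcb⟩ := hbb
  set A : H →L[ℂ] H := adjoint T * T with hAdef
  have hA' : A = star T * T := by rw [hAdef, star_eq_adjoint]
  have hAsa : star A = A := by
    rw [hA', star_mul, star_star]
  -- A is bounded below
  have hbA : ∀ x : H, c ^ 2 * ‖x‖ ≤ ‖A x‖ := by
    intro x
    rcases eq_or_ne x 0 with rfl | hx
    · simp
    have hx0 : (0 : ℝ) < ‖x‖ := norm_pos_iff.mpr hx
    have hinner : ⟪A x, x⟫ = ⟪T x, T x⟫ := by
      rw [hAdef, mul_apply_eq_comp]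
      exact adjoint_inner_left T x (T x)
    have h₁ : ‖T x‖ ^ 2 ≤ ‖A x‖ * ‖x‖ := by
      calc ‖T x‖ ^ 2 = RCLike.re ⟪T x, T x⟫ := (inner_self_eq_norm_sq (T x)).symm
        _ = RCLike.re ⟪A x, x⟫ := by rw [hinner]
        _ ≤ ‖⟪A x, x⟫‖ := RCLike.re_le_norm _
        _ ≤ ‖A x‖ * ‖x‖ := norm_inner_le_norm _ _
    have h₂ : (c * ‖x‖) ^ 2 ≤ ‖T x‖ ^ 2 := by
      have := hcb x
      have hnn : (0 : ℝ) ≤ c * ‖x‖ := by positivity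
      nlinarith
    nlinarith
  have hc2 : (0 : ℝ) < c ^ 2 := by positivity
  have hanti : AntilipschitzWith ⟨(c ^ 2)⁻¹, by positivity⟩ A := by
    refine A.antilipschitz_of_bound fun x => ?_
    have := hbA x
    show ‖x‖ ≤ (c ^ 2)⁻¹ * ‖A x‖
    rw [inv_mul_eq_div, le_div_iff₀ hc2]
    linarith
  have hinj : Function.Injective A := hanti.injective
  have hkerA : LinearMap.ker (A : H →ₗ[ℂ] H) = ⊥ := by
    ext x
    simp only [LinearMap.mem_ker, Submodule.mem_bot]
    constructor
    · intro hx; exact hinj (by simpa using hx)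
    · rintro rfl; simp
  have hclA : IsClosed ((LinearMap.range (A : H →ₗ[ℂ] H) : Submodule ℂ H) : Set H) := by
    have := hanti.isClosed_range A.uniformContinuous
    convert this using 1
    exact LinearMap.coe_range _
  haveI : CompleteSpace (LinearMap.range (A : H →ₗ[ℂ] H)) := hclA.completeSpace_coe
  have hrangeA : LinearMap.range (A : H →ₗ[ℂ] H) = ⊤ := by
    rw [← Submodule.orthogonal_eq_bot_iff, cdwd_range_orth, ← star_eq_adjoint, hAsa, hkerA]
  -- A is a unit
  have hAunit : IsUnit A := by
    set e := ContinuousLinearEquiv.ofBijective A hkerA hrangeA with he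
    have hecoe : ∀ x, e x = A x := fun x => rfl
    refine ⟨⟨A, (e.symm : H →L[ℂ] H), ?_, ?_⟩, rfl⟩
    · ext x
      simp only [mul_apply_eq_comp, one_apply]
      rw [← hecoe]
      exact e.apply_symm_apply x
    · ext x
      simp only [mul_apply_eq_comp, one_apply]
      rw [← hecoe]
      exact e.symm_apply_apply x
  set B : H →L[ℂ] H := Ring.inverse A with hBdef
  have hAB : A * B = 1 := Ring.mul_inverse_cancel A hAunit
  have hBA : B * A = 1 := Ring.inverse_mul_cancel A hAunit
  have hBstar : star B = B := by
    have h3 : star B * star A = 1 := by rw [← star_mul, hAB, star_one]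
    have h4 : star B * A = 1 := by rw [← hAsa]; exact h3
    calc star B = star B * (A * B) := by rw [hAB, mul_one]
      _ = (star B * A) * B := (mul_assoc _ _ _).symm
      _ = B := by rw [h4, one_mul]
  intro T' W
  have hT' : T' = T * B := rfl
  have hW : W = LinearMap.ker ((star T : H →L[ℂ] H) : H →ₗ[ℂ] H) := by rw [star_eq_adjoint]
  have hst : star T' = B * star T := by rw [hT', star_mul, hBstar]
  have h1 : star T' * T = 1 := by
    rw [hst, mul_assoc, ← hA', hBA]
  have h2 : star T * T' = 1 := by
    rw [hT', ← mul_assoc, ← hA', hAB]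
  have hkerT' : LinearMap.ker ((star T' : H →L[ℂ] H) : H →ₗ[ℂ] H) = W := by
    rw [hW]
    ext x
    simp only [LinearMap.mem_ker, ContinuousLinearMap.coe_coe, hst, mul_apply_eq_comp]
    constructor
    · intro hx
      have : (A * B) (star T x) = star T x := by rw [hAB, one_apply_eq_self]
      rw [mul_apply_eq_comp, hx, map_zero] at this
      exact this.symm
    · intro hx; rw [hx, map_zero]
  constructor
  · have := cdwd_half T' T h1 h2
    rwa [hkerT'] at this
  · have := cdwd_half T T' h2 h1
    rwa [← hW] at this
end

section
/- Let T ∈ B(H) be left invertible. Then T is analytic (⋂_{n≥1} TⁿH = {0}) if and only if its Cauchy dual T' = T(T*T)⁻¹ has the generating wandering subspace property, i.e., H = ⋁_{n≥0} T'ⁿ(ker T'*). -/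
open ContinuousLinearMap
open scoped ComplexInnerProductSpace

/-- Corollary 3.5(1)-(2) of the paper, scalar case: `T` is analytic iff its Cauchy dual
`T' = T(T*T)⁻¹` has the generating wandering subspace property. -/
theorem analytic_iff_dual_wandering {H : Type*} [NormedAddCommGroup H]
    [InnerProductSpace ℂ H] [CompleteSpace H] (T : H →L[ℂ] H)
    (hbb : ∃ c : ℝ, 0 < c ∧ ∀ h : H, c * ‖h‖ ≤ ‖T h‖) :
    (let T' : H →L[ℂ] H := T * Ring.inverse (adjoint T * T)
     (⨅ n : ℕ, LinearMap.range (T ^ (n + 1) : H →ₗ[ℂ] H)) = ⊥ ↔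
       (⨆ n : ℕ, Submodule.map (T' ^ n : H →ₗ[ℂ] H)
         (LinearMap.ker (adjoint T' : H →ₗ[ℂ] H))).topologicalClosure = ⊤) := by
  intro T'
  obtain ⟨c, hc, hcb⟩ := hbb
  set c' : NNReal := ⟨c, hc.le⟩ with hc'
  have hc'0 : (0 : NNReal) < c' ^ 2 := by
    rw [pow_pos_iff two_ne_zero]
    exact_mod_cast hc
  -- T*T is invertible
  have hA : IsUnit (adjoint T * T) := by
    apply isUnit_of_forall_le_norm_inner_map _ hc'0
    intro x
    have h1 : ⟪(adjoint T * T) x, x⟫ = ⟪T x, T x⟫ := by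
      rw [ContinuousLinearMap.mul_apply, adjoint_inner_left]
    rw [h1, inner_self_eq_norm_sq_to_K, norm_pow, RCLike.norm_ofReal, abs_norm]
    have h3 : c * ‖x‖ ≤ ‖T x‖ := hcb x
    have : (c * ‖x‖) ^ 2 ≤ ‖T x‖ ^ 2 := by
      apply pow_le_pow_left₀ (by positivity) h3
    calc ‖x‖ ^ 2 * ((c' : ℝ) ^ 2) = (c * ‖x‖) ^ 2 := by
          simp [hc']; show ‖x‖ ^ 2 * c ^ 2 = _; ring
      _ ≤ ‖T x‖ ^ 2 := this
  -- T has closed range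
  have hanti : AntilipschitzWith c'⁻¹ T := by
    apply T.antilipschitz_of_bound
    intro x
    rw [NNReal.coe_inv, inv_mul_eq_div, le_div_iff₀ (by exact_mod_cast hc)]
    calc ‖x‖ * (c' : ℝ) = c * ‖x‖ := by simp [hc', mul_comm]; exact mul_comm _ _
      _ ≤ ‖T x‖ := hcb x
  have hclosed : IsClosed (LinearMap.range (T : H →ₗ[ℂ] H) : Set H) :=
    hanti.isClosed_range T.uniformContinuous
  -- orthogonal complement of the kernel of the adjoint is the range
  have horthker : (LinearMap.range (T : H →ₗ[ℂ] H))ᗮ = LinearMap.ker (adjoint T : H →ₗ[ℂ] H) := by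
    ext y
    simp only [Submodule.mem_orthogonal, LinearMap.mem_ker, LinearMap.mem_range, ContinuousLinearMap.coe_coe]
    constructor
    · intro h
      have h2 : ⟪adjoint T y, adjoint T y⟫ = 0 := by
        rw [adjoint_inner_right]
        exact h _ ⟨adjoint T y, rfl⟩
      exact inner_self_eq_zero.mp h2
    · intro h u hu
      obtain ⟨x, rfl⟩ := hu
      rw [← adjoint_inner_right, h, inner_zero_right]
  have horth : (LinearMap.ker (adjoint T : H →ₗ[ℂ] H))ᗮ = LinearMap.range (T : H →ₗ[ℂ] H) := by
    rw [← horthker, Submodule.orthogonal_orthogonal_eq_closure,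
      hclosed.submodule_topologicalClosure_eq]
  -- the adjoint of the Cauchy dual
  have hadj' : adjoint T' = Ring.inverse (adjoint T * T) * adjoint T := by
    show adjoint (T * Ring.inverse (adjoint T * T)) = _
    rw [← star_eq_adjoint, ← star_eq_adjoint, star_mul, ← Ring.inverse_star]
    congr 1
    rw [star_mul, star_eq_adjoint, star_eq_adjoint, adjoint_adjoint]
  -- key identity : (T')* T = 1
  have hleft : adjoint T' * T = 1 := by
    rw [hadj', mul_assoc, Ring.inverse_mul_cancel _ hA]
  -- ker (T')* = ker T*
  have hker : LinearMap.ker (adjoint T' : H →ₗ[ℂ] H) = LinearMap.ker (adjoint T : H →ₗ[ℂ] H) := by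
    ext x
    simp only [LinearMap.mem_ker, ContinuousLinearMap.coe_coe]
    constructor
    · intro h
      have h2 : ((adjoint T * T) * adjoint T') x = 0 := by
        rw [ContinuousLinearMap.mul_apply, h, map_zero]
      rwa [hadj', ← mul_assoc, Ring.mul_inverse_cancel _ hA, one_mul] at h2
    · intro h
      rw [hadj', ContinuousLinearMap.mul_apply, h, map_zero]
  -- powers : (T'*)^n T^n = 1
  have hpow : ∀ n : ℕ, (adjoint T') ^ n * T ^ n = 1 := by
    intro n
    induction n with
    | zero => simp
    | succ n ih =>
      rw [pow_succ, pow_succ']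
      calc (adjoint T') ^ n * adjoint T' * (T * T ^ n)
          = (adjoint T') ^ n * (adjoint T' * T) * T ^ n := by
            simp only [mul_assoc]
        _ = 1 := by rw [hleft, mul_one, ih]
  -- adjoint of powers
  have hadjpow : ∀ n : ℕ, adjoint (T' ^ n) = (adjoint T') ^ n := by
    intro n
    rw [← star_eq_adjoint, ← star_eq_adjoint, star_pow]
  -- the main duality
  have key : (⨆ n : ℕ, Submodule.map (T' ^ n : H →ₗ[ℂ] H) (LinearMap.ker (adjoint T' : H →ₗ[ℂ] H)))ᗮ
      = ⨅ n : ℕ, LinearMap.range (T ^ (n + 1) : H →ₗ[ℂ] H) := by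
    ext x
    rw [← Submodule.iInf_orthogonal]
    simp only [Submodule.mem_iInf]
    have hmem : ∀ n : ℕ, x ∈ (Submodule.map (T' ^ n : H →ₗ[ℂ] H) (LinearMap.ker (adjoint T' : H →ₗ[ℂ] H)))ᗮ ↔
        ((adjoint T') ^ n) x ∈ LinearMap.range (T : H →ₗ[ℂ] H) := by
      intro n
      rw [← ContinuousLinearMap.coe_pow, ← horth, ← hker, Submodule.mem_orthogonal, Submodule.mem_orthogonal]
      constructor
      · intro h u hu
        have := h ((T' ^ n) u) ⟨u, hu, rfl⟩
        rwa [← adjoint_inner_right, hadjpow] at this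
      · intro h u hu
        obtain ⟨e, he, rfl⟩ := hu
        rw [ContinuousLinearMap.coe_coe, ← adjoint_inner_right, hadjpow]
        exact h e he
    constructor
    · intro h
      have h' : ∀ n : ℕ, ((adjoint T') ^ n) x ∈ LinearMap.range (T : H →ₗ[ℂ] H) :=
        fun n => (hmem n).mp (h n)
      -- show x ∈ range T^(n+1) by induction
      have main : ∀ n : ℕ, x ∈ LinearMap.range (T ^ (n + 1) : H →ₗ[ℂ] H) := by
        intro n
        induction n with
        | zero =>
          obtain ⟨y, hy⟩ := h' 0
          refine ⟨y, ?_⟩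
          simpa [pow_one, pow_zero] using hy
        | succ n ih =>
          obtain ⟨w, hw⟩ := ih
          rw [← ContinuousLinearMap.coe_pow, ContinuousLinearMap.coe_coe] at hw
          have hwx : ((adjoint T') ^ (n + 1)) x = w := by
            rw [← hw, ← ContinuousLinearMap.mul_apply, hpow, ContinuousLinearMap.one_apply]
          obtain ⟨v, hv⟩ := h' (n + 1)
          rw [hwx, ContinuousLinearMap.coe_coe] at hv
          refine ⟨v, ?_⟩
          rw [← ContinuousLinearMap.coe_pow, ContinuousLinearMap.coe_coe, pow_succ, ContinuousLinearMap.mul_apply, hv, hw]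
      exact main
    · intro h n
      rw [hmem n]
      obtain ⟨z, hz⟩ := h n
      rw [← ContinuousLinearMap.coe_pow, ContinuousLinearMap.coe_coe] at hz
      have : x = (T ^ n) (T z) := by rw [← ContinuousLinearMap.mul_apply, ← pow_succ, hz]
      rw [this, ← ContinuousLinearMap.mul_apply, hpow, ContinuousLinearMap.one_apply]
      exact ⟨z, rfl⟩
  rw [Submodule.topologicalClosure_eq_top_iff, key]
end

section
/- Let T ∈ B(H) be left invertible and suppose H∞' := ⋂_{n≥1} T'ⁿH is reducing for the Cauchy dual T' (i.e., invariant under both T' and T'*). Then H∞' ⊆ H∞ := ⋂_{n≥1} TⁿH. -/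
open ContinuousLinearMap

local notation "⟪" x ", " y "⟫" => @inner ℂ _ _ x y

/-- Proposition 3.6 of the paper, scalar case: if `H∞' = ⋂ₙ T'ⁿH` is reducing for the
Cauchy dual `T' = T(T*T)⁻¹`, then `H∞' ⊆ H∞ = ⋂ₙ TⁿH`. -/
theorem dual_analytic_core_subset {H : Type*} [NormedAddCommGroup H]
    [InnerProductSpace ℂ H] [CompleteSpace H] (T : H →L[ℂ] H)
    (hbb : ∃ c : ℝ, 0 < c ∧ ∀ h : H, c * ‖h‖ ≤ ‖T h‖)
    (hred : ∀ x ∈ ⨅ n : ℕ,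
        LinearMap.range (((T * Ring.inverse (adjoint T * T)) ^ (n + 1) : H →L[ℂ] H) : H →ₗ[ℂ] H),
      (T * Ring.inverse (adjoint T * T)) x ∈ ⨅ n : ℕ,
        LinearMap.range (((T * Ring.inverse (adjoint T * T)) ^ (n + 1) : H →L[ℂ] H) : H →ₗ[ℂ] H))
    (hred' : ∀ x ∈ ⨅ n : ℕ,
        LinearMap.range (((T * Ring.inverse (adjoint T * T)) ^ (n + 1) : H →L[ℂ] H) : H →ₗ[ℂ] H),
      adjoint (T * Ring.inverse (adjoint T * T)) x ∈ ⨅ n : ℕ,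
        LinearMap.range (((T * Ring.inverse (adjoint T * T)) ^ (n + 1) : H →L[ℂ] H) : H →ₗ[ℂ] H)) :
    (⨅ n : ℕ, LinearMap.range (((T * Ring.inverse (adjoint T * T)) ^ (n + 1) : H →L[ℂ] H) : H →ₗ[ℂ] H)) ≤
      ⨅ n : ℕ, LinearMap.range ((T ^ (n + 1) : H →L[ℂ] H) : H →ₗ[ℂ] H) := by
  obtain ⟨c, hc, hT⟩ := hbb
  set A : H →L[ℂ] H := adjoint T * T with hA_def
  -- T vanishes only at 0
  have hTker : ∀ x : H, T x = 0 → x = 0 := by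
    intro x hx
    have h1 := hT x
    rw [hx, norm_zero] at h1
    have : ‖x‖ = 0 := le_antisymm (by nlinarith [norm_nonneg x]) (norm_nonneg x)
    exact norm_eq_zero.mp this
  -- the key inner product identity
  have hinner : ∀ y : H, ⟪A y, y⟫ = (‖T y‖ : ℂ) ^ 2 := by
    intro y
    have h1 : A y = adjoint T (T y) := rfl
    rw [h1, adjoint_inner_left, inner_self_eq_norm_sq_to_K]
    norm_cast
  -- A is injective
  have hAker : ∀ x : H, A x = 0 → x = 0 := by
    intro x hx
    have h1 : (‖T x‖ : ℂ) ^ 2 = 0 := by rw [← hinner x, hx, inner_zero_left]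
    have h2 : ‖T x‖ = 0 := by
      have := pow_eq_zero_iff (n := 2) (by norm_num) |>.mp h1
      exact_mod_cast this
    exact hTker x (norm_eq_zero.mp h2)
  have hAinj : Function.Injective A := by
    intro x y hxy
    have : A (x - y) = 0 := by rw [map_sub, hxy, sub_self]
    have := hAker _ this
    exact sub_eq_zero.mp this
  -- lower bound for A
  have hAbdd : ∀ x : H, c ^ 2 * ‖x‖ ^ 2 ≤ ‖A x‖ * ‖x‖ := by
    intro x
    have h1 : ‖⟪A x, x⟫‖ ≤ ‖A x‖ * ‖x‖ := norm_inner_le_norm _ _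
    have h2 : ‖⟪A x, x⟫‖ = ‖T x‖ ^ 2 := by
      rw [hinner x]
      rw [show ((‖T x‖ : ℂ) ^ 2) = ((‖T x‖ ^ 2 : ℝ) : ℂ) by push_cast; ring,
        Complex.norm_real]
      exact Real.norm_of_nonneg (by positivity)
    have h3 := hT x
    have h4 := mul_le_mul h3 h3 (by positivity) (norm_nonneg _)
    nlinarith [norm_nonneg x, norm_nonneg (T x)]
  -- A is antilipschitz, hence has closed range
  have hanti : AntilipschitzWith (Real.toNNReal ((c ^ 2)⁻¹)) A := by
    apply ContinuousLinearMap.antilipschitz_of_bound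
    intro x
    rw [Real.coe_toNNReal _ (by positivity)]
    by_cases hx : x = 0
    · simp [hx]
    · have hxn : 0 < ‖x‖ := norm_pos_iff.mpr hx
      have h1 := hAbdd x
      have h2 : c ^ 2 * ‖x‖ ≤ ‖A x‖ := by
        have := mul_le_mul_iff_of_pos_right hxn |>.mp (by nlinarith : (c ^ 2 * ‖x‖) * ‖x‖ ≤ ‖A x‖ * ‖x‖)
        exact this
      calc ‖x‖ = (c ^ 2)⁻¹ * (c ^ 2 * ‖x‖) := by field_simp
        _ ≤ (c ^ 2)⁻¹ * ‖A x‖ := by gcongr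
  have hclosed : IsClosed (LinearMap.range (A : H →ₗ[ℂ] H) : Set H) := by
    rw [LinearMap.coe_range]
    exact hanti.isClosed_range A.uniformContinuous
  haveI : CompleteSpace (LinearMap.range (A : H →ₗ[ℂ] H)) := hclosed.completeSpace_coe
  -- A is surjective
  have horth : (LinearMap.range (A : H →ₗ[ℂ] H))ᗮ = ⊥ := by
    rw [Submodule.eq_bot_iff]
    intro y hy
    have h0 : ⟪A y, y⟫ = 0 :=
      (Submodule.mem_orthogonal _ y).mp hy (A y) (LinearMap.mem_range_self _ y)
    rw [hinner y] at h0
    have h2 : ‖T y‖ = 0 := by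
      have := pow_eq_zero_iff (n := 2) (by norm_num) |>.mp h0
      exact_mod_cast this
    exact hTker y (norm_eq_zero.mp h2)
  have hsurj : LinearMap.range (A : H →ₗ[ℂ] H) = ⊤ := Submodule.orthogonal_eq_bot_iff.mp horth
  have hAunit : IsUnit A := by
    rw [ContinuousLinearMap.isUnit_iff_bijective]
    exact ⟨hAinj, LinearMap.range_eq_top.mp hsurj⟩
  set B : H →L[ℂ] H := Ring.inverse A with hB_def
  have hAB : A * B = 1 := Ring.mul_inverse_cancel A hAunit
  have hBA : B * A = 1 := Ring.inverse_mul_cancel A hAunit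
  set T' : H →L[ℂ] H := T * B with hT'_def
  set K : Submodule ℂ H := ⨅ n : ℕ, LinearMap.range ((T' ^ (n + 1) : H →L[ℂ] H) : H →ₗ[ℂ] H) with hK_def
  -- star facts
  have hAstar : star A = A := by
    rw [hA_def, star_mul, star_eq_adjoint, star_eq_adjoint, adjoint_adjoint]
  have hBstar : star B = B := by
    have h1 : star B * A = 1 := by
      have := congrArg star hAB
      rwa [star_mul, star_one, hAstar] at this
    calc star B = star B * (A * B) := by rw [hAB, mul_one]
      _ = (star B * A) * B := (mul_assoc _ _ _).symm
      _ = B := by rw [h1, one_mul]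
  have hT'adj : adjoint T' = B * adjoint T := by
    rw [← star_eq_adjoint, hT'_def, star_mul, hBstar, star_eq_adjoint]
  have hkey : adjoint T' * T' = B := by
    have h5 : B * adjoint T * (T * B) = B * A * B := by rw [hA_def]; noncomm_ring
    rw [hT'adj, hT'_def, h5, hBA, one_mul]
  -- T' is injective
  have hT'ker : ∀ x : H, T' x = 0 → x = 0 := by
    intro x hx
    have hBx : B x = 0 := by
      calc B x = (adjoint T' * T') x := by rw [hkey]
        _ = adjoint T' (T' x) := rfl
        _ = 0 := by rw [hx, map_zero]
    have h2 : (A * B) x = x := by rw [hAB]; rfl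
    rw [← h2]
    show A (B x) = 0
    rw [hBx, map_zero]
  have hT'inj : ∀ u v : H, T' u = T' v → u = v := by
    intro u v h
    have : T' (u - v) = 0 := by rw [map_sub, h, sub_self]
    exact sub_eq_zero.mp (hT'ker _ this)
  -- every element of K is T' of an element of K
  have hlift : ∀ x ∈ K, ∃ y ∈ K, T' y = x := by
    intro x hx
    have h0 : ∀ n : ℕ, x ∈ LinearMap.range ((T' ^ (n + 1) : H →L[ℂ] H) : H →ₗ[ℂ] H) := fun n =>
      (Submodule.mem_iInf _).mp hx n
    obtain ⟨y, hy⟩ := h0 0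
    rw [pow_one] at hy
    refine ⟨y, ?_, hy⟩
    rw [hK_def, Submodule.mem_iInf]
    intro n
    obtain ⟨z, hz⟩ := h0 (n + 1)
    have h1 : T' ((T' ^ (n + 1)) z) = T' y := by
      simp only [ContinuousLinearMap.coe_coe] at hy hz
      rw [hy, ← hz, ← ContinuousLinearMap.mul_apply, ← pow_succ']
    exact ⟨z, hT'inj _ _ h1⟩
  -- K is closed under B
  have hBK : ∀ x ∈ K, B x ∈ K := by
    intro x hx
    have h1 : B x = adjoint T' (T' x) := by
      calc B x = (adjoint T' * T') x := by rw [hkey]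
        _ = adjoint T' (T' x) := rfl
    rw [h1]
    exact hred' _ (hred _ hx)
  -- every element of K is T of an element of K
  have hstep : ∀ x ∈ K, ∃ z ∈ K, T z = x := by
    intro x hx
    obtain ⟨y, hyK, hyx⟩ := hlift x hx
    refine ⟨B y, hBK y hyK, ?_⟩
    calc T (B y) = (T * B) y := rfl
      _ = x := hyx
  -- main induction
  have main : ∀ n : ℕ, ∀ x ∈ K, ∃ z ∈ K, (T ^ (n + 1)) z = x := by
    intro n
    induction n with
    | zero =>
      intro x hx
      obtain ⟨z, hzK, hz⟩ := hstep x hx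
      exact ⟨z, hzK, by rwa [pow_one]⟩
    | succ n ih =>
      intro x hx
      obtain ⟨z, hzK, hz⟩ := hstep x hx
      obtain ⟨w, hwK, hw⟩ := ih z hzK
      refine ⟨w, hwK, ?_⟩
      calc (T ^ (n + 2)) w = T ((T ^ (n + 1)) w) := by
            rw [← ContinuousLinearMap.mul_apply, ← pow_succ']
        _ = x := by rw [hw, hz]
  intro x hx
  rw [Submodule.mem_iInf]
  intro n
  obtain ⟨z, _, hz⟩ := main n x hx
  exact ⟨z, hz⟩
end

section
/- Let T ∈ B(H) satisfy the Shimorin inequality ‖Tζ + κ‖² ≤ 2(‖ζ‖² + ‖Tκ‖²) for all ζ, κ ∈ H. Then T is left invertible and satisfies the operator inequality T T* + (T*T)⁻¹ ≤ 2I. -/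
open ContinuousLinearMap

/-- From the proof of Theorem 3.9 of the paper, scalar case: the Shimorin inequality
implies that `T` is left invertible and `TT* + (T*T)⁻¹ ≤ 2I`. -/
theorem shimorin_inequality_consequence {H : Type*} [NormedAddCommGroup H]
    [InnerProductSpace ℂ H] [CompleteSpace H] (T : H →L[ℂ] H)
    (hshim : ∀ ζ κ : H, ‖T ζ + κ‖ ^ 2 ≤ 2 * (‖ζ‖ ^ 2 + ‖T κ‖ ^ 2)) :
    (∃ c : ℝ, 0 < c ∧ ∀ h : H, c * ‖h‖ ≤ ‖T h‖) ∧
    ((2 : ℂ) • (1 : H →L[ℂ] H) -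
      (T * adjoint T + Ring.inverse (adjoint T * T))).IsPositive := by
  have hT2 : ∀ κ : H, ‖κ‖ ^ 2 ≤ 2 * ‖T κ‖ ^ 2 := by
    intro κ; simpa using hshim 0 κ
  set S : H →L[ℂ] H := adjoint T * T with hSdef
  have hSx : ∀ x : H, (inner ℂ (S x) x : ℂ) = ((‖T x‖ : ℂ)) ^ 2 := by
    intro x
    rw [hSdef, ContinuousLinearMap.mul_apply, adjoint_inner_left, inner_self_eq_norm_sq_to_K]
    norm_cast
  have hUnit : IsUnit S := by
    apply isUnit_of_forall_le_norm_inner_map S (c := (1/2 : NNReal)) (by norm_num)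
    intro x
    rw [hSx]
    have h1 := hT2 x
    have h2 : ‖((‖T x‖ : ℂ)) ^ 2‖ = ‖T x‖ ^ 2 := by
      rw [norm_pow, Complex.norm_real, Real.norm_eq_abs, abs_of_nonneg (norm_nonneg _)]
    rw [h2]
    push_cast
    linarith
  set R : H →L[ℂ] H := Ring.inverse S with hRdef
  have hSR : S * R = 1 := Ring.mul_inverse_cancel S hUnit
  have hSsa : IsSelfAdjoint S := by
    rw [hSdef, ← star_eq_adjoint]; exact IsSelfAdjoint.star_mul_self T
  have hRsa : IsSelfAdjoint R := by
    rw [hRdef, IsSelfAdjoint, ← Ring.inverse_star, hSsa.star_eq]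
  have hA : IsSelfAdjoint (T * adjoint T) := by
    rw [← star_eq_adjoint]; exact IsSelfAdjoint.mul_star_self T
  constructor
  · refine ⟨1/2, by norm_num, fun h => ?_⟩
    have := hT2 h
    nlinarith [norm_nonneg (T h), norm_nonneg h]
  · refine ⟨?_, fun x => ?_⟩
    · have h1 : IsSelfAdjoint ((2 : ℂ) • (1 : H →L[ℂ] H)) := by
        exact IsSelfAdjoint.smul (by simp [IsSelfAdjoint, Complex.star_def]) (.one _)
      exact (h1.sub (hA.add hRsa)).isSymmetric
    · set ζ : H := adjoint T x with hζ
      set κ : H := R x with hκ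
      have hxS : S κ = x := by
        rw [hκ, ← ContinuousLinearMap.mul_apply, hSR, ContinuousLinearMap.one_apply]
      have hTζ : (inner ℂ (T ζ) x : ℂ) = ((‖ζ‖ : ℂ)) ^ 2 := by
        rw [← adjoint_inner_right, ← hζ, inner_self_eq_norm_sq_to_K]
        norm_cast
      have hκx : (inner ℂ κ x : ℂ) = ((‖T κ‖ : ℂ)) ^ 2 := by
        rw [← hxS, hSdef, ContinuousLinearMap.mul_apply, adjoint_inner_right, inner_self_eq_norm_sq_to_K]
        norm_cast
      have hRx : (inner ℂ (R x) x : ℂ) = ((‖T κ‖ : ℂ)) ^ 2 := by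
        rw [← hκ]; exact hκx
      have hsum : (inner ℂ (T ζ + κ) x : ℂ) = ((‖ζ‖^2 + ‖T κ‖^2 : ℝ) : ℂ) := by
        rw [inner_add_left, hTζ, hκx]; push_cast; ring
      have hre : Complex.re (inner ℂ (T ζ + κ) x : ℂ) = ‖ζ‖^2 + ‖T κ‖^2 := by
        rw [hsum, Complex.ofReal_re]
      have h4 : ‖ζ‖^2 + ‖T κ‖^2 ≤ ‖T ζ + κ‖ * ‖x‖ := by
        rw [← hre]
        exact re_inner_le_norm (𝕜 := ℂ) _ _
      have h5 := hshim ζ κ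
      have ha : (0:ℝ) ≤ ‖ζ‖^2 + ‖T κ‖^2 := by positivity
      have key : ‖ζ‖^2 + ‖T κ‖^2 ≤ 2 * ‖x‖^2 := by
        nlinarith [mul_le_mul h4 h4 ha (mul_nonneg (norm_nonneg _) (norm_nonneg _)),
          norm_nonneg x, norm_nonneg (T ζ + κ), sq_nonneg (‖T ζ + κ‖ - ‖x‖)]
      rw [reApplyInnerSelf]
      have happ : ((2 : ℂ) • (1 : H →L[ℂ] H) - (T * adjoint T + R)) x
          = (2 : ℂ) • x - (T ζ + R x) := by
        simp [ContinuousLinearMap.sub_apply, ContinuousLinearMap.add_apply, ContinuousLinearMap.mul_apply, hζ]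
      rw [happ]
      have hTT : (inner ℂ (T ζ) x : ℂ) = ((‖ζ‖ : ℂ)) ^ 2 := hTζ
      rw [inner_sub_left, inner_add_left, inner_smul_left, hTT, hRx,
        inner_self_eq_norm_sq_to_K]
      have hgoal : (0:ℝ) ≤ 2 * ‖x‖ ^ 2 - (‖ζ‖ ^ 2 + ‖T κ‖ ^ 2) := by linarith [key]
      simpa [← Complex.ofReal_pow] using hgoal
end

section
/- (Wandering subspace theorem for Shimorin operators) Let T ∈ B(H) be analytic (⋂_{n≥1} TⁿH = {0}) and satisfy ‖Tζ + κ‖² ≤ 2(‖ζ‖² + ‖Tκ‖²) for all ζ, κ ∈ H. Then H = ⋁_{n≥0} Tⁿ(ker T*). -/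
open ContinuousLinearMap

section ShimorinDevelopment

open RCLike


variable {H : Type*} [NormedAddCommGroup H] [InnerProductSpace ℂ H] [CompleteSpace H]

local notation "⟪" x ", " y "⟫" => @inner ℂ _ _ x y

/-- Cauchy-Schwarz for the semi-inner product induced by a positive operator. -/
lemma sw_cs (Z : H →L[ℂ] H) (hZ : ∀ x y : H, ⟪Z x, y⟫ = ⟪x, Z y⟫)
    (hpos : ∀ x : H, 0 ≤ re ⟪Z x, x⟫) (u v : H) :
    (re ⟪Z u, v⟫) ^ 2 ≤ re ⟪Z u, u⟫ * re ⟪Z v, v⟫ := by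
  have key : ∀ s : ℝ, 0 ≤ re ⟪Z v, v⟫ * (s * s) + (2 * re ⟪Z u, v⟫) * s + re ⟪Z u, u⟫ := by
    intro s
    have h0 := hpos (u + (s : ℂ) • v)
    have hexp : ⟪Z (u + (s:ℂ) • v), u + (s:ℂ) • v⟫
        = ⟪Z u, u⟫ + (s:ℂ) * ⟪Z u, v⟫ + (starRingEnd ℂ) (s:ℂ) * ⟪Z v, u⟫
          + (starRingEnd ℂ) (s:ℂ) * ((s:ℂ) * ⟪Z v, v⟫) := by
      rw [map_add, map_smul, inner_add_left, inner_add_right, inner_add_right,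
        inner_smul_left, inner_smul_right, inner_smul_left, inner_smul_right]
      ring
    have hvu : ⟪Z v, u⟫ = (starRingEnd ℂ) ⟪Z u, v⟫ := by
      rw [hZ v u, ← inner_conj_symm]
    rw [hexp, hvu, Complex.conj_ofReal] at h0
    simp only [RCLike.re_to_complex, Complex.add_re, Complex.mul_re, Complex.ofReal_re,
      Complex.ofReal_im, Complex.conj_re, Complex.conj_im] at h0 ⊢
    nlinarith [h0]
  have := discrim_le_zero key
  rw [discrim] at this
  nlinarith [this]

/-- A self-adjoint operator bounded below by a positive constant has a (two-sided) inverse. -/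
lemma sw_inv (P : H →L[ℂ] H) (hP : ∀ x y : H, ⟪P x, y⟫ = ⟪x, P y⟫) {c : ℝ} (hc : 0 < c)
    (hlow : ∀ f : H, c * ‖f‖ ^ 2 ≤ re ⟪P f, f⟫) :
    ∃ Q : H →L[ℂ] H, (∀ x, P (Q x) = x) ∧ (∀ x, Q (P x) = x) := by
  have hnorm : ∀ f : H, c * ‖f‖ ≤ ‖P f‖ := by
    intro f
    rcases eq_or_ne f 0 with rfl | hf
    · simp
    have h1 : c * ‖f‖ ^ 2 ≤ ‖P f‖ * ‖f‖ := by
      refine (hlow f).trans ?_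
      calc re ⟪P f, f⟫ ≤ ‖⟪P f, f⟫‖ := re_le_norm _
        _ ≤ ‖P f‖ * ‖f‖ := norm_inner_le_norm _ _
    have hf' : 0 < ‖f‖ := norm_pos_iff.mpr hf
    have : (c * ‖f‖) * ‖f‖ ≤ ‖P f‖ * ‖f‖ := by nlinarith
    exact le_of_mul_le_mul_right this hf'
  have hbound : ∀ x, ‖x‖ ≤ ((⟨c⁻¹, (inv_pos.mpr hc).le⟩ : NNReal) : ℝ) * ‖P x‖ := by
    intro x
    show ‖x‖ ≤ c⁻¹ * ‖P x‖
    have := hnorm x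
    rw [inv_mul_eq_div, le_div_iff₀ hc]
    nlinarith [this]
  have hanti : AntilipschitzWith _ ⇑P := P.antilipschitz_of_bound hbound
  have hker : LinearMap.ker (P : H →ₗ[ℂ] H) = ⊥ := LinearMap.ker_eq_bot_of_injective hanti.injective
  have hclosed : IsClosed (Set.range (⇑P)) := hanti.isClosed_range P.uniformContinuous
  have hrange : LinearMap.range (P : H →ₗ[ℂ] H) = ⊤ := by
    have hdense : (LinearMap.range (P : H →ₗ[ℂ] H)).topologicalClosure = ⊤ := by
      rw [Submodule.topologicalClosure_eq_top_iff, Submodule.eq_bot_iff]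
      intro y hy
      have h0 : ⟪P y, y⟫ = 0 := by
        have := (Submodule.mem_orthogonal _ y).mp hy (P y) (LinearMap.mem_range_self _ y)
        exact this
      have := hlow y
      rw [h0] at this
      simp only [map_zero] at this
      have hy2 : ‖y‖ ^ 2 ≤ 0 := by nlinarith [this]
      have h2 : ‖y‖ ^ 2 = 0 := le_antisymm hy2 (sq_nonneg _)
      exact norm_eq_zero.mp (pow_eq_zero_iff two_ne_zero |>.mp h2)
    have hcl : (LinearMap.range (P : H →ₗ[ℂ] H)).topologicalClosure = LinearMap.range (P : H →ₗ[ℂ] H) := by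
      apply IsClosed.submodule_topologicalClosure_eq
      exact (LinearMap.coe_range (P : H →ₗ[ℂ] H) (M₂ := H)) ▸ hclosed
    rw [← hcl, hdense]
  refine ⟨(ContinuousLinearEquiv.ofBijective P hker hrange).symm, ?_, ?_⟩
  · intro x
    exact (ContinuousLinearEquiv.ofBijective P hker hrange).apply_symm_apply x
  · intro x
    exact ContinuousLinearEquiv.ofBijective_symm_apply_apply P hker hrange x

section seq

/-- increments of a concave sequence are nonincreasing -/
lemma sw_nat_incr (c : ℕ → ℝ) (hconc : ∀ n, c n + c (n + 2) ≤ 2 * c (n + 1)) :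
    ∀ n, c (n + 1) - c n ≤ c 1 - c 0 := by
  intro n
  induction n with
  | zero => simp
  | succ k ih => have := hconc k; linarith

lemma sw_nat_growth (c : ℕ → ℝ) (hconc : ∀ n, c n + c (n + 2) ≤ 2 * c (n + 1)) :
    ∀ n, c n ≤ c 0 + n * (c 1 - c 0) := by
  intro n
  induction n with
  | zero => simp
  | succ k ih =>
      have := sw_nat_incr c hconc k
      push_cast
      push_cast at ih
      linarith

lemma sw_int_incr (c : ℤ → ℝ) (hconc : ∀ m, c m + c (m + 2) ≤ 2 * c (m + 1)) :
    ∀ (m : ℤ) (k : ℕ), c (m + k + 1) - c (m + k) ≤ c (m + 1) - c m := by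
  intro m k
  induction k with
  | zero => simp
  | succ j ih =>
      have := hconc (m + j)
      have h1 : (m + (j+1 : ℕ) + 1 : ℤ) = m + j + 2 := by push_cast; ring
      have h2 : (m + (j+1 : ℕ) : ℤ) = m + j + 1 := by push_cast; ring
      rw [h1, h2]
      linarith

lemma sw_int_const (c : ℤ → ℝ) (h0 : ∀ m, 0 ≤ c m) (hconc : ∀ m, c m + c (m + 2) ≤ 2 * c (m + 1)) :
    ∀ m, c m = c 0 := by
  have he : ∀ m : ℤ, c (m + 1) - c m = 0 := by
    intro m
    -- upper bound on forward orbit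
    have hup : ∀ k : ℕ, c (m + k) ≤ c m + k * (c (m + 1) - c m) := by
      intro k
      induction k with
      | zero => simp
      | succ j ih =>
          have := sw_int_incr c hconc m j
          have h1 : (m + (j+1:ℕ) : ℤ) = m + j + 1 := by push_cast; ring
          rw [h1]
          push_cast
          linarith
    -- lower bound: k * e m ≤ c (m+1) - c (m+1-k)
    have hlo : ∀ k : ℕ, k * (c (m + 1) - c m) ≤ c (m + 1) - c (m + 1 - k) := by
      intro k
      induction k with
      | zero => simp
      | succ j ih =>
          have hkey : c (m + 1) - c m ≤ c (m - j + 1) - c (m - j) := by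
            have := sw_int_incr c hconc (m - j) j
            have h1 : (m - j + j + 1 : ℤ) = m + 1 := by ring
            have h2 : (m - j + j : ℤ) = m := by ring
            rw [h1, h2] at this
            linarith
          have h3 : (m + 1 - ((j:ℕ)+1:ℕ) : ℤ) = m - j := by push_cast; ring
          have h4 : (m + 1 - (j:ℕ) : ℤ) = m - j + 1 := by push_cast; ring
          rw [h3]
          rw [h4] at ih
          push_cast
          linarith
    -- e m ≤ 0
    have hneg : c (m + 1) - c m ≤ 0 := by
      by_contra hpos
      push_neg at hpos
      obtain ⟨k, hk⟩ := exists_nat_gt (c (m + 1) / (c (m + 1) - c m))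
      have h1 := hlo k
      have h2 := h0 (m + 1 - k)
      have h3 : c (m + 1) / (c (m + 1) - c m) * (c (m + 1) - c m) < k * (c (m + 1) - c m) :=
        (mul_lt_mul_iff_left₀ hpos).mpr hk
      rw [div_mul_cancel₀ _ (ne_of_gt hpos)] at h3
      linarith
    -- e m ≥ 0
    have hpos : 0 ≤ c (m + 1) - c m := by
      by_contra hneg'
      push_neg at hneg'
      obtain ⟨k, hk⟩ := exists_nat_gt (c m / (-(c (m + 1) - c m)))
      have h1 := hup k
      have h2 := h0 (m + k)
      have h3 : c m / (-(c (m + 1) - c m)) * (-(c (m + 1) - c m)) < k * (-(c (m + 1) - c m)) := by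
        apply (mul_lt_mul_iff_left₀ (by linarith)).mpr hk
      rw [div_mul_cancel₀ _ (by linarith : -(c (m + 1) - c m) ≠ 0)] at h3
      nlinarith
    linarith
  -- conclude constancy
  intro m
  induction m using Int.induction_on with
  | zero => rfl
  | succ k ih => have := he k; push_cast at *; linarith
  | pred k ih =>
      have := he (-(k:ℤ) - 1)
      have h1 : (-(k:ℤ) - 1 + 1) = -(k:ℤ) := by ring
      rw [h1] at this
      linarith

end seq

lemma sw_resymm (x y : H) : re ⟪x, y⟫ = re ⟪y, x⟫ := by
  rw [← inner_conj_symm x y, RCLike.conj_re]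

/-- If σ + 2 re(t δ) ≤ 0 for all complex t, then δ = 0. -/
lemma sw_re_zero (σ : ℝ) (δ : ℂ) (h : ∀ t : ℂ, σ + 2 * (t * δ).re ≤ 0) : δ = 0 := by
  by_contra hδ
  have hnsq : 0 < Complex.normSq δ := Complex.normSq_pos.mpr hδ
  set s : ℝ := (|σ| + 1) / (2 * Complex.normSq δ) with hs
  have hspos : 0 < s := by positivity
  have := h ((s : ℂ) * (starRingEnd ℂ) δ)
  have hc : (starRingEnd ℂ) δ * δ = (Complex.normSq δ : ℂ) := by
    rw [mul_comm, Complex.mul_conj]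
  rw [mul_assoc, hc, ← Complex.ofReal_mul, Complex.ofReal_re] at this
  have hsn : s * Complex.normSq δ = (|σ| + 1) / 2 := by
    rw [hs]; field_simp
  rw [hsn] at this
  have := neg_abs_le σ
  linarith

/-- second difference zero implies arithmetic progression -/
lemma sw_lin (m : ℕ → ℂ) (h : ∀ j, m j + m (j + 2) = 2 * m (j + 1)) :
    ∀ j, m j = m 0 + j * (m 1 - m 0) := by
  have hstep : ∀ j, m (j + 1) - m j = m 1 - m 0 := by
    intro j
    induction j with
    | zero => simp
    | succ k ih => have := h k; rw [← ih]; ring_nf; ring_nf at this ⊢; linear_combination this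
  intro j
  induction j with
  | zero => simp
  | succ k ih =>
      have := hstep k
      push_cast
      linear_combination ih + this

/-- quadratic growth beats linear growth -/
lemma sw_kill (d : ℂ) (a b : ℝ) (h : ∀ j : ℕ, (j : ℝ) ^ 2 * ‖d‖ ^ 2 ≤ a + j * b) : d = 0 := by
  by_contra hd
  have hpos : 0 < ‖d‖ ^ 2 := pow_pos (norm_pos_iff.mpr hd) 2
  obtain ⟨j, hj⟩ := exists_nat_gt (max 1 ((|a| + |b|) / ‖d‖ ^ 2))
  have hj1 : (1 : ℝ) ≤ j := le_of_lt (lt_of_le_of_lt (le_max_left _ _) hj)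
  have hj2 : (|a| + |b|) / ‖d‖ ^ 2 < j := lt_of_le_of_lt (le_max_right _ _) hj
  have h1 := h j
  have habs : a + j * b ≤ |a| + j * |b| := by
    have : (j:ℝ) * b ≤ j * |b| := by
      apply mul_le_mul_of_nonneg_left (le_abs_self b) (by linarith)
    linarith [le_abs_self a]
  have h2 : (j:ℝ) ^ 2 * ‖d‖ ^ 2 ≤ j * (|a| + |b|) := by
    have : |a| ≤ (j:ℝ) * |a| := le_mul_of_one_le_left (abs_nonneg a) hj1
    nlinarith
  have h3 : (j:ℝ) * ‖d‖ ^ 2 ≤ |a| + |b| := by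
    have hjpos : (0:ℝ) < j := by linarith
    nlinarith
  rw [div_lt_iff₀ hpos] at hj2
  linarith

/-- variational lower bound for the inverse of a positive operator -/
lemma sw_inv_bound (P Pinv : H →L[ℂ] H) (hPsa : ∀ x y : H, ⟪P x, y⟫ = ⟪x, P y⟫)
    (hPpos : ∀ x : H, 0 ≤ re ⟪P x, x⟫) (hPP : ∀ x, P (Pinv x) = x) (f g : H) :
    2 * re ⟪f, g⟫ - re ⟪P g, g⟫ ≤ re ⟪Pinv f, f⟫ := by
  have h0 := hPpos (g - Pinv f)
  have hexp : ⟪P (g - Pinv f), g - Pinv f⟫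
      = ⟪P g, g⟫ - ⟪g, f⟫ - ⟪f, g⟫ + ⟪f, Pinv f⟫ := by
    rw [map_sub, inner_sub_left, inner_sub_right, inner_sub_right, hPP,
      hPsa g (Pinv f), hPP]
    ring
  rw [hexp] at h0
  simp only [map_sub, map_add] at h0
  have h1 := sw_resymm g f
  have h2 := sw_resymm f (Pinv f)
  linarith

lemma sw_closed_range (P : H →L[ℂ] H) {c : ℝ} (hc : 0 < c) (h : ∀ f, c * ‖f‖ ≤ ‖P f‖) :
    IsClosed (Set.range ⇑P) := by
  have hbound : ∀ x, ‖x‖ ≤ ((⟨c⁻¹, (inv_pos.mpr hc).le⟩ : NNReal) : ℝ) * ‖P x‖ := by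
    intro x
    show ‖x‖ ≤ c⁻¹ * ‖P x‖
    have := h x
    rw [inv_mul_eq_div, le_div_iff₀ hc]
    nlinarith [this]
  exact (P.antilipschitz_of_bound hbound).isClosed_range P.uniformContinuous

/-- the duality lemma relating orthogonality to iterated wandering vectors and
ranges of powers of the dual operator -/
lemma sw_dual (U W : H →L[ℂ] H) (E : Submodule ℂ H)
    (hadj : ∀ v, adjoint W (U v) = v)
    (hWE : ∀ e ∈ E, adjoint W e = 0)
    (hrange : ∀ x : H, (∀ e ∈ E, ⟪e, x⟫ = 0) ↔ x ∈ LinearMap.range (W : H →ₗ[ℂ] H)) :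
    ∀ (n : ℕ) (x : H),
      (∀ k ≤ n, ∀ e ∈ E, ⟪(U ^ k) e, x⟫ = 0) ↔ x ∈ LinearMap.range ((W ^ (n + 1) : H →L[ℂ] H) : H →ₗ[ℂ] H) := by
  intro n
  induction n with
  | zero =>
      intro x
      constructor
      · intro hx
        rw [pow_one]
        exact (hrange x).mp (fun e he => by simpa using hx 0 le_rfl e he)
      · intro hx k hk e he
        interval_cases k
        rw [pow_one] at hx
        simpa using (hrange x).mpr hx e he
  | succ n ih =>
      intro x
      constructor
      · intro hx
        have hx0 : x ∈ LinearMap.range (W : H →ₗ[ℂ] H) :=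
          (hrange x).mp (fun e he => by simpa using hx 0 (Nat.zero_le _) e he)
        obtain ⟨y, hy⟩ := hx0
        rw [ContinuousLinearMap.coe_coe] at hy
        have hy' : ∀ k ≤ n, ∀ e ∈ E, ⟪(U ^ k) e, y⟫ = 0 := by
          intro k hk e he
          have h1 : ⟪(U ^ (k + 1)) e, x⟫ = 0 := hx (k + 1) (by omega) e he
          rw [← hy] at h1
          rw [← adjoint_inner_left W] at h1
          rw [pow_succ'] at h1
          rw [ContinuousLinearMap.mul_apply, hadj] at h1
          exact h1
        obtain ⟨z, hz⟩ := (ih y).mp hy'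
        refine ⟨z, ?_⟩
        rw [ContinuousLinearMap.coe_coe] at hz
        rw [ContinuousLinearMap.coe_coe, pow_succ', ContinuousLinearMap.mul_apply, hz, hy]
      · rintro ⟨z, rfl⟩
        simp only [ContinuousLinearMap.coe_coe]
        have hxW : (W ^ (n + 1 + 1)) z ∈ LinearMap.range (W : H →ₗ[ℂ] H) := by
          rw [pow_succ', ContinuousLinearMap.mul_apply]
          exact ⟨_, rfl⟩
        have hy' : ∀ k ≤ n, ∀ e ∈ E, ⟪(U ^ k) e, (W ^ (n+1)) z⟫ = 0 :=
          (ih _).mpr ⟨z, rfl⟩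
        intro k hk e he
        match k with
        | 0 =>
            simpa using (hrange _).mpr hxW e he
        | (j + 1) =>
            have hj : j ≤ n := by omega
            rw [pow_succ' W, ContinuousLinearMap.mul_apply, ← adjoint_inner_left W,
              pow_succ' U, ContinuousLinearMap.mul_apply, hadj]
            exact hy' j hj e he

/-- the key orthogonality argument: if `S` is concave and `x` lies in all ranges of powers
of `S`, then `x` is orthogonal to all `S^k e` for wandering vectors `e`. -/
lemma sw_orth (S : H →L[ℂ] H)
    (hconc : ∀ h : H, ‖S (S h)‖ ^ 2 + ‖h‖ ^ 2 ≤ 2 * ‖S h‖ ^ 2)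
    (hSinj : Function.Injective ⇑S) (x : H) (hxR : ∀ n : ℕ, ∃ y, (S ^ n) y = x)
    (e : H) (he0 : adjoint S e = 0) : ∀ k : ℕ, ⟪(S ^ k) e, x⟫ = 0 := by
  classical
  have hpow_apply : ∀ (n : ℕ) (z : H), (S ^ (n + 1)) z = S ((S ^ n) z) := by
    intro n z
    rw [pow_succ', ContinuousLinearMap.mul_apply]
  have hpow_apply' : ∀ (n : ℕ) (z : H), (S ^ (n + 1)) z = (S ^ n) (S z) := by
    intro n z
    rw [pow_succ, ContinuousLinearMap.mul_apply]
  have hSpow_inj : ∀ n : ℕ, Function.Injective ⇑(S ^ n) := by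
    intro n
    induction n with
    | zero => simpa [pow_zero] using Function.injective_id
    | succ m ih =>
        intro a b hab
        rw [hpow_apply, hpow_apply] at hab
        exact ih (hSinj hab)
  set y : ℕ → H := fun n => Classical.choose (hxR n) with hydef
  have hy : ∀ n, (S ^ n) (y n) = x := fun n => Classical.choose_spec (hxR n)
  have hy0 : y 0 = x := by have := hy 0; simpa using this
  have hyS : ∀ n, S (y (n + 1)) = y n := by
    intro n
    apply hSpow_inj n
    rw [← hpow_apply', hy, hy]
  set u : ℤ → H := fun m => if 0 ≤ m then y m.toNat else (S ^ (-m).toNat) x with hudef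
  have hu0 : u 0 = x := by simp [hudef, hy0]
  have hu : ∀ m : ℤ, S (u (m + 1)) = u m := by
    intro m
    rcases le_or_gt 0 m with hm | hm
    · have h1 : (0:ℤ) ≤ m + 1 := by omega
      have h2 : (m + 1).toNat = m.toNat + 1 := by omega
      simp only [hudef, if_pos hm, if_pos h1, h2]
      exact hyS m.toNat
    · rcases eq_or_lt_of_le (by omega : m + 1 ≤ 0) with h1 | h1
      · have hm1 : m = -1 := by omega
        subst hm1
        have h01 : (0:ℤ) ≤ -1 + 1 := by norm_num
        have hn1 : ¬ (0:ℤ) ≤ (-1:ℤ) := by norm_num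
        simp only [hudef, if_pos h01, if_neg hn1]
        rw [show ((-1:ℤ)+1).toNat = 0 from rfl, hy0,
          show (-(-1:ℤ)).toNat = 1 from rfl, pow_one]
      · have h2 : ¬ (0:ℤ) ≤ m + 1 := by omega
        have h3 : ¬ (0:ℤ) ≤ m := by omega
        simp only [hudef, if_neg h2, if_neg h3]
        have h4 : (-m).toNat = (-(m+1)).toNat + 1 := by omega
        rw [h4, hpow_apply]
  have hSu : ∀ (j : ℕ) (m : ℤ), (S ^ j) (u m) = u (m - j) := by
    intro j
    induction j with
    | zero => intro m; simp
    | succ n ih =>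
        intro m
        rw [hpow_apply, ih m]
        have := hu (m - n - 1)
        rw [show (m - n - 1 + 1 : ℤ) = m - n from by ring] at this
        rw [this]
        congr 1
        push_cast
        ring
  -- norms along the orbit are constant
  have hcconst : ∀ m : ℤ, ‖u m‖ ^ 2 = ‖x‖ ^ 2 := by
    have h0 : ∀ m : ℤ, 0 ≤ ‖u m‖ ^ 2 := fun m => sq_nonneg _
    have hcc : ∀ m : ℤ, ‖u m‖ ^ 2 + ‖u (m + 2)‖ ^ 2 ≤ 2 * ‖u (m + 1)‖ ^ 2 := by
      intro m
      have := hconc (u (m + 2))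
      rw [show S (u (m+2)) = u (m+1) from by
            have := hu (m+1); rwa [show (m+1+1:ℤ) = m+2 from by ring] at this] at this
      rw [hu m] at this
      linarith
    intro m
    have := sw_int_const (fun m => ‖u m‖ ^ 2) h0 hcc m
    simpa [hu0] using this
  intro k
  -- the vector w and its constancy
  set w : H := u (k + 1) with hwdef
  have hw : (S ^ (k + 1)) w = x := by
    rw [hwdef, hSu]
    norm_num [hu0]
  have hnormSw : ∀ j : ℕ, ‖(S ^ (j + 1)) w‖ ^ 2 = ‖x‖ ^ 2 := by
    intro j
    rw [hwdef, hSu]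
    exact hcconst _
  set ce : ℕ → ℝ := fun j => ‖(S ^ j) e‖ ^ 2 with hcedef
  have hconcN : ∀ j, ce j + ce (j + 2) ≤ 2 * ce (j + 1) := by
    intro j
    have hcv := hconc ((S ^ j) e)
    have e1 : S ((S^j) e) = (S^(j+1)) e := (hpow_apply j e).symm
    have e2 : S (S ((S^j) e)) = (S^(j+2)) e := by rw [e1]; exact (hpow_apply (j+1) e).symm
    rw [e2, e1] at hcv
    simp only [hcedef]
    linarith
  set mseq : ℕ → ℂ := fun j => ⟪(S ^ j) e, (S ^ (j + 1)) w⟫ with hmdef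
  have hdelta : ∀ j, mseq j + mseq (j + 2) = 2 * mseq (j + 1) := by
    intro j
    have hz : mseq j + mseq (j + 2) - 2 * mseq (j + 1) = 0 := by
      apply sw_re_zero (ce j + ce (j + 2) - 2 * ce (j + 1))
      intro t
      have hcv := hconc ((S ^ j) (e + t • S w))
      have hexp : ∀ i : ℕ, (S ^ i) (e + t • S w) = (S ^ i) e + t • (S ^ (i + 1)) w := by
        intro i
        rw [map_add, map_smul, ← hpow_apply']
      have e1 : S ((S^j) (e + t • S w)) = (S^(j+1)) (e + t • S w) := (hpow_apply j _).symm
      have e2 : S (S ((S^j) (e + t • S w))) = (S^(j+2)) (e + t • S w) := by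
        rw [e1]; exact (hpow_apply (j+1) _).symm
      rw [e2, e1, hexp, hexp, hexp] at hcv
      have hns : ∀ i : ℕ, ‖(S ^ i) e + t • (S ^ (i + 1)) w‖ ^ 2
          = ce i + 2 * (t * mseq i).re + ‖t‖ ^ 2 * ‖x‖ ^ 2 := by
        intro i
        rw [norm_add_sq (𝕜 := ℂ), inner_smul_right, norm_smul]
        rw [mul_pow, hnormSw i]
        rfl
      rw [hns, hns, hns] at hcv
      have : (t * (mseq j + mseq (j + 2) - 2 * mseq (j + 1))).re
          = (t * mseq j).re + (t * mseq (j+2)).re - 2 * (t * mseq (j+1)).re := by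
        rw [mul_sub, mul_add, mul_comm 2 (mseq (j+1)), ← mul_assoc]
        simp [Complex.sub_re, Complex.add_re, Complex.mul_re]
        ring
      rw [this]
      linarith
    linear_combination hz
  have hlin := sw_lin mseq hdelta
  have hm0 : mseq 0 = 0 := by
    rw [hmdef]
    simp only [pow_zero, ContinuousLinearMap.one_apply, zero_add, pow_one]
    rw [← adjoint_inner_left S, he0, inner_zero_left]
  have hm1 : mseq 1 = 0 := by
    apply sw_kill (mseq 1) (ce 0 * ‖x‖ ^ 2) ((ce 1 - ce 0) * ‖x‖ ^ 2)
    intro j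
    have hgrow : ‖mseq j‖ ^ 2 ≤ ce j * ‖x‖ ^ 2 := by
      have h1 : ‖mseq j‖ ≤ ‖(S ^ j) e‖ * ‖(S ^ (j + 1)) w‖ := norm_inner_le_norm _ _
      have h2 : (‖(S ^ j) e‖ * ‖(S ^ (j + 1)) w‖) ^ 2 = ce j * ‖x‖ ^ 2 := by
        rw [mul_pow, hnormSw j]
      rw [← h2]
      exact pow_le_pow_left₀ (norm_nonneg _) h1 2
    have hmj : mseq j = j * mseq 1 := by
      rw [hlin j, hm0]
      ring
    rw [hmj] at hgrow
    have h3 : ‖(j : ℂ) * mseq 1‖ ^ 2 = (j:ℝ) ^ 2 * ‖mseq 1‖ ^ 2 := by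
      rw [norm_mul, mul_pow]
      norm_num
    rw [h3] at hgrow
    have h4 := sw_nat_growth ce hconcN j
    nlinarith [sq_nonneg ‖x‖, sq_nonneg ((j:ℝ))]
  have : mseq k = 0 := by
    rw [hlin k, hm0, hm1]
    ring
  rw [hmdef] at this
  simp only at this
  rwa [hw] at this

lemma sw_re_smul (r : ℝ) (z : ℂ) : re (((r:ℝ):ℂ) * z) = r * re z := by
  simp

lemma sw_inv_sa (P Pinv : H →L[ℂ] H) (hPsa : ∀ x y : H, ⟪P x, y⟫ = ⟪x, P y⟫)
    (hPP : ∀ x, P (Pinv x) = x) : ∀ x y : H, ⟪Pinv x, y⟫ = ⟪x, Pinv y⟫ := by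
  intro x y
  calc ⟪Pinv x, y⟫ = ⟪Pinv x, P (Pinv y)⟫ := by rw [hPP]
    _ = ⟪P (Pinv x), Pinv y⟫ := (hPsa _ _).symm
    _ = ⟪x, Pinv y⟫ := by rw [hPP]

lemma sw_inv_pos (P Pinv : H →L[ℂ] H) (hPsa : ∀ x y : H, ⟪P x, y⟫ = ⟪x, P y⟫)
    (hPP : ∀ x, P (Pinv x) = x) (hPpos : ∀ x : H, 0 ≤ re ⟪P x, x⟫) :
    ∀ f : H, 0 ≤ re ⟪Pinv f, f⟫ := by
  intro f
  have h1 : ⟪Pinv f, f⟫ = ⟪P (Pinv f), Pinv f⟫ := by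
    nth_rewrite 2 [← hPP f]
    exact (hPsa _ _).symm
  rw [h1]
  exact hPpos _

lemma sw_inner_ofReal_smul_left (r : ℝ) (x y : H) :
    ⟪((r : ℝ) : ℂ) • x, y⟫ = ((r : ℝ) : ℂ) * ⟪x, y⟫ := by
  rw [inner_smul_left, Complex.conj_ofReal]

lemma sw_re_inner_smul_left (r : ℝ) (x y : H) :
    re ⟪((r : ℝ) : ℂ) • x, y⟫ = r * re ⟪x, y⟫ := by
  rw [sw_inner_ofReal_smul_left, sw_re_smul]

lemma sw_re_inner_smul_right (r : ℝ) (x y : H) :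
    re ⟪x, ((r : ℝ) : ℂ) • y⟫ = r * re ⟪x, y⟫ := by
  rw [inner_smul_right, sw_re_smul]

set_option maxHeartbeats 4000000 in
/-- The key inequality towards concavity of the Cauchy dual. -/
lemma sw_key (T A Ainv : H →L[ℂ] H)
    (hshim : ∀ ζ κ : H, ‖T ζ + κ‖ ^ 2 ≤ 2 * (‖ζ‖ ^ 2 + ‖T κ‖ ^ 2))
    (hAdef : ∀ v, A v = adjoint T (T v))
    (hAAinv : ∀ v, A (Ainv v) = v) (hAinvA : ∀ v, Ainv (A v) = v)
    {ε : ℝ} (hε : 0 < ε) (hε2 : ε ≤ 1 / 2) (f : H) :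
    re ⟪Ainv (T f), T f⟫ ≤ 2 * re ⟪A f, f⟫ - ‖A f‖ ^ 2 + 8 * ε * ‖f‖ ^ 2 := by
  have hβ : (0:ℝ) < 1 - ε := by linarith
  have hAfa : ∀ x y : H, ⟪A x, y⟫ = ⟪T x, T y⟫ := by
    intro x y; rw [hAdef]; exact adjoint_inner_left T y (T x)
  have hAsa : ∀ x y : H, ⟪A x, y⟫ = ⟪x, A y⟫ := by
    intro x y
    rw [hAfa, hAdef y]
    exact (adjoint_inner_right T x (T y)).symm
  have hAform : ∀ v : H, re ⟪A v, v⟫ = ‖T v‖ ^ 2 := by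
    intro v; rw [hAfa]; exact inner_self_eq_norm_sq _
  have hApos : ∀ v : H, 0 ≤ re ⟪A v, v⟫ := by
    intro v; rw [hAform]; positivity
  have hupT : ∀ v : H, ‖T v‖ ^ 2 ≤ 2 * ‖v‖ ^ 2 := by
    intro v; have h := hshim v 0; simp at h; linarith
  have hlowT : ∀ v : H, ‖v‖ ^ 2 ≤ 2 * ‖T v‖ ^ 2 := by
    intro v; have h := hshim 0 v; simp at h; linarith
  have hA2 : ∀ v : H, ‖A v‖ ^ 2 ≤ 2 * re ⟪A v, v⟫ := by
    intro v
    have hcs := sw_cs A hAsa hApos v (A v)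
    have h1 : re ⟪A v, A v⟫ = ‖A v‖ ^ 2 := inner_self_eq_norm_sq _
    have h2 : re ⟪A (A v), A v⟫ = ‖T (A v)‖ ^ 2 := hAform _
    have h3 : ‖T (A v)‖ ^ 2 ≤ 2 * ‖A v‖ ^ 2 := hupT _
    rw [h1, h2] at hcs
    rcases eq_or_lt_of_le (sq_nonneg ‖A v‖) with h0 | h0
    · rw [← h0]; linarith [hApos v]
    · nlinarith [hApos v]
  -- the operator Cε = 2A - (1-ε)
  set Cop : H →L[ℂ] H := ((2:ℝ):ℂ) • A + (((ε - 1 :ℝ)):ℂ) • 1 with hCdef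
  have hCpt : ∀ v, Cop v = ((2:ℝ):ℂ) • A v + (((ε - 1:ℝ)):ℂ) • v := by
    intro v
    rw [hCdef]
    simp [ContinuousLinearMap.add_apply, ContinuousLinearMap.smul_apply]
  have hCsa : ∀ x y : H, ⟪Cop x, y⟫ = ⟪x, Cop y⟫ := by
    intro x y
    rw [hCpt, hCpt, inner_add_left, inner_add_right,
      sw_inner_ofReal_smul_left, inner_smul_right, sw_inner_ofReal_smul_left,
      inner_smul_right, hAsa]
  have hCre : ∀ v : H, re ⟪Cop v, v⟫ = 2 * re ⟪A v, v⟫ + (ε - 1) * ‖v‖ ^ 2 := by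
    intro v
    rw [hCpt, inner_add_left, map_add, sw_re_inner_smul_left, sw_re_inner_smul_left,
      inner_self_eq_norm_sq]
  have hClow : ∀ v : H, ε * ‖v‖ ^ 2 ≤ re ⟪Cop v, v⟫ := by
    intro v
    rw [hCre]
    have h1 := hlowT v
    have h2 := hAform v
    nlinarith [sq_nonneg ‖v‖]
  obtain ⟨Xe, hCX, hXC⟩ := sw_inv Cop hCsa hε hClow
  have hXsa := sw_inv_sa Cop Xe hCsa hCX
  have hCpos : ∀ v : H, 0 ≤ re ⟪Cop v, v⟫ := by
    intro v
    refine le_trans ?_ (hClow v)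
    positivity
  have hXpos := sw_inv_pos Cop Xe hCsa hCX hCpos
  -- Step 1
  have step1 : ∀ ζ : H, re ⟪Xe (T ζ), T ζ⟫ ≤ 2 * ‖ζ‖ ^ 2 - re ⟪A ζ, ζ⟫ := by
    intro ζ
    set κ := Xe (T ζ) with hκ
    have hs := hshim ζ κ
    rw [norm_add_sq (𝕜 := ℂ)] at hs
    have hTκ : ‖T κ‖ ^ 2 = re ⟪A κ, κ⟫ := (hAform κ).symm
    have hq : re ⟪T ζ, κ⟫ = re ⟪Xe (T ζ), T ζ⟫ := by
      rw [hκ]; exact sw_resymm _ _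
    have hCκre : re ⟪Cop κ, κ⟫ = re ⟪Xe (T ζ), T ζ⟫ := by
      rw [hκ, hCX]
      exact sw_resymm _ _
    have hCre2 := hCre κ
    have hκpos : (0:ℝ) ≤ ‖κ‖ ^ 2 := sq_nonneg _
    have hAζ := hAform ζ
    nlinarith [mul_nonneg hε.le hκpos]
  -- the operator Z = (1-ε) Xε + 1
  set Zop : H →L[ℂ] H := (((1 - ε :ℝ)):ℂ) • Xe + 1 with hZdef
  have hZpt : ∀ v, Zop v = (((1 - ε:ℝ)):ℂ) • Xe v + v := by
    intro v
    rw [hZdef]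
    simp [ContinuousLinearMap.add_apply, ContinuousLinearMap.smul_apply]
  have hZsa : ∀ x y : H, ⟪Zop x, y⟫ = ⟪x, Zop y⟫ := by
    intro x y
    rw [hZpt, hZpt, inner_add_left, inner_add_right,
      sw_inner_ofReal_smul_left, inner_smul_right, hXsa]
  have hZre : ∀ v : H, re ⟪Zop v, v⟫ = (1 - ε) * re ⟪Xe v, v⟫ + ‖v‖ ^ 2 := by
    intro v
    rw [hZpt, inner_add_left, map_add, sw_re_inner_smul_left, inner_self_eq_norm_sq]
  have hZpos : ∀ v : H, 0 ≤ re ⟪Zop v, v⟫ := by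
    intro v
    rw [hZre]
    have := hXpos v
    nlinarith [sq_nonneg ‖v‖]
  have hZlow1 : ∀ v : H, ‖v‖ ^ 2 ≤ re ⟪Zop v, v⟫ := by
    intro v
    rw [hZre]
    have := hXpos v
    nlinarith
  -- Y = T* Z T
  set Yop : H →L[ℂ] H := adjoint T ∘L (Zop ∘L T) with hYdef
  have hYpt : ∀ v, Yop v = adjoint T (Zop (T v)) := fun v => rfl
  have hYfa : ∀ x y : H, ⟪Yop x, y⟫ = ⟪Zop (T x), T y⟫ := by
    intro x y
    rw [hYpt]
    exact adjoint_inner_left T y (Zop (T x))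
  have hYsa : ∀ x y : H, ⟪Yop x, y⟫ = ⟪x, Yop y⟫ := by
    intro x y
    rw [hYfa, hZsa, hYpt]
    exact (adjoint_inner_right T x (Zop (T y))).symm
  have hYlow : ∀ v : H, (1/2 : ℝ) * ‖v‖ ^ 2 ≤ re ⟪Yop v, v⟫ := by
    intro v
    have h1 : re ⟪Yop v, v⟫ = re ⟪Zop (T v), T v⟫ := by rw [hYfa]
    have h2 := hZlow1 (T v)
    have h3 := hlowT v
    linarith
  obtain ⟨Yinv, hYY, hYYi⟩ := sw_inv Yop hYsa (by norm_num : (0:ℝ) < 1/2) hYlow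
  have hYpos : ∀ v : H, 0 ≤ re ⟪Yop v, v⟫ := by
    intro v
    refine le_trans ?_ (hYlow v)
    positivity
  have hYinv_sa := sw_inv_sa Yop Yinv hYsa hYY
  have hYinv_pos := sw_inv_pos Yop Yinv hYsa hYY hYpos
  -- D = 2(1-ε) + εA
  set Dop : H →L[ℂ] H := (((2 * (1 - ε) :ℝ)):ℂ) • 1 + ((ε:ℝ):ℂ) • A with hDdef
  have hDpt : ∀ v, Dop v = (((2 * (1 - ε):ℝ)):ℂ) • v + ((ε:ℝ):ℂ) • A v := by
    intro v
    rw [hDdef]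
    simp [ContinuousLinearMap.add_apply, ContinuousLinearMap.smul_apply]
  have hDsa : ∀ x y : H, ⟪Dop x, y⟫ = ⟪x, Dop y⟫ := by
    intro x y
    rw [hDpt, hDpt, inner_add_left, inner_add_right,
      sw_inner_ofReal_smul_left, inner_smul_right, sw_inner_ofReal_smul_left,
      inner_smul_right, hAsa]
  have hDre : ∀ v : H, re ⟪Dop v, v⟫ = 2 * (1 - ε) * ‖v‖ ^ 2 + ε * re ⟪A v, v⟫ := by
    intro v
    rw [hDpt, inner_add_left, map_add, sw_re_inner_smul_left, sw_re_inner_smul_left,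
      inner_self_eq_norm_sq]
  have hDlow : ∀ v : H, (1/2 : ℝ) * ‖v‖ ^ 2 ≤ re ⟪Dop v, v⟫ := by
    intro v
    rw [hDre]
    have := hApos v
    nlinarith [sq_nonneg ‖v‖]
  obtain ⟨Dinv, hDD, hDDi⟩ := sw_inv Dop hDsa (by norm_num : (0:ℝ) < 1/2) hDlow
  have hDinv_sa := sw_inv_sa Dop Dinv hDsa hDD
  -- Y ≤ D as forms
  have hYleD : ∀ v : H, re ⟪Yop v, v⟫ ≤ re ⟪Dop v, v⟫ := by
    intro v
    have h1 : re ⟪Yop v, v⟫ = re ⟪Zop (T v), T v⟫ := by rw [hYfa]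
    rw [h1, hZre, hDre]
    have h2 := step1 v
    have h3 := hAform v
    have h4 := mul_le_mul_of_nonneg_left h2 hβ.le
    linarith
  -- Zi, a pointwise inverse for Z
  set Zi : H →L[ℂ] H := (((1/2 : ℝ)):ℂ) • (Cop ∘L Ainv) with hZidef
  have hZipt : ∀ v, Zi v = (((1/2:ℝ)):ℂ) • Cop (Ainv v) := by
    intro v
    rw [hZidef]
    simp [ContinuousLinearMap.smul_apply]
  have hXA : ∀ h : H, ((2:ℝ):ℂ) • Xe (A h) = h + (((1 - ε:ℝ)):ℂ) • Xe h := by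
    intro h
    have h1 : Cop h + (((1 - ε:ℝ)):ℂ) • h = ((2:ℝ):ℂ) • A h := by
      rw [hCpt]
      have hc : (((ε - 1:ℝ)):ℂ) = -(((1 - ε:ℝ)):ℂ) := by push_cast; ring
      rw [hc, neg_smul]
      abel
    calc ((2:ℝ):ℂ) • Xe (A h) = Xe (((2:ℝ):ℂ) • A h) := (map_smul Xe _ _).symm
      _ = Xe (Cop h + (((1 - ε:ℝ)):ℂ) • h) := by rw [h1]
      _ = h + (((1 - ε:ℝ)):ℂ) • Xe h := by rw [map_add, map_smul, hXC]
  have hZeq : ∀ h : H, Zop h = ((2:ℝ):ℂ) • Xe (A h) := by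
    intro h
    rw [hXA, hZpt]
    abel
  have hACop : ∀ v, A (Cop v) = Cop (A v) := by
    intro v
    rw [hCpt, hCpt, map_add, map_smul, map_smul]
  have hZZi : ∀ h : H, Zop (Zi h) = h := by
    intro h
    rw [hZeq, hZipt, map_smul, map_smul, hACop, hAAinv, hXC, smul_smul]
    norm_num
  -- positivity of the Zi-form
  have hZipos : ∀ v : H, 0 ≤ re ⟪Zi v, v⟫ := by
    intro v
    have h1 : ⟪Zi v, v⟫ = ⟪Zop (Zi v), Zi v⟫ := by
      nth_rewrite 2 [← hZZi v]
      exact (hZsa _ _).symm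
    rw [h1]
    exact hZpos _
  -- Cauchy-Schwarz step: ⟨Yinv A f, A f⟩ ≤ ⟨Zi T f, T f⟩
  have h2 : re ⟪Yinv (A f), A f⟫ ≤ re ⟪Zi (T f), T f⟫ := by
    set g := Yinv (A f) with hg
    have ha_pos : 0 ≤ re ⟪Yinv (A f), A f⟫ := hYinv_pos _
    have hcs := sw_cs Zop hZsa hZpos (T g) (Zi (T f))
    have e1 : re ⟪Zop (T g), Zi (T f)⟫ = re ⟪Yinv (A f), A f⟫ := by
      rw [hZsa, hZZi]
      have : ⟪T g, T f⟫ = ⟪g, A f⟫ := by rw [← hAfa, hAsa]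
      rw [this, hg]
    have e2 : re ⟪Zop (T g), T g⟫ = re ⟪Yinv (A f), A f⟫ := by
      have : ⟪Zop (T g), T g⟫ = ⟪Yop g, g⟫ := (hYfa g g).symm
      rw [this, hg, hYY]
      exact sw_resymm _ _
    have e3 : re ⟪Zop (Zi (T f)), Zi (T f)⟫ = re ⟪Zi (T f), T f⟫ := by
      rw [hZsa, hZZi]
    rw [e1, e2, e3] at hcs
    rcases eq_or_lt_of_le ha_pos with h0 | h0
    · rw [← h0]; exact hZipos _
    · nlinarith
  -- antitone step: ⟨Dinv A f, A f⟩ ≤ ⟨Yinv A f, A f⟩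
  have h3 : re ⟪Dinv (A f), A f⟫ ≤ re ⟪Yinv (A f), A f⟫ := by
    have hb := sw_inv_bound Yop Yinv hYsa hYpos hYY (A f) (Dinv (A f))
    have h1 : re ⟪Yop (Dinv (A f)), Dinv (A f)⟫ ≤ re ⟪Dop (Dinv (A f)), Dinv (A f)⟫ :=
      hYleD _
    rw [hDD] at h1
    have h4 : re ⟪A f, Dinv (A f)⟫ = re ⟪Dinv (A f), A f⟫ := sw_resymm _ _
    linarith
  -- the formula for the Ainv form in terms of Zi
  have h4 : re ⟪Ainv (T f), T f⟫
      = (2 / (1 - ε)) * (re ⟪A f, f⟫ - re ⟪Zi (T f), T f⟫) := by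
    have hZiv : ∀ v : H, re ⟪Zi v, v⟫ = ‖v‖ ^ 2 - ((1 - ε)/2) * re ⟪Ainv v, v⟫ := by
      intro v
      rw [hZipt, sw_re_inner_smul_left, hCpt, hAAinv, inner_add_left, map_add,
        sw_re_inner_smul_left, sw_re_inner_smul_left, inner_self_eq_norm_sq]
      ring
    rw [hZiv (T f), hAform f]
    field_simp
    ring
  -- combine so far
  have h5 : re ⟪Ainv (T f), T f⟫
      ≤ (2 / (1 - ε)) * (re ⟪A f, f⟫ - re ⟪Dinv (A f), A f⟫) := by
    rw [h4]
    have hchain : re ⟪Dinv (A f), A f⟫ ≤ re ⟪Zi (T f), T f⟫ := le_trans h3 h2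
    have hpos : (0:ℝ) < 2 / (1 - ε) := by positivity
    nlinarith
  -- now the scalar estimate
  set gf : H := ((2:ℝ):ℂ) • f - A f with hgfdef
  set s : H := Dinv gf with hsdef
  have hDs : Dop s = gf := hDD gf
  have hAfv : A f = ((2:ℝ):ℂ) • f - gf := by rw [hgfdef]; abel
  -- f - Dinv (A f) = (1-ε) • s
  have hDf : f = ((ε:ℝ):ℂ) • Dinv (A f) + (((2 * (1 - ε):ℝ)):ℂ) • Dinv f := by
    calc f = Dinv (Dop f) := (hDDi f).symm
      _ = Dinv ((((2 * (1 - ε):ℝ)):ℂ) • f + ((ε:ℝ):ℂ) • A f) := by rw [hDpt]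
      _ = (((2 * (1 - ε):ℝ)):ℂ) • Dinv f + ((ε:ℝ):ℂ) • Dinv (A f) := by
          rw [map_add, map_smul, map_smul]
      _ = ((ε:ℝ):ℂ) • Dinv (A f) + (((2 * (1 - ε):ℝ)):ℂ) • Dinv f := by abel
  have hs1 : s = ((2:ℝ):ℂ) • Dinv f - Dinv (A f) := by
    rw [hsdef, hgfdef, map_sub, map_smul]
  have hfr : f - Dinv (A f) = (((1 - ε:ℝ)):ℂ) • s := by
    nth_rewrite 1 [hDf]
    rw [hs1]
    push_cast
    module
  -- θ identity
  have hθ : re ⟪A f, f⟫ - re ⟪Dinv (A f), A f⟫ = (1 - ε) * re ⟪A f, s⟫ := by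
    have h1 : re ⟪Dinv (A f), A f⟫ = re ⟪A f, Dinv (A f)⟫ := sw_resymm _ _
    have h2 : re ⟪A f, f⟫ - re ⟪A f, Dinv (A f)⟫ = re ⟪A f, f - Dinv (A f)⟫ := by
      rw [inner_sub_right, map_sub]
    rw [h1, h2, hfr, sw_re_inner_smul_right]
  -- expansions
  have hgfAf : re ⟪A f, gf⟫ = 2 * re ⟪A f, f⟫ - ‖A f‖ ^ 2 := by
    rw [hgfdef, inner_sub_right, map_sub, sw_re_inner_smul_right, inner_self_eq_norm_sq]
  have hsAs : re ⟪s, A s⟫ = re ⟪A s, s⟫ := by rw [← hAsa]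
  have hDopAs : re ⟪Dop s, A s⟫ = 2 * (1 - ε) * re ⟪A s, s⟫ + ε * ‖A s‖ ^ 2 := by
    rw [hDpt, inner_add_left, map_add, sw_re_inner_smul_left, sw_re_inner_smul_left,
      inner_self_eq_norm_sq, hsAs]
  have hDops : re ⟪Dop s, s⟫ = re ⟪gf, s⟫ := by rw [hDs]
  have hDops' : re ⟪Dop s, s⟫ = 2 * (1 - ε) * ‖s‖ ^ 2 + ε * re ⟪A s, s⟫ := hDre s
  have hAfgf_exp : re ⟪A f, gf⟫ = 2 * (1 - ε) * re ⟪A f, s⟫ + ε * re ⟪A f, A s⟫ := by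
    rw [← hDs, hDpt, inner_add_right, map_add, sw_re_inner_smul_right,
      sw_re_inner_smul_right]
  -- P1 and its value
  have hfX : re ⟪f, ((2:ℝ):ℂ) • s - A s⟫ = re ⟪gf, s⟫ := by
    rw [inner_sub_right, map_sub, sw_re_inner_smul_right]
    have e1 : re ⟪f, A s⟫ = re ⟪A f, s⟫ := by rw [← hAsa]
    rw [e1, hgfdef, inner_sub_left, map_sub, sw_re_inner_smul_left]
  have hP1 : re ⟪A f, ((2:ℝ):ℂ) • s - A s⟫
      = 2 * (1 - ε) * re ⟪A s, s⟫ + ε * ‖A s‖ ^ 2 := by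
    have e0 : re ⟪A f, ((2:ℝ):ℂ) • s - A s⟫
        = 2 * re ⟪f, ((2:ℝ):ℂ) • s - A s⟫ - re ⟪gf, ((2:ℝ):ℂ) • s - A s⟫ := by
      rw [hAfv, inner_sub_left, map_sub, sw_re_inner_smul_left]
    have e1 : re ⟪gf, ((2:ℝ):ℂ) • s - A s⟫ = 2 * re ⟪gf, s⟫ - re ⟪Dop s, A s⟫ := by
      rw [← hDs, inner_sub_right, map_sub, sw_re_inner_smul_right, hDops]
    rw [e0, e1, hfX, hDopAs]
    ring
  have hP1exp : re ⟪A f, ((2:ℝ):ℂ) • s - A s⟫ = 2 * re ⟪A f, s⟫ - re ⟪A f, A s⟫ := by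
    rw [inner_sub_right, map_sub, sw_re_inner_smul_right]
  -- bounds
  have hnAs2 : ‖A s‖ ^ 2 ≤ 2 * re ⟪A s, s⟫ := hA2 s
  have hras_pos : 0 ≤ re ⟪A s, s⟫ := hApos s
  have hw2eq : re ⟪gf, s⟫ = 2 * (1 - ε) * ‖s‖ ^ 2 + ε * re ⟪A s, s⟫ :=
    hDops.symm.trans hDops'
  have hras_w2 : re ⟪A s, s⟫ ≤ re ⟪gf, s⟫ := by
    have h1 : re ⟪A s, s⟫ ≤ 2 * ‖s‖ ^ 2 := by
      rw [hAform]
      exact hupT s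
    rw [hw2eq]
    nlinarith
  have hw2pos : 0 ≤ re ⟪gf, s⟫ := by
    rw [hw2eq]
    nlinarith [sq_nonneg ‖s‖]
  have hgfnorm : ‖gf‖ ^ 2 ≤ 4 * ‖f‖ ^ 2 := by
    rw [hgfdef, norm_sub_sq (𝕜 := ℂ)]
    have e1 : ‖((2:ℝ):ℂ) • f‖ = 2 * ‖f‖ := by
      rw [norm_smul]
      simp
    have e2 : re ⟪((2:ℝ):ℂ) • f, A f⟫ = 2 * re ⟪A f, f⟫ := by
      rw [sw_re_inner_smul_left, sw_resymm]
    rw [e1, e2]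
    have h1 := hA2 f
    have h2 := hApos f
    nlinarith [sq_nonneg ‖f‖]
  have hns_w2 : ‖s‖ ^ 2 ≤ re ⟪gf, s⟫ := by
    rw [hw2eq]
    nlinarith [sq_nonneg ‖s‖]
  have hw2_4nf : re ⟪gf, s⟫ ≤ 4 * ‖f‖ ^ 2 := by
    have h1 : re ⟪gf, s⟫ ≤ ‖gf‖ * ‖s‖ := by
      calc re ⟪gf, s⟫ ≤ ‖⟪gf, s⟫‖ := re_le_norm _
        _ ≤ ‖gf‖ * ‖s‖ := norm_inner_le_norm _ _
    have h2 : re ⟪gf, s⟫ ^ 2 ≤ ‖gf‖ ^ 2 * ‖s‖ ^ 2 := by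
      rw [← mul_pow]
      exact pow_le_pow_left₀ hw2pos h1 2
    have h3 : re ⟪gf, s⟫ ^ 2 ≤ 4 * ‖f‖ ^ 2 * re ⟪gf, s⟫ := by
      nlinarith [sq_nonneg ‖s‖, sq_nonneg ‖f‖, sq_nonneg ‖gf‖]
    nlinarith [sq_nonneg ‖f‖]
  -- final assembly
  have arith : ∀ R N W F : ℝ, 0 ≤ ε → ε ≤ 1/2 → N ≤ 2*R → R ≤ W → W ≤ 4*F → 0 ≤ R →
      2*(1-ε)*R + ε*N ≤ 8*F := by
    intro R N W F h1 h2 h3 h4 h5 h6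
    nlinarith [mul_nonneg h1 (by linarith : (0:ℝ) ≤ 2*R - N)]
  have hP1bound : re ⟪A f, ((2:ℝ):ℂ) • s - A s⟫ ≤ 8 * ‖f‖ ^ 2 := by
    rw [hP1]
    exact arith _ _ _ _ hε.le hε2 hnAs2 hras_w2 hw2_4nf hras_pos
  have hfinal : 2 * re ⟪A f, s⟫ ≤ 2 * re ⟪A f, f⟫ - ‖A f‖ ^ 2 + 8 * ε * ‖f‖ ^ 2 := by
    have hlin : 2 * re ⟪A f, s⟫
        = (2 * (1 - ε) * re ⟪A f, s⟫ + ε * re ⟪A f, A s⟫)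
          + ε * (2 * re ⟪A f, s⟫ - re ⟪A f, A s⟫) := by ring
    rw [hlin, ← hAfgf_exp, hgfAf, ← hP1exp]
    have := mul_le_mul_of_nonneg_left hP1bound hε.le
    linarith
  have h6 : (2 / (1 - ε)) * (re ⟪A f, f⟫ - re ⟪Dinv (A f), A f⟫) = 2 * re ⟪A f, s⟫ := by
    rw [hθ]
    field_simp
  linarith [h5, h6.symm.le]

/-- concavity of the Cauchy dual -/
lemma sw_concave (T A Ainv : H →L[ℂ] H)
    (hshim : ∀ ζ κ : H, ‖T ζ + κ‖ ^ 2 ≤ 2 * (‖ζ‖ ^ 2 + ‖T κ‖ ^ 2))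
    (hAdef : ∀ v, A v = adjoint T (T v))
    (hAAinv : ∀ v, A (Ainv v) = v) (hAinvA : ∀ v, Ainv (A v) = v) :
    ∀ h : H, ‖T (Ainv (T (Ainv h)))‖ ^ 2 + ‖h‖ ^ 2 ≤ 2 * ‖T (Ainv h)‖ ^ 2 := by
  have hAfa : ∀ x y : H, ⟪A x, y⟫ = ⟪T x, T y⟫ := by
    intro x y; rw [hAdef]; exact adjoint_inner_left T y (T x)
  have hAform : ∀ v : H, re ⟪A v, v⟫ = ‖T v‖ ^ 2 := by
    intro v; rw [hAfa]; exact inner_self_eq_norm_sq _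
  have hW : ∀ f : H, re ⟪Ainv (T f), T f⟫ ≤ 2 * re ⟪A f, f⟫ - ‖A f‖ ^ 2 := by
    intro f
    apply le_of_forall_pos_le_add
    intro δ hδ
    have hd : (0:ℝ) < ‖f‖ ^ 2 + 1 := by positivity
    set ε := min (1/2 : ℝ) (δ / (8 * (‖f‖ ^ 2 + 1))) with hεdef
    have hε0 : 0 < ε := lt_min (by norm_num) (by positivity)
    have hεh : ε ≤ 1/2 := min_le_left _ _
    have h := sw_key T A Ainv hshim hAdef hAAinv hAinvA hε0 hεh f
    have h8 : 8 * ε * ‖f‖ ^ 2 ≤ δ := by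
      have h1 : ε ≤ δ / (8 * (‖f‖ ^ 2 + 1)) := min_le_right _ _
      have h2 : 8 * ε * ‖f‖ ^ 2 ≤ 8 * (δ / (8 * (‖f‖ ^ 2 + 1))) * ‖f‖ ^ 2 := by
        have h0 : (0:ℝ) ≤ ‖f‖ ^ 2 := sq_nonneg _
        nlinarith
      have h3 : 8 * (δ / (8 * (‖f‖ ^ 2 + 1))) * ‖f‖ ^ 2 = δ * ‖f‖ ^ 2 / (‖f‖ ^ 2 + 1) := by
        field_simp
      have h4 : δ * ‖f‖ ^ 2 / (‖f‖ ^ 2 + 1) ≤ δ := by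
        rw [div_le_iff₀ hd]
        nlinarith [sq_nonneg ‖f‖]
      linarith
    linarith
  intro h
  have hf := hW (Ainv h)
  rw [hAAinv] at hf
  have e1 : re ⟪A (Ainv h), Ainv h⟫ = ‖T (Ainv h)‖ ^ 2 := hAform _
  rw [hAAinv] at e1
  have e3 : re ⟪Ainv (T (Ainv h)), T (Ainv h)⟫ = ‖T (Ainv (T (Ainv h)))‖ ^ 2 := by
    have h2 := hAform (Ainv (T (Ainv h)))
    rw [hAAinv] at h2
    rw [← h2, sw_resymm]
  rw [e3, e1] at hf
  linarith

set_option maxHeartbeats 1000000 in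
theorem shimorin_wandering_subspace' (T : H →L[ℂ] H)
    (hana : (⋂ n : ℕ, Set.range ⇑(T ^ (n + 1))) = {0})
    (hshim : ∀ ζ κ : H, ‖T ζ + κ‖ ^ 2 ≤ 2 * (‖ζ‖ ^ 2 + ‖T κ‖ ^ 2)) :
    (⨆ n : ℕ, Submodule.map ((T ^ n : H →L[ℂ] H) : H →ₗ[ℂ] H)
      (LinearMap.ker ((adjoint T : H →L[ℂ] H) : H →ₗ[ℂ] H))).topologicalClosure = ⊤ := by
  classical
  have hupT : ∀ v : H, ‖T v‖ ^ 2 ≤ 2 * ‖v‖ ^ 2 := by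
    intro v; have h := hshim v 0; simp at h; linarith
  have hlowT : ∀ v : H, ‖v‖ ^ 2 ≤ 2 * ‖T v‖ ^ 2 := by
    intro v; have h := hshim 0 v; simp at h; linarith
  set A : H →L[ℂ] H := (adjoint T).comp T with hA
  have hAdef : ∀ v, A v = adjoint T (T v) := fun v => rfl
  have hAfa : ∀ x y : H, ⟪A x, y⟫ = ⟪T x, T y⟫ := by
    intro x y; rw [hAdef]; exact adjoint_inner_left T y (T x)
  have hAsa : ∀ x y : H, ⟪A x, y⟫ = ⟪x, A y⟫ := by
    intro x y
    rw [hAfa, hAdef y]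
    exact (adjoint_inner_right T x (T y)).symm
  have hAform : ∀ v : H, re ⟪A v, v⟫ = ‖T v‖ ^ 2 := by
    intro v; rw [hAfa]; exact inner_self_eq_norm_sq _
  have hAlow : ∀ f : H, (1/2 : ℝ) * ‖f‖ ^ 2 ≤ re ⟪A f, f⟫ := by
    intro f; rw [hAform]; linarith [hlowT f]
  obtain ⟨Ainv, hAAinv, hAinvA⟩ := sw_inv A hAsa (by norm_num : (0:ℝ) < 1/2) hAlow
  set S : H →L[ℂ] H := T.comp Ainv with hS
  have hSpt : ∀ v, S v = T (Ainv v) := fun v => rfl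
  have hconcS : ∀ h : H, ‖S (S h)‖ ^ 2 + ‖h‖ ^ 2 ≤ 2 * ‖S h‖ ^ 2 := fun h =>
    sw_concave T A Ainv hshim hAdef hAAinv hAinvA h
  have hTadjS : ∀ v, adjoint T (S v) = v := by
    intro v
    have h1 : adjoint T (S v) = A (Ainv v) := rfl
    rw [h1, hAAinv]
  have hSadjT : ∀ v, adjoint S (T v) = v := by
    intro v
    apply ext_inner_right ℂ
    intro w
    rw [adjoint_inner_left]
    have h1 : (⟪T v, S w⟫ : ℂ) = ⟪T v, T (Ainv w)⟫ := rfl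
    rw [h1, ← hAfa, hAsa, hAAinv]
  have hTE : ∀ e ∈ LinearMap.ker ((adjoint T : H →L[ℂ] H) : H →ₗ[ℂ] H), adjoint T e = 0 :=
    fun e he => LinearMap.mem_ker.mp he
  have hSE : ∀ e ∈ LinearMap.ker ((adjoint T : H →L[ℂ] H) : H →ₗ[ℂ] H), adjoint S e = 0 := by
    intro e he
    apply ext_inner_right ℂ
    intro v
    rw [adjoint_inner_left, inner_zero_left]
    have h1 : (⟪e, S v⟫ : ℂ) = ⟪adjoint T e, Ainv v⟫ :=
      (adjoint_inner_left T (Ainv v) e).symm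
    rw [h1, hTE e he, inner_zero_left]
  -- closed range of T
  have hsqrt2 : (0:ℝ) < (Real.sqrt 2)⁻¹ := by positivity
  have hnormT : ∀ f : H, (Real.sqrt 2)⁻¹ * ‖f‖ ≤ ‖T f‖ := by
    intro f
    have hsq : ((Real.sqrt 2)⁻¹) ^ 2 = 1/2 := by
      rw [inv_pow, Real.sq_sqrt (by norm_num : (0:ℝ) ≤ 2)]
      norm_num
    have h1 : ((Real.sqrt 2)⁻¹ * ‖f‖) ^ 2 ≤ ‖T f‖ ^ 2 := by
      rw [mul_pow, hsq]
      linarith [hlowT f]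
    have h2 := Real.sqrt_le_sqrt h1
    rwa [Real.sqrt_sq (by positivity), Real.sqrt_sq (norm_nonneg _)] at h2
  have hclosedT : IsClosed (Set.range ⇑T) := sw_closed_range T hsqrt2 hnormT
  -- range characterization
  have hrangeT : ∀ x : H, (∀ e ∈ LinearMap.ker ((adjoint T : H →L[ℂ] H) : H →ₗ[ℂ] H), ⟪e, x⟫ = 0)
      ↔ x ∈ LinearMap.range (T : H →ₗ[ℂ] H) := by
    intro x
    constructor
    · intro hx
      have hKclosed : IsClosed ((LinearMap.range (T : H →ₗ[ℂ] H) : Submodule ℂ H) : Set H) :=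
        (LinearMap.coe_range (T : H →ₗ[ℂ] H) (M₂ := H)) ▸ hclosedT
      haveI : CompleteSpace (LinearMap.range (T : H →ₗ[ℂ] H) : Submodule ℂ H) :=
        hKclosed.completeSpace_coe
      obtain ⟨a, ha, b, hb, hdecomp⟩ :=
        (LinearMap.range (T : H →ₗ[ℂ] H) : Submodule ℂ H).exists_add_mem_mem_orthogonal x
      have hbE : b ∈ LinearMap.ker ((adjoint T : H →L[ℂ] H) : H →ₗ[ℂ] H) := by
        rw [LinearMap.mem_ker, ContinuousLinearMap.coe_coe]
        apply ext_inner_right ℂ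
        intro z
        rw [adjoint_inner_left, inner_zero_left]
        have h1 := (Submodule.mem_orthogonal _ b).mp hb (T z) (LinearMap.mem_range_self _ z)
        rw [← inner_conj_symm, h1, map_zero]
      have h0 := hx b hbE
      rw [hdecomp, inner_add_right] at h0
      have hba : (⟪b, a⟫ : ℂ) = 0 := by
        have h1 := (Submodule.mem_orthogonal _ b).mp hb a ha
        rw [← inner_conj_symm, h1, map_zero]
      rw [hba, zero_add] at h0
      have hb0 : b = 0 := inner_self_eq_zero.mp h0
      rw [hdecomp, hb0, add_zero]
      exact ha
    · rintro ⟨y, rfl⟩ e he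
      have h1 : (⟪e, T y⟫ : ℂ) = ⟪adjoint T e, y⟫ := (adjoint_inner_left T y e).symm
      rw [ContinuousLinearMap.coe_coe, h1, hTE e he, inner_zero_left]
  have hrangeS : ∀ x : H, (∀ e ∈ LinearMap.ker ((adjoint T : H →L[ℂ] H) : H →ₗ[ℂ] H), ⟪e, x⟫ = 0)
      ↔ x ∈ LinearMap.range (S : H →ₗ[ℂ] H) := by
    intro x
    rw [hrangeT x]
    constructor
    · rintro ⟨y, rfl⟩
      exact ⟨A y, by rw [ContinuousLinearMap.coe_coe, ContinuousLinearMap.coe_coe, hSpt, hAinvA]⟩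
    · rintro ⟨y, rfl⟩
      exact ⟨Ainv y, rfl⟩
  have dual1 := sw_dual T S (LinearMap.ker ((adjoint T : H →L[ℂ] H) : H →ₗ[ℂ] H)) hSadjT hSE hrangeS
  have dual2 := sw_dual S T (LinearMap.ker ((adjoint T : H →L[ℂ] H) : H →ₗ[ℂ] H)) hTadjS hTE hrangeT
  have hSinj : Function.Injective ⇑S := by
    intro a b hab
    rw [← hTadjS a, ← hTadjS b, hab]
  -- final assembly
  rw [Submodule.topologicalClosure_eq_top_iff, Submodule.eq_bot_iff]
  intro x hx
  have hxo : ∀ n : ℕ, ∀ e ∈ LinearMap.ker ((adjoint T : H →L[ℂ] H) : H →ₗ[ℂ] H), ⟪(T ^ n) e, x⟫ = 0 := by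
    intro n e he
    apply (Submodule.mem_orthogonal _ x).mp hx
    exact Submodule.mem_iSup_of_mem n (Submodule.mem_map_of_mem he)
  have hxR : ∀ n : ℕ, ∃ y, (S ^ n) y = x := by
    intro n
    cases n with
    | zero => exact ⟨x, by simp⟩
    | succ m =>
        obtain ⟨y, hy⟩ := (dual1 m x).mp (fun k _ e he => hxo k e he)
        exact ⟨y, hy⟩
  have hSxo : ∀ e ∈ LinearMap.ker ((adjoint T : H →L[ℂ] H) : H →ₗ[ℂ] H), ∀ k : ℕ, ⟪(S ^ k) e, x⟫ = 0 :=
    fun e he => sw_orth S hconcS hSinj x hxR e (hSE e he)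
  have hxT : ∀ n : ℕ, x ∈ LinearMap.range ((T ^ (n + 1) : H →L[ℂ] H) : H →ₗ[ℂ] H) :=
    fun n => (dual2 n x).mp (fun k _ e he => hSxo e he k)
  have hmem : x ∈ ⋂ n : ℕ, Set.range ⇑(T ^ (n + 1)) := by
    refine Set.mem_iInter.mpr fun n => ?_
    obtain ⟨y, hy⟩ := hxT n
    exact ⟨y, hy⟩
  rw [hana] at hmem
  exact hmem

end ShimorinDevelopment

/-- Corollary 3.10 of the paper, scalar case: an analytic operator satisfying the
Shimorin inequality has the generating wandering subspace property. -/
theorem shimorin_wandering_subspace {H : Type*} [NormedAddCommGroup H]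
    [InnerProductSpace ℂ H] [CompleteSpace H] (T : H →L[ℂ] H)
    (hana : (⋂ n : ℕ, Set.range ⇑(T ^ (n + 1))) = {0})
    (hshim : ∀ ζ κ : H, ‖T ζ + κ‖ ^ 2 ≤ 2 * (‖ζ‖ ^ 2 + ‖T κ‖ ^ 2)) :
    (⨆ n : ℕ, Submodule.map ((T ^ n : H →L[ℂ] H) : H →ₗ[ℂ] H)
      (LinearMap.ker ((adjoint T : H →L[ℂ] H) : H →ₗ[ℂ] H))).topologicalClosure = ⊤ := by
  exact shimorin_wandering_subspace' T hana hshim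
end

section
/- (Doubly commuting wandering subspace theorem, scalar bivariate case) Let T₁, T₂ ∈ B(H) be doubly commuting operators such that for every i ∈ {1,2} and every closed subspace K ⊆ H reducing Tᵢ, the space K ⊖ TᵢK is a generating wandering subspace for Tᵢ|_K (i.e., K = ⋁_{n≥0} Tᵢⁿ(K ∩ ker Tᵢ*)). Then W := ker T₁* ∩ ker T₂* is a generating wandering subspace for the pair: H = ⋁_{(m,n) ∈ ℕ₀²} T₁ᵐT₂ⁿ W, and W ⟂ T₁ᵐT₂ⁿW for all (m,n) ≠ (0,0). -/
open ContinuousLinearMap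

/-- Theorem 4.8 of the paper in the scalar case `k = 2`: if `T₁, T₂` are doubly
commuting and each `Tᵢ` has the generating wandering subspace property on every
closed reducing subspace, then `W = ker T₁* ∩ ker T₂*` is a generating wandering
subspace for the pair `(T₁, T₂)`. -/
theorem doubly_commuting_wandering_subspace {H : Type*} [NormedAddCommGroup H]
    [InnerProductSpace ℂ H] [CompleteSpace H] (T₁ T₂ : H →L[ℂ] H)
    (hcomm : T₁ * T₂ = T₂ * T₁)
    (hdc : adjoint T₂ * T₁ = T₁ * adjoint T₂)
    (hGW : ∀ S : H →L[ℂ] H, S = T₁ ∨ S = T₂ →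
      ∀ K : Submodule ℂ H, IsClosed (K : Set H) →
        (∀ x ∈ K, S x ∈ K) → (∀ x ∈ K, adjoint S x ∈ K) →
        K = (⨆ n : ℕ, Submodule.map ((S ^ n : H →L[ℂ] H) : H →ₗ[ℂ] H)
              (K ⊓ LinearMap.ker ((adjoint S : H →L[ℂ] H) : H →ₗ[ℂ] H))).topologicalClosure) :
    (let W : Submodule ℂ H := LinearMap.ker ((adjoint T₁ : H →L[ℂ] H) : H →ₗ[ℂ] H) ⊓ LinearMap.ker ((adjoint T₂ : H →L[ℂ] H) : H →ₗ[ℂ] H)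
     (⨆ p : ℕ × ℕ, Submodule.map ((T₁ ^ p.1 * T₂ ^ p.2 : H →L[ℂ] H) : H →ₗ[ℂ] H) W).topologicalClosure = ⊤ ∧
     ∀ m n : ℕ, (m, n) ≠ (0, 0) → ∀ w ∈ W, ∀ v ∈ W,
       (inner ℂ w ((T₁ ^ m * T₂ ^ n) v) : ℂ) = 0) := by
  set W : Submodule ℂ H := LinearMap.ker ((adjoint T₁ : H →L[ℂ] H) : H →ₗ[ℂ] H) ⊓ LinearMap.ker ((adjoint T₂ : H →L[ℂ] H) : H →ₗ[ℂ] H) with hW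
  set M := (⨆ p : ℕ × ℕ, Submodule.map ((T₁ ^ p.1 * T₂ ^ p.2 : H →L[ℂ] H) : H →ₗ[ℂ] H) W).topologicalClosure with hM
  constructor
  · -- generating part
    -- adjoint commutation facts
    have hdc' : adjoint T₁ * T₂ = T₂ * adjoint T₁ := by
      have := congrArg star hdc
      simpa only [star_mul, star_eq_adjoint, adjoint_adjoint] using this
    have hacomm : adjoint T₁ * adjoint T₂ = adjoint T₂ * adjoint T₁ := by
      have := congrArg star hcomm
      simpa only [star_mul, star_eq_adjoint] using this.symm
    -- Step A : ker T₁* = closure ⋁ T₂^n W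
    have hKclosed : IsClosed ((LinearMap.ker ((adjoint T₁ : H →L[ℂ] H) : H →ₗ[ℂ] H) : Submodule ℂ H) : Set H) :=
      ContinuousLinearMap.isClosed_ker (adjoint T₁)
    have hA := hGW T₂ (Or.inr rfl) (LinearMap.ker ((adjoint T₁ : H →L[ℂ] H) : H →ₗ[ℂ] H)) hKclosed
      (fun x hx => by
        have : adjoint T₁ (T₂ x) = T₂ (adjoint T₁ x) := by
          have := congrFun (congrArg DFunLike.coe hdc') x
          simpa using this
        simp only [LinearMap.mem_ker, ContinuousLinearMap.coe_coe] at hx ⊢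
        rw [this, hx, map_zero])
      (fun x hx => by
        have : adjoint T₁ (adjoint T₂ x) = adjoint T₂ (adjoint T₁ x) := by
          have := congrFun (congrArg DFunLike.coe hacomm) x
          simpa using this
        simp only [LinearMap.mem_ker, ContinuousLinearMap.coe_coe] at hx ⊢
        rw [this, hx, map_zero])
    -- Step B : ⊤ = closure ⋁ T₁^m (ker T₁*)
    have hB := hGW T₁ (Or.inl rfl) ⊤ isClosed_univ (fun x _ => trivial) (fun x _ => trivial)
    -- key inclusion
    have key : ∀ m : ℕ, Submodule.map ((T₁ ^ m : H →L[ℂ] H) : H →ₗ[ℂ] H)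
        (LinearMap.ker ((adjoint T₁ : H →L[ℂ] H) : H →ₗ[ℂ] H)) ≤ M := by
      intro m
      have h1 : Submodule.map ((T₁ ^ m : H →L[ℂ] H) : H →ₗ[ℂ] H)
          (⨆ n : ℕ, Submodule.map ((T₂ ^ n : H →L[ℂ] H) : H →ₗ[ℂ] H) W) ≤ M := by
        rw [Submodule.map_iSup]
        apply iSup_le; intro n
        rw [← Submodule.map_comp]
        have : (((T₁ ^ m : H →L[ℂ] H) : H →ₗ[ℂ] H).comp ((T₂ ^ n : H →L[ℂ] H) : H →ₗ[ℂ] H))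
            = ((T₁ ^ m * T₂ ^ n : H →L[ℂ] H) : H →ₗ[ℂ] H) := rfl
      -- might need ext
        rw [this]
        exact le_trans (le_iSup (fun p : ℕ × ℕ => Submodule.map ((T₁ ^ p.1 * T₂ ^ p.2 : H →L[ℂ] H) : H →ₗ[ℂ] H) W) (m, n))
          (Submodule.le_topologicalClosure _)
      calc Submodule.map ((T₁ ^ m : H →L[ℂ] H) : H →ₗ[ℂ] H) (LinearMap.ker ((adjoint T₁ : H →L[ℂ] H) : H →ₗ[ℂ] H))
          = Submodule.map ((T₁ ^ m : H →L[ℂ] H) : H →ₗ[ℂ] H)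
            ((⨆ n : ℕ, Submodule.map ((T₂ ^ n : H →L[ℂ] H) : H →ₗ[ℂ] H)
              (LinearMap.ker ((adjoint T₁ : H →L[ℂ] H) : H →ₗ[ℂ] H) ⊓ LinearMap.ker ((adjoint T₂ : H →L[ℂ] H) : H →ₗ[ℂ] H))).topologicalClosure) := by
            rw [← hA]
        _ ≤ (Submodule.map ((T₁ ^ m : H →L[ℂ] H) : H →ₗ[ℂ] H)
            (⨆ n : ℕ, Submodule.map ((T₂ ^ n : H →L[ℂ] H) : H →ₗ[ℂ] H) W)).topologicalClosure :=
            Submodule.topologicalClosure_map (T₁ ^ m) _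
        _ ≤ M := by
            apply Submodule.topologicalClosure_minimal _ _ (Submodule.isClosed_topologicalClosure _)
            exact h1
    have : (⊤ : Submodule ℂ H) ≤ M := by
      rw [hB]
      apply Submodule.topologicalClosure_minimal _ _ (Submodule.isClosed_topologicalClosure _)
      apply iSup_le; intro m
      rw [top_inf_eq]
      exact key m
    exact top_le_iff.mp this
  · intro m n hmn w hw v hv
    have hw1 : adjoint T₁ w = 0 := hw.1
    have hw2 : adjoint T₂ w = 0 := hw.2
    have : (inner ℂ w ((T₁ ^ m * T₂ ^ n) v) : ℂ)
        = inner ℂ (adjoint (T₁ ^ m * T₂ ^ n) w) v := (adjoint_inner_left _ _ _).symm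
    rw [this]
    have hadj : adjoint (T₁ ^ m * T₂ ^ n) = adjoint T₂ ^ n * adjoint T₁ ^ m := by
      rw [← star_eq_adjoint, star_mul, star_pow, star_pow, star_eq_adjoint, star_eq_adjoint]
    rw [hadj]
    rcases Nat.eq_zero_or_pos m with hm | hm
    · subst hm
      have hn : n ≠ 0 := by simpa using hmn
      obtain ⟨k, rfl⟩ := Nat.exists_eq_succ_of_ne_zero hn
      simp [pow_succ, mul_apply, hw2, inner_zero_left]
    · obtain ⟨k, rfl⟩ := Nat.exists_eq_succ_of_ne_zero hm.ne'
      simp [pow_succ, mul_apply, hw1, inner_zero_left]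
end
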